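/- arXiv:1110.1833 — 11 statements merged into one kernel-verified Lean document; each statement's English description precedes it below -/
import Mathlib

section
/- Let λ ≥ 0 and let ζ = (x,y) : I → U be differentiable on an interval I with ζ̇(t) = a(t)Ψ(ζ(t)) + λΥ(t,ζ(t)) for all t ∈ I, where Ψ(p,q) = (f(p,q), −[∂₂g(p,q)]⁻¹∂₁g(p,q)f(p,q)) and Υ(t,p,q) = (h(t,p,q), −[∂₂g(p,q)]⁻¹∂₁g(p,q)h(t,p,q)). If g(ζ(t₀)) = 0 for some t₀ ∈ I, then g(ζ(t)) = 0 for all t ∈ I; hence (x,y) satisfies ẋ(t) = a(t)f(x(t),y(t)) + λh(t,x(t),y(t)) and g(x(t),y(t)) = 0 for all t ∈ I, i.e. it is a solution of the DAE. -/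
/-- Partial differential with respect to the first group of variables. -/
noncomputable def pd1 {k s m : ℕ}
    (g : (Fin k → ℝ) × (Fin s → ℝ) → (Fin m → ℝ))
    (z : (Fin k → ℝ) × (Fin s → ℝ)) :
    (Fin k → ℝ) →L[ℝ] (Fin m → ℝ) :=
  (fderiv ℝ g z).comp (ContinuousLinearMap.inl ℝ (Fin k → ℝ) (Fin s → ℝ))

/-- Partial differential with respect to the second group of variables. -/
noncomputable def pd2 {k s m : ℕ}
    (g : (Fin k → ℝ) × (Fin s → ℝ) → (Fin m → ℝ))
    (z : (Fin k → ℝ) × (Fin s → ℝ)) :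
    (Fin s → ℝ) →L[ℝ] (Fin m → ℝ) :=
  (fderiv ℝ g z).comp (ContinuousLinearMap.inr ℝ (Fin k → ℝ) (Fin s → ℝ))

/-- A solution of the ODE `ζ̇ = a(t)Ψ(ζ) + λΥ(t,ζ)` which touches `M = g⁻¹(0)` at one time
stays on `M`, and hence solves the DAE. -/
theorem stmt2 {k s : ℕ}
    (U : Set ((Fin k → ℝ) × (Fin s → ℝ))) (hUopen : IsOpen U) (hUconn : IsConnected U)
    (g : (Fin k → ℝ) × (Fin s → ℝ) → (Fin s → ℝ)) (hg : ContDiffOn ℝ (⊤ : ℕ∞) g U)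
    (hinv : ∀ z ∈ U, IsUnit (pd2 g z))
    (f : (Fin k → ℝ) × (Fin s → ℝ) → (Fin k → ℝ)) (hf : ContDiffOn ℝ 1 f U)
    (a : ℝ → ℝ) (ha : Continuous a)
    (h : ℝ × ((Fin k → ℝ) × (Fin s → ℝ)) → (Fin k → ℝ))
    (hh : ContinuousOn h (Set.univ ×ˢ U))
    (lam : ℝ) (hlam : 0 ≤ lam)
    (I : Set ℝ) (hIint : I.OrdConnected)
    (x : ℝ → (Fin k → ℝ)) (y : ℝ → (Fin s → ℝ))
    (hmem : ∀ t ∈ I, (x t, y t) ∈ U)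
    (hζ : ∀ t ∈ I,
      HasDerivWithinAt (fun τ => (x τ, y τ))
        (a t • ((f (x t, y t),
            -(Ring.inverse (pd2 g (x t, y t)) (pd1 g (x t, y t) (f (x t, y t))))) :
              (Fin k → ℝ) × (Fin s → ℝ)) +
         lam • ((h (t, (x t, y t)),
            -(Ring.inverse (pd2 g (x t, y t)) (pd1 g (x t, y t) (h (t, (x t, y t)))))) :
              (Fin k → ℝ) × (Fin s → ℝ))) I t)
    (t₀ : ℝ) (ht₀ : t₀ ∈ I) (hg0 : g (x t₀, y t₀) = 0) :
    (∀ t ∈ I, g (x t, y t) = 0) ∧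
    (∀ t ∈ I,
      HasDerivWithinAt x (a t • f (x t, y t) + lam • h (t, (x t, y t))) I t) := by
  have convI : Convex ℝ I := hIint.convex
  -- the derivative of g ∘ ζ vanishes
  have key : ∀ t ∈ I, HasDerivWithinAt (fun τ => g (x τ, y τ)) 0 I t := by
    intro t ht
    have hz := hmem t ht
    have hgd : HasFDerivAt g (fderiv ℝ g (x t, y t)) (x t, y t) :=
      ((hg.contDiffAt (hUopen.mem_nhds hz)).differentiableAt (by simp)).hasFDerivAt
    have hcomp := hgd.comp_hasDerivWithinAt t (hζ t ht)
    set L := fderiv ℝ g (x t, y t) with hL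
    have hker : ∀ v : Fin k → ℝ,
        L (v, -(Ring.inverse (pd2 g (x t, y t)) (pd1 g (x t, y t) v))) = 0 := by
      intro v
      have hsplit : (v, -(Ring.inverse (pd2 g (x t, y t)) (pd1 g (x t, y t) v)))
          = ((v, 0) : (Fin k → ℝ) × (Fin s → ℝ))
            + ((0, -(Ring.inverse (pd2 g (x t, y t)) (pd1 g (x t, y t) v))) :
              (Fin k → ℝ) × (Fin s → ℝ)) := by
        simp [Prod.ext_iff]
      rw [hsplit, map_add]
      have h1 : L (v, 0) = pd1 g (x t, y t) v := rfl
      have h2 : L (0, -(Ring.inverse (pd2 g (x t, y t)) (pd1 g (x t, y t) v)))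
          = pd2 g (x t, y t) (-(Ring.inverse (pd2 g (x t, y t)) (pd1 g (x t, y t) v))) := rfl
      rw [h1, h2, map_neg]
      have hc : pd2 g (x t, y t) (Ring.inverse (pd2 g (x t, y t)) (pd1 g (x t, y t) v))
          = pd1 g (x t, y t) v := by
        have := Ring.mul_inverse_cancel _ (hinv _ hz)
        calc pd2 g (x t, y t) (Ring.inverse (pd2 g (x t, y t)) (pd1 g (x t, y t) v))
            = ((pd2 g (x t, y t)) * Ring.inverse (pd2 g (x t, y t))) (pd1 g (x t, y t) v) := rfl
          _ = pd1 g (x t, y t) v := by rw [this]; rfl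
      rw [hc]; abel
    have hLV : L (a t • ((f (x t, y t),
            -(Ring.inverse (pd2 g (x t, y t)) (pd1 g (x t, y t) (f (x t, y t))))) :
              (Fin k → ℝ) × (Fin s → ℝ)) +
         lam • ((h (t, (x t, y t)),
            -(Ring.inverse (pd2 g (x t, y t)) (pd1 g (x t, y t) (h (t, (x t, y t)))))) :
              (Fin k → ℝ) × (Fin s → ℝ))) = 0 := by
      rw [map_add, map_smul, map_smul, hker, hker]
      simp
    rw [← hLV]; exact hcomp
  have hconst : ∀ t ∈ I, g (x t, y t) = 0 := by
    intro t ht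
    have := convI.norm_image_sub_le_of_norm_hasDerivWithin_le
      (f' := fun _ => (0 : Fin s → ℝ)) (C := 0) key
      (fun τ hτ => by simp) ht₀ ht
    have : ‖g (x t, y t) - g (x t₀, y t₀)‖ ≤ 0 := by simpa using this
    have h0 : g (x t, y t) - g (x t₀, y t₀) = 0 := by
      simpa using norm_le_zero_iff.mp this
    rw [hg0] at h0; simpa using h0
  refine ⟨hconst, fun t ht => ?_⟩
  have hx := (ContinuousLinearMap.fst ℝ (Fin k → ℝ)
      (Fin s → ℝ)).hasFDerivAt.comp_hasDerivWithinAt t (hζ t ht)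
  simpa [Function.comp_def] using hx
end

section
/- Assume in addition that w is locally Lipschitz. Let t₁ > 0, let u : I → Ω be differentiable on an interval I with u̇(τ) = w(u(τ)) for all τ ∈ I and φ_a([0,t₁]) ⊆ I, and let x : [0,t₁] → Ω be differentiable with ẋ(t) = a(t)w(x(t)) for all t ∈ [0,t₁] and x(0) = u(0). Then x(t) = u(φ_a(t)) for every t ∈ [0,t₁]; in particular, if ∫₀^{t₁} a(s)ds = t₁, then x(t₁) = u(t₁). (This identifies the Poincaré t₁-translation operator of the equation ẋ = a(t)w(x) with that of ẋ = w(x).) -/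
/-!
On `[0, t₁]` both `x` and `u ∘ φ_a` solve `ẏ = a(t) w(y)` (the latter by the chain rule,
as `φ_a' = a`), and they agree at `0`. The union of their images is a compact subset of `Ω`,
on which the locally Lipschitz `w` is Lipschitz; with `a` bounded on `[0, t₁]`, the field
`a(t) w` is uniformly Lipschitz along both trajectories, so Gronwall uniqueness applies.
-/

open Set Metric

theorem LocallyLipschitzOn.of_forall_lipschitzOnWith_ball_inter {α β : Type*}
    [PseudoMetricSpace α] [PseudoEMetricSpace β] {s : Set α} {f : α → β}
    (hf : ∀ z ∈ s, ∃ ε > (0 : ℝ), ∃ K, LipschitzOnWith K f (ball z ε ∩ s)) :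
    LocallyLipschitzOn s f := fun z hz ↦ by
  obtain ⟨ε, hε, K, hK⟩ := hf z hz
  exact ⟨K, ball z ε ∩ s,
    Filter.inter_mem (mem_nhdsWithin_of_mem_nhds (ball_mem_nhds z hε)) self_mem_nhdsWithin, hK⟩

theorem eqOn_Icc_of_hasDerivAt_smul_of_locallyLipschitzOn {E : Type*} [NormedAddCommGroup E]
    [NormedSpace ℝ E] {Ω : Set E} {w : E → E} (hw : LocallyLipschitzOn Ω w) {a : ℝ → ℝ}
    {t₀ t₁ : ℝ} (ha : ContinuousOn a (Icc t₀ t₁)) {f g : ℝ → E}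
    (hf : ∀ t ∈ Icc t₀ t₁, HasDerivAt f (a t • w (f t)) t) (hfΩ : ∀ t ∈ Icc t₀ t₁, f t ∈ Ω)
    (hg : ∀ t ∈ Icc t₀ t₁, HasDerivAt g (a t • w (g t)) t) (hgΩ : ∀ t ∈ Icc t₀ t₁, g t ∈ Ω)
    (h₀ : f t₀ = g t₀) :
    EqOn f g (Icc t₀ t₁) := by
  have hf_cont : ContinuousOn f (Icc t₀ t₁) := fun t ht ↦ (hf t ht).continuousAt.continuousWithinAt
  have hg_cont : ContinuousOn g (Icc t₀ t₁) := fun t ht ↦ (hg t ht).continuousAt.continuousWithinAt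
  set C := f '' Icc t₀ t₁ ∪ g '' Icc t₀ t₁
  have hC : IsCompact C :=
    (isCompact_Icc.image_of_continuousOn hf_cont).union (isCompact_Icc.image_of_continuousOn hg_cont)
  have hCΩ : C ⊆ Ω := union_subset (image_subset_iff.2 hfΩ) (image_subset_iff.2 hgΩ)
  obtain ⟨K, hK⟩ := (hw.mono hCΩ).exists_lipschitzOnWith_of_compact hC
  obtain ⟨M, hM⟩ := isCompact_Icc.exists_bound_of_continuousOn ha
  have hv : ∀ t ∈ Ico t₀ t₁, LipschitzOnWith (M.toNNReal * K) (fun z ↦ a t • w z) C := by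
    intro t ht
    refine ((lipschitzWith_smul (a t)).comp_lipschitzOnWith hK).weaken ?_
    gcongr
    rw [← NNReal.coe_le_coe, coe_nnnorm]
    exact (hM t (Ico_subset_Icc_self ht)).trans (Real.le_coe_toNNReal M)
  exact ODE_solution_unique_of_mem_Icc_right hv
    hf_cont (fun t ht ↦ (hf t (Ico_subset_Icc_self ht)).hasDerivWithinAt)
    (fun t ht ↦ Or.inl (mem_image_of_mem f (Ico_subset_Icc_self ht)))
    hg_cont (fun t ht ↦ (hg t (Ico_subset_Icc_self ht)).hasDerivWithinAt)
    (fun t ht ↦ Or.inr (mem_image_of_mem g (Ico_subset_Icc_self ht))) h₀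

theorem stmt4_general {n : ℕ}
    (Ω : Set (Fin n → ℝ))
    (w : (Fin n → ℝ) → (Fin n → ℝ))
    (hwlip : ∀ z ∈ Ω, ∃ ε > (0:ℝ), ∃ K : NNReal,
      LipschitzOnWith K w (Metric.ball z ε ∩ Ω))
    (a : ℝ → ℝ) (ha : Continuous a)
    (t₁ : ℝ) (ht₁ : 0 < t₁)
    (I : Set ℝ)
    (u : ℝ → (Fin n → ℝ))
    (humem : ∀ τ ∈ I, u τ ∈ Ω)
    (hu : ∀ τ ∈ I, HasDerivAt u (w (u τ)) τ)
    (hsub : (fun t => ∫ s in (0:ℝ)..t, a s) '' Set.Icc (0:ℝ) t₁ ⊆ I)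
    (x : ℝ → (Fin n → ℝ))
    (hxmem : ∀ t ∈ Set.Icc (0:ℝ) t₁, x t ∈ Ω)
    (hx : ∀ t ∈ Set.Icc (0:ℝ) t₁, HasDerivAt x (a t • w (x t)) t)
    (hx0 : x 0 = u 0) :
    (∀ t ∈ Set.Icc (0:ℝ) t₁, x t = u (∫ s in (0:ℝ)..t, a s)) ∧
    ((∫ s in (0:ℝ)..t₁, a s) = t₁ → x t₁ = u t₁) := by
  set φ : ℝ → ℝ := fun t ↦ ∫ s in (0:ℝ)..t, a s
  have hφ : ∀ t, HasDerivAt φ (a t) t := fun t ↦ (ha.integral_hasStrictDerivAt 0 t).hasDerivAt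
  have hφI : ∀ t ∈ Icc 0 t₁, φ t ∈ I := fun t ht ↦ hsub (mem_image_of_mem φ ht)
  have hx_eq : EqOn x (u ∘ φ) (Icc 0 t₁) :=
    eqOn_Icc_of_hasDerivAt_smul_of_locallyLipschitzOn
      (.of_forall_lipschitzOnWith_ball_inter hwlip) ha.continuousOn hx hxmem
      (fun t ht ↦ (hu _ (hφI t ht)).scomp t (hφ t)) (fun t ht ↦ humem _ (hφI t ht))
      (by simp [φ, hx0])
  refine ⟨hx_eq, fun hφt₁ ↦ ?_⟩
  exact (hx_eq ⟨ht₁.le, le_rfl⟩).trans (congrArg u hφt₁)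

/-- Uniqueness for the reparametrized equation: if `w` is locally Lipschitz, `u̇ = w(u)` on `I`,
and `x` solves `ẋ = a(t)w(x)` on `[0,t₁]` with `x(0) = u(0)`, then `x(t) = u(φ_a(t))` on
`[0,t₁]`; in particular if `∫₀^{t₁} a = t₁` then `x(t₁) = u(t₁)`. -/
theorem stmt4 {n : ℕ}
    (Ω : Set (Fin n → ℝ)) (hΩ : IsOpen Ω)
    (w : (Fin n → ℝ) → (Fin n → ℝ)) (hw : ContinuousOn w Ω)
    (hwlip : ∀ z ∈ Ω, ∃ ε > (0:ℝ), ∃ K : NNReal,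
      LipschitzOnWith K w (Metric.ball z ε ∩ Ω))
    (a : ℝ → ℝ) (ha : Continuous a)
    (t₁ : ℝ) (ht₁ : 0 < t₁)
    (I : Set ℝ) (hI : I.OrdConnected)
    (u : ℝ → (Fin n → ℝ))
    (humem : ∀ τ ∈ I, u τ ∈ Ω)
    (hu : ∀ τ ∈ I, HasDerivAt u (w (u τ)) τ)
    (hsub : (fun t => ∫ s in (0:ℝ)..t, a s) '' Set.Icc (0:ℝ) t₁ ⊆ I)
    (x : ℝ → (Fin n → ℝ))
    (hxmem : ∀ t ∈ Set.Icc (0:ℝ) t₁, x t ∈ Ω)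
    (hx : ∀ t ∈ Set.Icc (0:ℝ) t₁, HasDerivAt x (a t • w (x t)) t)
    (hx0 : x 0 = u 0) :
    (∀ t ∈ Set.Icc (0:ℝ) t₁, x t = u (∫ s in (0:ℝ)..t, a s)) ∧
    ((∫ s in (0:ℝ)..t₁, a s) = t₁ → x t₁ = u t₁) :=
  stmt4_general Ω w hwlip a ha t₁ ht₁ I u humem hu hsub x hxmem hx hx0
end

section
/- Let (p₀,q₀) ∈ U be a zero of F. Then the linear ODE ξ̇ = a(t)Φ(p₀,q₀)ξ on ℝᵏ admits a nonzero T-periodic solution ξ : ℝ → ℝᵏ if and only if the autonomous linear ODE ξ̇ = Φ(p₀,q₀)ξ admits a nonzero T-periodic solution. In other words, (p₀,q₀) is T-resonant for the equation with the T-periodic factor a if and only if it is T-resonant for the unperturbed autonomous equation. -/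
open NormedSpace intervalIntegral

set_option maxHeartbeats 1000000
set_option synthInstance.maxHeartbeats 400000

section Aux

variable {E : Type*} [NormedAddCommGroup E] [NormedSpace ℝ E] [CompleteSpace E]

lemma tau_hasDerivAt {a : ℝ → ℝ} (ha : Continuous a) (t : ℝ) :
    HasDerivAt (fun u => ∫ s in (0:ℝ)..u, a s) (a t) t :=
  integral_hasDerivAt_right (ha.intervalIntegrable _ _)
    (ha.stronglyMeasurable.stronglyMeasurableAtFilter) ha.continuousAt

lemma exp_smul_mul_exp_smul (A : E →L[ℝ] E) (x y : ℝ) :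
    exp ((x + y) • A) = exp (x • A) * exp (y • A) := by
  rw [add_smul]
  exact exp_add_of_commute_of_mem_ball (𝕂 := ℝ) (((Commute.refl A).smul_left x).smul_right y)
    ((expSeries_radius_eq_top ℝ (E →L[ℝ] E)).symm ▸ edist_lt_top _ _)
    ((expSeries_radius_eq_top ℝ (E →L[ℝ] E)).symm ▸ edist_lt_top _ _)

lemma exp_deriv_aux {a : ℝ → ℝ} (ha : Continuous a) (A : E →L[ℝ] E) (c : ℝ → ℝ)
    (hc : ∀ t, HasDerivAt c (a t) t) (t : ℝ) :
    HasDerivAt (fun u => exp (c u • A)) (a t • (exp (c t • A) * A)) t :=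
  (hasDerivAt_exp_smul_const (𝕂 := ℝ) A (c t)).scomp t (hc t)

/-- Representation: every solution of `ξ' = a t • A ξ` is `exp (τ t • A) (ξ 0)`. -/
lemma sol_rep {a : ℝ → ℝ} (ha : Continuous a) (A : E →L[ℝ] E) {ξ : ℝ → E}
    (hξ : ∀ t, HasDerivAt ξ (a t • A (ξ t)) t) (t : ℝ) :
    ξ t = exp ((∫ s in (0:ℝ)..t, a s) • A) (ξ 0) := by
  set τ : ℝ → ℝ := fun u => ∫ s in (0:ℝ)..u, a s with hτdef
  have hτ : ∀ u, HasDerivAt τ (a u) u := tau_hasDerivAt ha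
  have hτ0 : τ 0 = 0 := integral_same
  -- h u := exp (-(τ u) • A) (ξ u) is constant
  have hcom : ∀ c : ℝ, exp (c • A) * A = A * exp (c • A) := fun c =>
    (((Commute.refl A).smul_left c).exp_left)
  have hderiv : ∀ u, HasDerivAt (fun v => exp ((-τ v) • A) (ξ v)) 0 u := by
    intro u
    have hE : HasDerivAt (fun v => exp ((-τ v) • A)) ((-a u) • (exp ((-τ u) • A) * A)) u :=
      exp_deriv_aux (ha.neg) A (fun v => -τ v) (fun v => (hτ v).neg) u
    have h2 := hE.clm_apply (hξ u)
    have e1 : ((-a u) • (exp ((-τ u) • A) * A)) (ξ u)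
        = -(a u • (exp ((-τ u) • A)) (A (ξ u))) := by
      simp [ContinuousLinearMap.smul_apply, ContinuousLinearMap.mul_apply, neg_smul]
    have e2 : (exp ((-τ u) • A)) (a u • A (ξ u))
        = a u • (exp ((-τ u) • A)) (A (ξ u)) := map_smul _ _ _
    rw [e1, e2, neg_add_cancel] at h2
    exact h2
  have hconst : ∀ u, exp ((-τ u) • A) (ξ u) = exp ((-τ 0) • A) (ξ 0) := by
    intro u
    exact is_const_of_deriv_eq_zero (fun v => (hderiv v).differentiableAt)
      (fun v => (hderiv v).deriv) u 0
  have h0 : exp ((-τ 0) • A) (ξ 0) = ξ 0 := by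
    rw [hτ0, neg_zero, zero_smul, exp_zero, ContinuousLinearMap.one_apply]
  have key := hconst t
  rw [h0] at key
  have : exp (τ t • A) (exp ((-τ t) • A) (ξ t)) = ξ t := by
    rw [← ContinuousLinearMap.mul_apply, ← exp_smul_mul_exp_smul A (τ t) (-τ t)]
    simp [exp_zero]
  rw [← this, key]

/-- Main general lemma. -/
lemma resonant_iff_fixed (A : E →L[ℝ] E) (T : ℝ) (hT : 0 < T)
    (a : ℝ → ℝ) (ha : Continuous a) (haT : Function.Periodic a T)
    (hint : (∫ t in (0:ℝ)..T, a t) = T) :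
    (∃ ξ : ℝ → E, (∀ t, HasDerivAt ξ (a t • A (ξ t)) t) ∧ Function.Periodic ξ T ∧ ξ ≠ 0) ↔
    ∃ v : E, v ≠ 0 ∧ exp (T • A) v = v := by
  set τ : ℝ → ℝ := fun u => ∫ s in (0:ℝ)..u, a s with hτdef
  have hτT : τ T = T := hint
  constructor
  · rintro ⟨ξ, hsol, hper, hne⟩
    have hrep := sol_rep ha A hsol
    refine ⟨ξ 0, ?_, ?_⟩
    · intro h0
      apply hne
      funext t
      rw [Pi.zero_apply, hrep t, h0, map_zero]
    · have := hrep T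
      rw [hint] at this
      rw [← this]
      have := hper 0
      rwa [zero_add] at this
  · rintro ⟨v, hv, hfix⟩
    refine ⟨fun t => exp (τ t • A) v, ?_, ?_, ?_⟩
    · intro t
      have hE := exp_deriv_aux ha A τ (tau_hasDerivAt ha) t
      have := hE.clm_apply (hasDerivAt_const t v)
      convert this using 1
      have hcom : exp (τ t • A) * A = A * exp (τ t • A) :=
        (((Commute.refl A).smul_left (τ t)).exp_left)
      simp only [ContinuousLinearMap.smul_apply, ContinuousLinearMap.mul_apply, map_zero,
        add_zero]
      rw [← ContinuousLinearMap.mul_apply A, ← hcom, ContinuousLinearMap.mul_apply]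
    · intro t
      have hshift : τ (t + T) = τ t + T := by
        have h1 : (∫ s in (0:ℝ)..T, a s) + ∫ s in T..(t + T), a s = τ (t + T) :=
          integral_add_adjacent_intervals (ha.intervalIntegrable _ _)
            (ha.intervalIntegrable _ _)
        have h2 : (∫ s in T..(t + T), a s) = τ t := by
          have := integral_comp_add_right (a := (0:ℝ)) (b := t) (fun s => a s) T
          rw [zero_add] at this
          rw [← this]
          simp only [hτdef]
          congr 1
          funext s
          exact haT s
        simp only [hτdef] at h1 ⊢
        rw [← h1, h2, hint, add_comm]
      show exp (τ (t + T) • A) v = exp (τ t • A) v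
      rw [hshift, exp_smul_mul_exp_smul, ContinuousLinearMap.mul_apply, hfix]
    · intro h
      apply hv
      have h0 := congrFun h 0
      have hτ0 : τ 0 = 0 := integral_same
      simp only [Pi.zero_apply] at h0
      rw [hτ0, zero_smul, exp_zero, ContinuousLinearMap.one_apply] at h0
      exact h0
end Aux



/-- The linearization `Φ(p₀,q₀) = ∂₁f − ∂₂f [∂₂g]⁻¹ ∂₁g` at a point. -/
noncomputable def PhiMap {k s : ℕ}
    (f : (Fin k → ℝ) × (Fin s → ℝ) → (Fin k → ℝ))
    (g : (Fin k → ℝ) × (Fin s → ℝ) → (Fin s → ℝ))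
    (z : (Fin k → ℝ) × (Fin s → ℝ)) :
    (Fin k → ℝ) →L[ℝ] (Fin k → ℝ) :=
  pd1 f z - (pd2 f z).comp ((Ring.inverse (pd2 g z)).comp (pd1 g z))

/-- A zero `(p₀,q₀)` of `F` is `T`-resonant for `ξ̇ = a(t)Φ(p₀,q₀)ξ` if and only if it is
`T`-resonant for the autonomous equation `ξ̇ = Φ(p₀,q₀)ξ`. -/
theorem stmt5 {k s : ℕ}
    (U : Set ((Fin k → ℝ) × (Fin s → ℝ))) (hUopen : IsOpen U) (hUconn : IsConnected U)
    (g : (Fin k → ℝ) × (Fin s → ℝ) → (Fin s → ℝ)) (hg : ContDiffOn ℝ (⊤ : ℕ∞) g U)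
    (hinv : ∀ z ∈ U, IsUnit (pd2 g z))
    (f : (Fin k → ℝ) × (Fin s → ℝ) → (Fin k → ℝ)) (hf : ContDiffOn ℝ 1 f U)
    (T : ℝ) (hT : 0 < T)
    (a : ℝ → ℝ) (ha : Continuous a) (haT : Function.Periodic a T)
    (havg : (1 / T) * ∫ t in (0:ℝ)..T, a t = 1)
    (z₀ : (Fin k → ℝ) × (Fin s → ℝ)) (hz₀ : z₀ ∈ U)
    (hf0 : f z₀ = 0) (hg0 : g z₀ = 0) :
    (∃ ξ : ℝ → (Fin k → ℝ),
        (∀ t : ℝ, HasDerivAt ξ (a t • PhiMap f g z₀ (ξ t)) t) ∧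
        Function.Periodic ξ T ∧ ξ ≠ 0) ↔
    (∃ ξ : ℝ → (Fin k → ℝ),
        (∀ t : ℝ, HasDerivAt ξ (PhiMap f g z₀ (ξ t)) t) ∧
        Function.Periodic ξ T ∧ ξ ≠ 0) := by
  have hintA : (∫ t in (0:ℝ)..T, a t) = T := by
    have := havg
    field_simp at this
    linarith
  have h1 := resonant_iff_fixed (PhiMap f g z₀) T hT a ha haT hintA
  have h2 := resonant_iff_fixed (PhiMap f g z₀) T hT (fun _ => (1:ℝ)) continuous_const
    (fun t => rfl) (by simp)
  simp only [one_smul] at h2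
  exact h1.trans h2.symm
end

section
/- A differentiable function ξ : ℝ → ℝᵏ satisfying ξ̇(t) = a(t)Φ(ξ(t)) for all t ∈ ℝ is T-periodic if and only if ξ(0) ∈ ker(Id − exp(T·Φ)). Consequently, the equation ξ̇ = a(t)Φξ admits a nonzero T-periodic solution if and only if ker(Id − exp(T·Φ)) ≠ {0}. -/
/-!
With `A t = ∫₀ᵗ a`, every solution is `ξ t = exp (A t • Φ) (ξ 0)`, because
`exp (-A t • Φ) (ξ t)` has zero derivative. Periodicity of `a` together with `A T = T` gives
`A (t + T) = A t + T`, so `ξ (t + T) = exp (A t • Φ) (exp (T • Φ) (ξ 0))`, and `ξ` is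
`T`-periodic exactly when `exp (T • Φ)` fixes `ξ 0`.
-/

open NormedSpace

theorem ContinuousLinearMap.mem_ker_id_sub_iff {R E : Type*} [Ring R] [TopologicalSpace E]
    [AddCommGroup E] [IsTopologicalAddGroup E] [Module R E] (f : E →L[R] E) (v : E) :
    v ∈ LinearMap.ker ((ContinuousLinearMap.id R E - f : E →L[R] E) : E →ₗ[R] E) ↔ f v = v := by
  simp [sub_eq_zero, eq_comm (a := v)]

section LinearODE

variable {E : Type*} [NormedAddCommGroup E] [NormedSpace ℝ E] [CompleteSpace E] (Φ : E →L[ℝ] E)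

theorem exp_add_smul (s t : ℝ) : exp ((s + t) • Φ) = exp (s • Φ) * exp (t • Φ) := by
  -- `exp_add_of_commute` is stated for Banach algebras over `ℚ`.
  let +nondep : NormedAlgebra ℚ (E →L[ℝ] E) := .restrictScalars ℚ ℝ _
  rw [add_smul, exp_add_of_commute (((Commute.refl Φ).smul_left s).smul_right t)]

theorem exp_smul_apply_exp_neg_smul_apply (s : ℝ) (v : E) :
    exp (s • Φ) (exp ((-s) • Φ) v) = v := by
  rw [← mul_apply_eq_comp, ← exp_add_smul, add_neg_cancel, zero_smul, exp_zero, one_apply_eq_self]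

variable {A a : ℝ → ℝ}

theorem hasDerivAt_exp_smul_apply {t : ℝ} (hA : HasDerivAt A (a t) t) (v : E) :
    HasDerivAt (fun t => exp (A t • Φ) v) (a t • Φ (exp (A t • Φ) v)) t := by
  simpa using ((hasDerivAt_exp_smul_const' Φ (A t)).scomp t hA).clm_apply (hasDerivAt_const t v)

theorem eq_exp_smul_apply_of_hasDerivAt (hA : ∀ t, HasDerivAt A (a t) t) (hA0 : A 0 = 0)
    {ξ : ℝ → E} (hξ : ∀ t, HasDerivAt ξ (a t • Φ (ξ t)) t) (t : ℝ) :
    ξ t = exp (A t • Φ) (ξ 0) := by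
  set g : ℝ → E := fun t => exp ((-A t) • Φ) (ξ t)
  have hg : ∀ t, HasDerivAt g 0 t := fun t => by
    refine (((hasDerivAt_exp_smul_const Φ _).scomp t (hA t).neg).clm_apply (hξ t)).congr_deriv ?_
    simp only [smul_apply, mul_apply_eq_comp, map_smul, Function.comp_apply, Pi.neg_apply]
    module
  have hconst : g t = g 0 :=
    is_const_of_deriv_eq_zero (fun t => (hg t).differentiableAt) (fun t => (hg t).deriv) t 0
  calc ξ t = exp (A t • Φ) (g t) := (exp_smul_apply_exp_neg_smul_apply Φ _ _).symm
    _ = exp (A t • Φ) (ξ 0) := by rw [hconst]; simp [g, hA0]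

theorem periodic_exp_smul_apply_iff {T : ℝ} (hA0 : A 0 = 0) (hAT : ∀ t, A (t + T) = A t + T)
    (v : E) : Function.Periodic (fun t => exp (A t • Φ) v) T ↔ exp (T • Φ) v = v := by
  have hT : A T = T := by simpa [hA0] using hAT 0
  refine ⟨fun h => by simpa [hA0, hT] using h 0, fun h t => ?_⟩
  simp [hAT, exp_add_smul, h]

theorem periodic_iff_exp_smul_apply_eq_of_hasDerivAt {T : ℝ} (hA : ∀ t, HasDerivAt A (a t) t)
    (hA0 : A 0 = 0) (hAT : ∀ t, A (t + T) = A t + T) {ξ : ℝ → E}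
    (hξ : ∀ t, HasDerivAt ξ (a t • Φ (ξ t)) t) :
    Function.Periodic ξ T ↔ exp (T • Φ) (ξ 0) = ξ 0 := by
  have h := periodic_exp_smul_apply_iff Φ hA0 hAT (ξ 0)
  rwa [← funext (eq_exp_smul_apply_of_hasDerivAt Φ hA hA0 hξ)] at h

end LinearODE

theorem stmt7_general {k : ℕ}
    (Φ : (Fin k → ℝ) →L[ℝ] (Fin k → ℝ))
    (T : ℝ)
    (a : ℝ → ℝ) (ha : Continuous a) (haT : Function.Periodic a T)
    (hint : (∫ s in (0:ℝ)..T, a s) = T) :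
    (∀ ξ : ℝ → (Fin k → ℝ),
      (∀ t : ℝ, HasDerivAt ξ (a t • Φ (ξ t)) t) →
      (Function.Periodic ξ T ↔
        ξ 0 ∈ LinearMap.ker
          ((ContinuousLinearMap.id ℝ (Fin k → ℝ) - NormedSpace.exp (T • Φ) :
            (Fin k → ℝ) →L[ℝ] (Fin k → ℝ)) : (Fin k → ℝ) →ₗ[ℝ] (Fin k → ℝ)))) ∧
    ((∃ ξ : ℝ → (Fin k → ℝ),
        (∀ t : ℝ, HasDerivAt ξ (a t • Φ (ξ t)) t) ∧ Function.Periodic ξ T ∧ ξ ≠ 0) ↔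
      LinearMap.ker
        ((ContinuousLinearMap.id ℝ (Fin k → ℝ) - NormedSpace.exp (T • Φ) :
          (Fin k → ℝ) →L[ℝ] (Fin k → ℝ)) : (Fin k → ℝ) →ₗ[ℝ] (Fin k → ℝ)) ≠ ⊥) := by
  set A : ℝ → ℝ := fun t => ∫ s in (0:ℝ)..t, a s
  have hA t : HasDerivAt A (a t) t := (ha.integral_hasStrictDerivAt 0 t).hasDerivAt
  have hA0 : A 0 = 0 := intervalIntegral.integral_same
  have hAT t : A (t + T) = A t + T := by
    have h := haT.intervalIntegral_add_eq_add 0 t fun _ _ => ha.intervalIntegrable _ _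
    rwa [zero_add, hint] at h
  have hperiodic (ξ : ℝ → Fin k → ℝ) : (∀ t, HasDerivAt ξ (a t • Φ (ξ t)) t) → _ :=
    periodic_iff_exp_smul_apply_eq_of_hasDerivAt Φ hA hA0 hAT
  simp only [ContinuousLinearMap.mem_ker_id_sub_iff, Submodule.ne_bot_iff]
  refine ⟨hperiodic, ⟨?_, ?_⟩⟩
  · rintro ⟨ξ, hξ, hper, hξ_ne⟩
    refine ⟨ξ 0, (hperiodic ξ hξ).1 hper, fun hξ0 => hξ_ne (funext fun t => ?_)⟩
    simp [eq_exp_smul_apply_of_hasDerivAt Φ hA hA0 hξ t, hξ0]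
  · rintro ⟨v, hv, hv0⟩
    refine ⟨fun t => exp (A t • Φ) v, fun t => hasDerivAt_exp_smul_apply Φ (hA t) v,
      (periodic_exp_smul_apply_iff Φ hA0 hAT v).2 hv, fun h => hv0 ?_⟩
    simpa [hA0] using congrFun h 0

/-- A solution of `ξ̇ = a(t)Φξ` is `T`-periodic iff `ξ(0) ∈ ker(Id − exp(T·Φ))`; consequently,
there is a nonzero `T`-periodic solution iff `ker(Id − exp(T·Φ)) ≠ {0}`. -/
theorem stmt7 {k : ℕ}
    (Φ : (Fin k → ℝ) →L[ℝ] (Fin k → ℝ))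
    (T : ℝ) (hT : 0 < T)
    (a : ℝ → ℝ) (ha : Continuous a) (haT : Function.Periodic a T)
    (hint : (∫ s in (0:ℝ)..T, a s) = T) :
    (∀ ξ : ℝ → (Fin k → ℝ),
      (∀ t : ℝ, HasDerivAt ξ (a t • Φ (ξ t)) t) →
      (Function.Periodic ξ T ↔
        ξ 0 ∈ LinearMap.ker
          ((ContinuousLinearMap.id ℝ (Fin k → ℝ) - NormedSpace.exp (T • Φ) :
            (Fin k → ℝ) →L[ℝ] (Fin k → ℝ)) : (Fin k → ℝ) →ₗ[ℝ] (Fin k → ℝ)))) ∧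
    ((∃ ξ : ℝ → (Fin k → ℝ),
        (∀ t : ℝ, HasDerivAt ξ (a t • Φ (ξ t)) t) ∧ Function.Periodic ξ T ∧ ξ ≠ 0) ↔
      LinearMap.ker
        ((ContinuousLinearMap.id ℝ (Fin k → ℝ) - NormedSpace.exp (T • Φ) :
          (Fin k → ℝ) →L[ℝ] (Fin k → ℝ)) : (Fin k → ℝ) →ₗ[ℝ] (Fin k → ℝ)) ≠ ⊥) :=
  stmt7_general Φ T a ha haT hint
end

section
/- Let (p₀,q₀) ∈ U be a zero of F which is not T-resonant. Then (p₀,q₀) is a nondegenerate zero of F: the differential dF(p₀,q₀) : ℝᵏ×ℝˢ → ℝᵏ×ℝˢ is a linear isomorphism, and in particular det dF(p₀,q₀) ≠ 0. -/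
/-- A non-`T`-resonant zero of `F` is a nondegenerate zero of `F`. -/
theorem stmt10 {k s : ℕ}
    (U : Set ((Fin k → ℝ) × (Fin s → ℝ))) (hUopen : IsOpen U) (hUconn : IsConnected U)
    (g : (Fin k → ℝ) × (Fin s → ℝ) → (Fin s → ℝ)) (hg : ContDiffOn ℝ (⊤ : ℕ∞) g U)
    (hinv : ∀ z ∈ U, IsUnit (pd2 g z))
    (f : (Fin k → ℝ) × (Fin s → ℝ) → (Fin k → ℝ)) (hf : ContDiffOn ℝ 1 f U)
    (T : ℝ) (hT : 0 < T)
    (a : ℝ → ℝ) (ha : Continuous a) (haT : Function.Periodic a T)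
    (havg : (1 / T) * ∫ t in (0:ℝ)..T, a t = 1)
    (z₀ : (Fin k → ℝ) × (Fin s → ℝ)) (hz₀ : z₀ ∈ U)
    (hf0 : f z₀ = 0) (hg0 : g z₀ = 0)
    (hres : ¬ ∃ ξ : ℝ → (Fin k → ℝ),
        (∀ t : ℝ, HasDerivAt ξ (a t • PhiMap f g z₀ (ξ t)) t) ∧
        Function.Periodic ξ T ∧ ξ ≠ 0) :
    DifferentiableAt ℝ (fun w => (f w, g w)) z₀ ∧
    Function.Bijective (fderiv ℝ (fun w => (f w, g w)) z₀) ∧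
    LinearMap.det (fderiv ℝ (fun w => (f w, g w)) z₀).toLinearMap ≠ 0 := by
  -- Φ is injective: otherwise a constant nonzero periodic solution exists.
  have hPhi : ∀ v : Fin k → ℝ, PhiMap f g z₀ v = 0 → v = 0 := by
    intro v hv
    by_contra hv0
    apply hres
    refine ⟨fun _ => v, fun t => ?_, fun t => rfl, ?_⟩
    · have h0 : a t • PhiMap f g z₀ v = 0 := by rw [hv, smul_zero]
      simpa [h0] using (hasDerivAt_const t v)
    · intro h
      exact hv0 (congrFun h 0)
  -- differentiability of f, g at z₀
  have hUz : U ∈ nhds z₀ := hUopen.mem_nhds hz₀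
  have hfd : DifferentiableAt ℝ f z₀ :=
    (hf.contDiffAt hUz).differentiableAt one_ne_zero
  have hgd : DifferentiableAt ℝ g z₀ :=
    (hg.contDiffAt hUz).differentiableAt (by simp)
  have hFD : HasFDerivAt (fun w => (f w, g w))
      ((fderiv ℝ f z₀).prod (fderiv ℝ g z₀)) z₀ :=
    HasFDerivAt.prodMk hfd.hasFDerivAt hgd.hasFDerivAt
  have hFeq : fderiv ℝ (fun w => (f w, g w)) z₀ =
      (fderiv ℝ f z₀).prod (fderiv ℝ g z₀) := hFD.fderiv
  set D := pd2 g z₀ with hDdef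
  have hDu : IsUnit D := hinv z₀ hz₀
  have hDinv : ∀ w : Fin s → ℝ, (Ring.inverse D) (D w) = w := by
    intro w
    have h1 : (Ring.inverse D) * D = 1 := Ring.inverse_mul_cancel D hDu
    have := congrFun (congrArg (fun L : (Fin s → ℝ) →L[ℝ] (Fin s → ℝ) => ⇑L) h1) w
    simpa using this
  -- splitting a differential on a product
  have hsplit : ∀ {m : ℕ} (h : (Fin k → ℝ) × (Fin s → ℝ) → (Fin m → ℝ))
      (u : Fin k → ℝ) (v : Fin s → ℝ),
      fderiv ℝ h z₀ (u, v) = pd1 h z₀ u + pd2 h z₀ v := by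
    intro m h u v
    have huv : (u, v) = ((u, 0) : (Fin k → ℝ) × (Fin s → ℝ)) + (0, v) := by
      simp [Prod.ext_iff]
    rw [huv, map_add]
    rfl
  -- injectivity of the full differential
  have hinj : Function.Injective ((fderiv ℝ f z₀).prod (fderiv ℝ g z₀)) := by
    rw [injective_iff_map_eq_zero ((fderiv ℝ f z₀).prod (fderiv ℝ g z₀))]
    rintro ⟨u, v⟩ hw
    have h1 : pd1 f z₀ u + pd2 f z₀ v = 0 := by
      rw [← hsplit f u v]; exact congrArg Prod.fst hw
    have h2 : pd1 g z₀ u + D v = 0 := by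
      rw [hDdef, ← hsplit g u v]; exact congrArg Prod.snd hw
    have hv : v = -((Ring.inverse D) (pd1 g z₀ u)) := by
      have h3 : (Ring.inverse D) (pd1 g z₀ u + D v) = 0 := by rw [h2]; simp
      rw [map_add, hDinv v] at h3
      exact eq_neg_of_add_eq_zero_left (by rw [add_comm]; exact h3)
    have hΦu : PhiMap f g z₀ u = 0 := by
      rw [hv, map_neg, ← sub_eq_add_neg] at h1
      simpa [PhiMap, ContinuousLinearMap.sub_apply, ContinuousLinearMap.comp_apply,
        ← hDdef] using h1
    have hu : u = 0 := hPhi u hΦu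
    have hv0 : v = 0 := by
      rw [hv, hu]
      simp
    rw [hu, hv0]
    rfl
  have hsurj : Function.Surjective ((fderiv ℝ f z₀).prod (fderiv ℝ g z₀)) :=
    LinearMap.injective_iff_surjective.mp hinj
  have hbij : Function.Bijective ((fderiv ℝ f z₀).prod (fderiv ℝ g z₀)) := ⟨hinj, hsurj⟩
  refine ⟨hFD.differentiableAt, ?_, ?_⟩
  · rw [hFeq]; exact hbij
  · rw [hFeq]
    have hdet : IsUnit (LinearMap.det
        ((LinearEquiv.ofBijective
          ((fderiv ℝ f z₀).prod (fderiv ℝ g z₀)).toLinearMap hbij).toLinearMap)) :=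
      LinearEquiv.isUnit_det' _
    exact hdet.ne_zero
end

section
/- Assume M := g⁻¹(0) is closed in ℝᵏ×ℝˢ. Then the set X := {(λ,(x,y)) ∈ [0,∞) × C_T(U) : (x,y) is a T-periodic solution of the DAE ẋ = a(t)f(x,y) + λh(t,x,y), g(x,y) = 0, corresponding to λ} of T-periodic pairs is a closed subset of ℝ × C_T(ℝᵏ×ℝˢ). -/
section
variable {k s : ℕ}
local notation "E" => ((Fin k → ℝ) × (Fin s → ℝ))

noncomputable def Phi (g : E → (Fin s → ℝ)) (f : E → (Fin k → ℝ)) (a : ℝ → ℝ)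
    (h : ℝ × E → (Fin k → ℝ)) (q : ℝ × ℝ × E) : E :=
  (a q.1 • f q.2.2 + q.2.1 • h (q.1, q.2.2),
   -(Ring.inverse ((fderiv ℝ g q.2.2).comp (ContinuousLinearMap.inr ℝ (Fin k → ℝ) (Fin s → ℝ)))
      (((fderiv ℝ g q.2.2).comp (ContinuousLinearMap.inl ℝ (Fin k → ℝ) (Fin s → ℝ)))
        (a q.1 • f q.2.2 + q.2.1 • h (q.1, q.2.2)))))

theorem fderiv_split (D : E →L[ℝ] (Fin s → ℝ)) (v : E) :
    D v = D.comp (ContinuousLinearMap.inl ℝ (Fin k → ℝ) (Fin s → ℝ)) v.1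
      + D.comp (ContinuousLinearMap.inr ℝ (Fin k → ℝ) (Fin s → ℝ)) v.2 := by
  simp only [ContinuousLinearMap.comp_apply, ContinuousLinearMap.inl_apply,
    ContinuousLinearMap.inr_apply, ← map_add, Prod.mk_add_mk, add_zero, zero_add]

theorem phi_contAt {U : Set E} (hUopen : IsOpen U)
    {g : E → (Fin s → ℝ)} (hg : ContDiffOn ℝ (⊤ : ℕ∞) g U)
    (hinv : ∀ z ∈ U, IsUnit
      ((fderiv ℝ g z).comp (ContinuousLinearMap.inr ℝ (Fin k → ℝ) (Fin s → ℝ))))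
    {f : E → (Fin k → ℝ)} (hf : ContinuousOn f U)
    {a : ℝ → ℝ} (ha : Continuous a)
    {h : ℝ × E → (Fin k → ℝ)} (hh : ContinuousOn h (Set.univ ×ˢ U))
    (q : ℝ × ℝ × E) (hq : q.2.2 ∈ U) :
    ContinuousAt (Phi g f a h) q := by
  have hz : ContinuousAt (fun p : ℝ × ℝ × E => p.2.2) q := continuous_snd.snd.continuousAt
  have hfc : ContinuousAt (fun p : ℝ × ℝ × E => f p.2.2) q :=
    Filter.Tendsto.comp (hf.continuousAt (hUopen.mem_nhds hq)) hz
  have hac : ContinuousAt (fun p : ℝ × ℝ × E => a p.1) q :=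
    ha.continuousAt.comp continuous_fst.continuousAt
  have hhc : ContinuousAt (fun p : ℝ × ℝ × E => h (p.1, p.2.2)) q := by
    have h1 : ContinuousAt h (q.1, q.2.2) :=
      hh.continuousAt ((isOpen_univ.prod hUopen).mem_nhds ⟨trivial, hq⟩)
    exact Filter.Tendsto.comp h1 (continuous_fst.continuousAt.prodMk hz)
  have hμ : ContinuousAt (fun p : ℝ × ℝ × E => p.2.1) q := continuous_snd.fst.continuousAt
  have hvf : ContinuousAt (fun p : ℝ × ℝ × E => a p.1 • f p.2.2 + p.2.1 • h (p.1, p.2.2)) q :=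
    (hac.smul hfc).add (hμ.smul hhc)
  have hfd : ContinuousAt (fun p : ℝ × ℝ × E => fderiv ℝ g p.2.2) q :=
    Filter.Tendsto.comp ((hg.continuousOn_fderiv_of_isOpen hUopen (by simp)).continuousAt (hUopen.mem_nhds hq)) hz
  have hcompR : Continuous fun (L : E →L[ℝ] (Fin s → ℝ)) =>
      L.comp (ContinuousLinearMap.inr ℝ (Fin k → ℝ) (Fin s → ℝ)) :=
    ((ContinuousLinearMap.compL ℝ (Fin s → ℝ) E (Fin s → ℝ)).flip
      (ContinuousLinearMap.inr ℝ (Fin k → ℝ) (Fin s → ℝ))).continuous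
  have hcompL : Continuous fun (L : E →L[ℝ] (Fin s → ℝ)) =>
      L.comp (ContinuousLinearMap.inl ℝ (Fin k → ℝ) (Fin s → ℝ)) :=
    ((ContinuousLinearMap.compL ℝ (Fin k → ℝ) E (Fin s → ℝ)).flip
      (ContinuousLinearMap.inl ℝ (Fin k → ℝ) (Fin s → ℝ))).continuous
  have hB : ContinuousAt (fun p : ℝ × ℝ × E =>
      (fderiv ℝ g p.2.2).comp (ContinuousLinearMap.inr ℝ (Fin k → ℝ) (Fin s → ℝ))) q :=
    Filter.Tendsto.comp hcompR.continuousAt hfd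
  have hA : ContinuousAt (fun p : ℝ × ℝ × E =>
      (fderiv ℝ g p.2.2).comp (ContinuousLinearMap.inl ℝ (Fin k → ℝ) (Fin s → ℝ))) q :=
    Filter.Tendsto.comp hcompL.continuousAt hfd
  have hBinv : ContinuousAt (fun p : ℝ × ℝ × E => Ring.inverse
      ((fderiv ℝ g p.2.2).comp (ContinuousLinearMap.inr ℝ (Fin k → ℝ) (Fin s → ℝ)))) q := by
    have hu := hinv _ hq
    have := NormedRing.inverse_continuousAt hu.unit
    rw [hu.unit_spec] at this
    exact Filter.Tendsto.comp this hB
  have happly : ∀ {F G : Type} [inst : NormedAddCommGroup F] [inst2 : NormedSpace ℝ F]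
      [inst3 : NormedAddCommGroup G] [inst4 : NormedSpace ℝ G]
      {φ : ℝ × ℝ × E → (F →L[ℝ] G)} {v : ℝ × ℝ × E → F},
      ContinuousAt φ q → ContinuousAt v q → ContinuousAt (fun p => φ p (v p)) q := by
    intro F G _ _ _ _ φ v hφ hv
    exact Filter.Tendsto.comp isBoundedBilinearMap_apply.continuous.continuousAt (hφ.prodMk hv)
  exact hvf.prodMk ((happly hBinv (happly hA hvf)).neg)


theorem sol_deriv_eq {U : Set E} (hUopen : IsOpen U)
    {g : E → (Fin s → ℝ)} (hg : ContDiffOn ℝ (⊤ : ℕ∞) g U)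
    (hinv : ∀ z ∈ U, IsUnit
      ((fderiv ℝ g z).comp (ContinuousLinearMap.inr ℝ (Fin k → ℝ) (Fin s → ℝ))))
    {f : E → (Fin k → ℝ)} {a : ℝ → ℝ} {h : ℝ × E → (Fin k → ℝ)} {lam : ℝ}
    {u v : ℝ → E} (huU : ∀ t, u t ∈ U) (hud : ∀ t, HasDerivAt u (v t) t)
    (hg0 : ∀ t, g (u t) = 0)
    (heq : ∀ t, (v t).1 = a t • f (u t) + lam • h (t, u t)) (t : ℝ) :
    v t = Phi g f a h (t, lam, u t) := by
  set z := u t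
  set B := (fderiv ℝ g z).comp (ContinuousLinearMap.inr ℝ (Fin k → ℝ) (Fin s → ℝ)) with hBdef
  set A := (fderiv ℝ g z).comp (ContinuousLinearMap.inl ℝ (Fin k → ℝ) (Fin s → ℝ)) with hAdef
  have hgd : HasFDerivAt g (fderiv ℝ g z) z :=
    ((hg.differentiableOn (by simp)).differentiableAt (hUopen.mem_nhds (huU t))).hasFDerivAt
  have hchain : HasDerivAt (fun τ => g (u τ)) (fderiv ℝ g z (v t)) t :=
    hgd.comp_hasDerivAt t (hud t)
  have hzero : fderiv ℝ g z (v t) = 0 := by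
    have hconst : (fun τ => g (u τ)) = fun _ => (0 : Fin s → ℝ) := funext fun τ => hg0 τ
    rw [hconst] at hchain
    exact hchain.unique (hasDerivAt_const t 0)
  have hAB : A (v t).1 + B (v t).2 = 0 := by rw [← fderiv_split]; exact hzero
  have hBy : B (v t).2 = -(A (v t).1) := by linear_combination (norm := abel) hAB
  have hunit := hinv z (huU t)
  have hcancel : Ring.inverse B (B (v t).2) = (v t).2 := by
    have h1 : (Ring.inverse B * B) (v t).2 = (v t).2 := by
      rw [Ring.inverse_mul_cancel _ hunit]; rfl
    simpa [ContinuousLinearMap.mul_apply] using h1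
  have hy : (v t).2 = -(Ring.inverse B (A (v t).1)) := by
    rw [← hcancel, hBy, map_neg]
  have : v t = ((v t).1, (v t).2) := rfl
  rw [Phi]
  refine Prod.ext ?_ ?_
  · exact heq t
  · show (v t).2 = _
    rw [hy, heq t]
end

def IsTPSol {k s : ℕ} (U : Set ((Fin k → ℝ) × (Fin s → ℝ)))
    (g : (Fin k → ℝ) × (Fin s → ℝ) → (Fin s → ℝ))
    (f : (Fin k → ℝ) × (Fin s → ℝ) → (Fin k → ℝ))
    (a : ℝ → ℝ) (h : ℝ × ((Fin k → ℝ) × (Fin s → ℝ)) → (Fin k → ℝ))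
    (T lam : ℝ)
    (u : BoundedContinuousFunction ℝ ((Fin k → ℝ) × (Fin s → ℝ))) : Prop :=
  Function.Periodic (fun t => u t) T ∧ (∀ t : ℝ, u t ∈ U) ∧
  ∃ u' : ℝ → (Fin k → ℝ) × (Fin s → ℝ), Continuous u' ∧
    (∀ t : ℝ, HasDerivAt (fun τ => u τ) (u' t) t) ∧
    ∀ t : ℝ, (u' t).1 = a t • f (u t) + lam • h (t, u t) ∧ g (u t) = 0

def TPairs {k s : ℕ} (U : Set ((Fin k → ℝ) × (Fin s → ℝ)))
    (g : (Fin k → ℝ) × (Fin s → ℝ) → (Fin s → ℝ))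
    (f : (Fin k → ℝ) × (Fin s → ℝ) → (Fin k → ℝ))
    (a : ℝ → ℝ) (h : ℝ × ((Fin k → ℝ) × (Fin s → ℝ)) → (Fin k → ℝ))
    (T : ℝ) :
    Set (ℝ × BoundedContinuousFunction ℝ ((Fin k → ℝ) × (Fin s → ℝ))) :=
  {P | 0 ≤ P.1 ∧ IsTPSol U g f a h T P.1 P.2}

set_option synthInstance.maxHeartbeats 1000000 in
/-- If `M = g⁻¹(0)` is closed in `ℝᵏ×ℝˢ`, then the set of `T`-periodic pairs of the DAE is
closed in `ℝ × C_T(ℝᵏ×ℝˢ)`. -/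
theorem stmt11 {k s : ℕ}
    (U : Set ((Fin k → ℝ) × (Fin s → ℝ))) (hUopen : IsOpen U) (hUconn : IsConnected U)
    (g : (Fin k → ℝ) × (Fin s → ℝ) → (Fin s → ℝ)) (hg : ContDiffOn ℝ (⊤ : ℕ∞) g U)
    (hinv : ∀ z ∈ U, IsUnit
      ((fderiv ℝ g z).comp (ContinuousLinearMap.inr ℝ (Fin k → ℝ) (Fin s → ℝ))))
    (hM : IsClosed {z | z ∈ U ∧ g z = 0})
    (f : (Fin k → ℝ) × (Fin s → ℝ) → (Fin k → ℝ)) (hf : ContDiffOn ℝ 1 f U)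
    (T : ℝ) (hT : 0 < T)
    (a : ℝ → ℝ) (ha : Continuous a) (haT : Function.Periodic a T)
    (havg : (1 / T) * ∫ t in (0:ℝ)..T, a t = 1)
    (h : ℝ × ((Fin k → ℝ) × (Fin s → ℝ)) → (Fin k → ℝ))
    (hh : ContinuousOn h (Set.univ ×ˢ U))
    (hhT : ∀ (t : ℝ), ∀ z ∈ U, h (t + T, z) = h (t, z))
    (hhlip : ∀ (t₀ : ℝ), ∀ z₀ ∈ U, ∃ ε > (0:ℝ), ∃ K : NNReal,
      ∀ t : ℝ, |t - t₀| < ε →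
        LipschitzOnWith K (fun z => h (t, z)) (Metric.ball z₀ ε ∩ U)) :
    IsClosed (TPairs U g f a h T) := by
  apply IsSeqClosed.isClosed
  intro P p hP hPp
  set lam := p.1 with hlam
  set u := p.2 with hu
  have hltend : Filter.Tendsto (fun n => (P n).1) Filter.atTop (nhds lam) :=
    (continuous_fst.tendsto p).comp hPp
  have hutend : Filter.Tendsto (fun n => (P n).2) Filter.atTop (nhds u) :=
    (continuous_snd.tendsto p).comp hPp
  have huu : TendstoUniformly (fun n t => (P n).2 t) (fun t => u t) Filter.atTop :=
    BoundedContinuousFunction.tendsto_iff_tendstoUniformly.mp hutend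
  have hptw : ∀ t, Filter.Tendsto (fun n => (P n).2 t) Filter.atTop (nhds (u t)) :=
    fun t => huu.tendsto_at t
  have hper : ∀ n, Function.Periodic (fun t => (P n).2 t) T := fun n => (hP n).2.1
  have hmemU : ∀ n t, (P n).2 t ∈ U := fun n t => (hP n).2.2.1 t
  choose w hwc hwderiv hweq using fun n => (hP n).2.2.2
  -- limits stay in M
  have hMmem : ∀ t, u t ∈ U ∧ g (u t) = 0 := fun t =>
    hM.mem_of_tendsto (hptw t)
      (Filter.Eventually.of_forall fun n => ⟨hmemU n t, (hweq n t).2⟩)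
  -- derivative of each solution equals Phi
  have hwΦ : ∀ n t, w n t = Phi g f a h (t, (P n).1, (P n).2 t) := fun n t =>
    sol_deriv_eq hUopen hg hinv (hmemU n) (hwderiv n) (fun τ => (hweq n τ).2)
      (fun τ => (hweq n τ).1) t
  -- candidate limit derivative
  set v : ℝ → (Fin k → ℝ) × (Fin s → ℝ) := fun t => Phi g f a h (t, lam, u t) with hv
  have htriple : Continuous fun t : ℝ => ((t, lam, u t) : ℝ × ℝ × _) :=
    continuous_id.prodMk (continuous_const.prodMk u.continuous)
  have hvcont : Continuous v := by
    rw [continuous_iff_continuousAt]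
    intro t
    exact Filter.Tendsto.comp
      (phi_contAt hUopen hg hinv hf.continuousOn ha hh (t, lam, u t) (hMmem t).1)
      htriple.continuousAt
  -- the derivative statement at each point
  have hderiv : ∀ t₀ : ℝ, HasDerivAt (fun τ => u τ) (v t₀) t₀ := by
    intro t₀
    set I : Set ℝ := Set.Icc (t₀ - 2) (t₀ + 2) with hI
    have hIc : IsCompact I := isCompact_Icc
    have hKu : IsCompact (⇑u '' I) := hIc.image u.continuous
    have hKuU : ⇑u '' I ⊆ U := by rintro _ ⟨t, _, rfl⟩; exact (hMmem t).1
    obtain ⟨r, hr, hrsub⟩ := hKu.exists_cthickening_subset_open hUopen hKuU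
    set K := Metric.cthickening r (⇑u '' I) with hK
    have hKc : IsCompact K := hKu.cthickening
    set K' : Set (ℝ × ℝ × ((Fin k → ℝ) × (Fin s → ℝ))) :=
      I ×ˢ (Set.Icc (lam - 1) (lam + 1) ×ˢ K) with hK'
    have hK'c : IsCompact K' := hIc.prod (isCompact_Icc.prod hKc)
    have hK'U : ∀ q ∈ K', q.2.2 ∈ U := fun q hq => hrsub hq.2.2
    have hucK : UniformContinuousOn (Phi g f a h) K' :=
      hK'c.uniformContinuousOn_of_continuous fun q hq =>
        (phi_contAt hUopen hg hinv hf.continuousOn ha hh q (hK'U q hq)).continuousWithinAt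
    rw [Metric.uniformContinuousOn_iff] at hucK
    have htuo : TendstoUniformlyOn (fun n t => Phi g f a h (t, (P n).1, (P n).2 t))
        (fun t => Phi g f a h (t, lam, u t)) Filter.atTop (Metric.ball t₀ 1) := by
      rw [Metric.tendstoUniformlyOn_iff]
      intro ε hε
      obtain ⟨δ, hδ, hδ'⟩ := hucK ε hε
      have e1 : ∀ᶠ n in Filter.atTop, dist (P n).1 lam < min δ 1 :=
        hltend (Metric.ball_mem_nhds lam (lt_min hδ one_pos))
      have e2 : ∀ᶠ n in Filter.atTop, ∀ t, dist (u t) ((P n).2 t) < min δ r :=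
        Metric.tendstoUniformly_iff.mp huu (min δ r) (lt_min hδ hr)
      filter_upwards [e1, e2] with n h1 h2 t ht
      have htI : t ∈ I := by
        have := Metric.mem_ball.mp ht
        rw [Real.dist_eq] at this
        constructor <;> [linarith [abs_lt.mp this] ; linarith [abs_lt.mp this]]
      have hmem1 : ((t, lam, u t) : ℝ × ℝ × _) ∈ K' :=
        ⟨htI, ⟨by constructor <;> linarith, Metric.self_subset_cthickening _ ⟨t, htI, rfl⟩⟩⟩
      have hmem2 : ((t, (P n).1, (P n).2 t) : ℝ × ℝ × _) ∈ K' := by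
        refine ⟨htI, ⟨?_, ?_⟩⟩
        · have := abs_lt.mp (lt_of_lt_of_le (Real.dist_eq _ _ ▸ h1) (min_le_right _ _))
          constructor <;> linarith
        · exact Metric.mem_cthickening_of_dist_le _ (u t) r _ ⟨t, htI, rfl⟩
            (le_of_lt (lt_of_lt_of_le (dist_comm (u t) ((P n).2 t) ▸ h2 t) (min_le_right _ _)))
      have hdd : dist ((t, lam, u t) : ℝ × ℝ × _) ((t, (P n).1, (P n).2 t) : ℝ × ℝ × _) < δ := by
        rw [Prod.dist_eq, Prod.dist_eq]
        refine max_lt (by simpa using hδ) (max_lt ?_ ?_)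
        · exact lt_of_lt_of_le (dist_comm lam (P n).1 ▸ h1) (min_le_left _ _)
        · exact lt_of_lt_of_le (h2 t) (min_le_left _ _)
      exact hδ' _ hmem1 _ hmem2 hdd
    have := hasDerivAt_of_tendstoUniformlyOn Metric.isOpen_ball htuo
      (Filter.Eventually.of_forall fun n x _ => (hwΦ n x) ▸ hwderiv n x)
      (fun x _ => hptw x) (Metric.mem_ball_self one_pos)
    exact this
  refine ⟨ge_of_tendsto' hltend fun n => (hP n).1, ?_, fun t => (hMmem t).1, v, hvcont, hderiv,
    fun t => ⟨rfl, (hMmem t).2⟩⟩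
  intro t
  exact tendsto_nhds_unique (hptw (t + T)) ((hptw t).congr fun n => (hper n t).symm)
end

section
/- Assume M := g⁻¹(0) is closed in ℝᵏ×ℝˢ. Then every bounded subset of the set X of T-periodic pairs of the DAE is relatively compact in ℝ × C_T(ℝᵏ×ℝˢ); in particular, every closed bounded subset of X is compact. -/
open Set Metric

/-- Arzelà–Ascoli style total boundedness: a family of `T`-periodic uniformly
Lipschitz bounded continuous functions with values in a compact set is totally bounded. -/
lemma totallyBounded_of_periodic_lipschitz {E : Type*} [NormedAddCommGroup E]
    {K : Set E} (hK : IsCompact K) {T C : ℝ} (hT : 0 < T) (hC : 0 ≤ C)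
    {F : Set (BoundedContinuousFunction ℝ E)}
    (hmem : ∀ u ∈ F, ∀ t : ℝ, u t ∈ K)
    (hper : ∀ u ∈ F, Function.Periodic (fun t => u t) T)
    (hlip : ∀ u ∈ F, ∀ t t' : ℝ, dist (u t) (u t') ≤ C * |t - t'|) :
    TotallyBounded F := by
  rw [Metric.totallyBounded_iff]
  intro ε hε
  obtain ⟨n, hn⟩ := exists_nat_gt (4 * C * T / ε)
  set m : ℕ := n + 1 with hm
  have hmpos : (0:ℝ) < m := by positivity
  have hgrid : C * (T / m) ≤ ε / 4 := by
    have hm' : 4 * C * T / ε < m := lt_of_le_of_lt (le_of_lt hn) (by exact_mod_cast Nat.lt_succ_self n)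
    have h1 : 4 * C * T < ε * m := by
      rw [div_lt_iff₀ hε] at hm'
      linarith
    have h2 : C * (T / ↑m) = C * T / ↑m := by ring
    rw [h2, div_le_div_iff₀ hmpos (by norm_num : (0:ℝ) < 4)]
    nlinarith
  -- the sampling map
  set Φ : BoundedContinuousFunction ℝ E → (Fin (m + 1) → E) :=
    fun u i => u ((i : ℕ) * T / m) with hΦ
  have hΦK : Φ '' F ⊆ Set.pi Set.univ (fun _ => K) := by
    rintro - ⟨u, huF, rfl⟩ i -
    exact hmem u huF _
  have hTB : TotallyBounded (Φ '' F) :=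
    TotallyBounded.subset hΦK (isCompact_univ_pi fun _ => hK).totallyBounded
  have hε4 : (0:ℝ) < ε / 4 := by positivity
  obtain ⟨t, htsub, htfin, htcover⟩ :=
    totallyBounded_iff_subset.mp hTB _ (Metric.dist_mem_uniformity hε4)
  haveI : Nonempty (BoundedContinuousFunction ℝ E) := ⟨0⟩
  refine ⟨(fun y => Function.invFunOn Φ F y) '' t, htfin.image _, ?_⟩
  intro u huF
  have hu' : Φ u ∈ ⋃ y ∈ t, { x | (x, y) ∈ {p : (Fin (m+1) → E) × (Fin (m+1) → E) | dist p.1 p.2 < ε / 4} } :=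
    htcover ⟨u, huF, rfl⟩
  simp only [Set.mem_iUnion, Set.mem_setOf_eq] at hu'
  obtain ⟨y, hyt, hdy⟩ := hu'
  have hyim : ∃ a ∈ F, Φ a = y := by
    obtain ⟨w, hwF, hwy⟩ := htsub hyt
    exact ⟨w, hwF, hwy⟩
  set v : BoundedContinuousFunction ℝ E := Function.invFunOn Φ F y with hv
  have hvF : v ∈ F := Function.invFunOn_mem hyim
  have hvy : Φ v = y := Function.invFunOn_eq hyim
  refine Set.mem_iUnion₂.2 ⟨v, Set.mem_image_of_mem _ hyt, ?_⟩
  rw [Metric.mem_ball]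
  have key : dist u v ≤ 3 * ε / 4 := by
    rw [BoundedContinuousFunction.dist_le (by positivity)]
    intro t₀
    -- reduce to the fundamental domain
    set q : ℤ := ⌊t₀ / T⌋ with hq
    set t' : ℝ := t₀ - q * T with ht'
    have ht'0 : 0 ≤ t' := Int.sub_floor_div_mul_nonneg t₀ hT
    have ht'T : t' < T := Int.sub_floor_div_mul_lt t₀ hT
    have hured : u t' = u t₀ := by
      have := (hper u huF).sub_zsmul_eq q (x := t₀)
      simpa [zsmul_eq_mul] using this
    have hvred : v t' = v t₀ := by
      have := (hper v hvF).sub_zsmul_eq q (x := t₀)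
      simpa [zsmul_eq_mul] using this
    -- the grid point
    set i0 : ℕ := ⌊t' * m / T⌋₊ with hi0
    have hi0lt : i0 < m + 1 := by
      have h1 : t' * m / T < m := by
        rw [div_lt_iff₀ hT]
        have := mul_lt_mul_of_pos_right ht'T hmpos
        nlinarith
      have h2 : i0 < m := (Nat.floor_lt (by positivity : (0:ℝ) ≤ t' * ↑m / T)).2 h1
      omega
    set i : Fin (m + 1) := ⟨i0, hi0lt⟩ with hi
    set gi : ℝ := i0 * T / m with hgi
    have hfloor : (i0 : ℝ) ≤ t' * ↑m / T := Nat.floor_le (by positivity)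
    have hfl : t' * ↑m / T < i0 + 1 := Nat.lt_floor_add_one _
    have hTne : T ≠ 0 := ne_of_gt hT
    have hle1 : gi ≤ t' := by
      rw [hgi, div_le_iff₀ hmpos]
      have h4 := mul_le_mul_of_nonneg_right hfloor (le_of_lt hT)
      rw [div_mul_cancel₀ _ hTne] at h4
      exact h4
    have hle2 : t' - gi ≤ T / ↑m := by
      have h5 : t' * ↑m < ((i0 : ℝ) + 1) * T := by
        rw [div_lt_iff₀ hT] at hfl
        exact hfl
      rw [hgi, sub_le_iff_le_add]
      have h6 : (i0 : ℝ) * T / ↑m + T / ↑m = ((i0 : ℝ) + 1) * T / ↑m := by ring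
      rw [add_comm, h6, le_div_iff₀ hmpos]
      linarith
    have habs : |t' - gi| ≤ T / m := by
      rw [abs_of_nonneg (by linarith)]
      exact hle2
    have hd1 : dist (u t') (u gi) ≤ ε / 4 := by
      calc dist (u t') (u gi) ≤ C * |t' - gi| := hlip u huF _ _
        _ ≤ C * (T / m) := by
            apply mul_le_mul_of_nonneg_left habs hC
        _ ≤ ε / 4 := hgrid
    have hd3 : dist (v gi) (v t') ≤ ε / 4 := by
      calc dist (v gi) (v t') ≤ C * |gi - t'| := hlip v hvF _ _
        _ ≤ C * (T / m) := by
            rw [abs_sub_comm]; exact mul_le_mul_of_nonneg_left habs hC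
        _ ≤ ε / 4 := hgrid
    have hd2 : dist (u gi) (v gi) < ε / 4 := by
      have h1 : dist (Φ u i) (Φ v i) ≤ dist (Φ u) (Φ v) := dist_le_pi_dist _ _ _
      have h2 : Φ u i = u gi := by simp [hΦ, hi, hgi]
      have h3 : Φ v i = v gi := by simp [hΦ, hi, hgi]
      rw [h2, h3] at h1
      calc dist (u gi) (v gi) ≤ dist (Φ u) (Φ v) := h1
        _ = dist (Φ u) y := by rw [hvy]
        _ < ε / 4 := hdy
    calc dist (u t₀) (v t₀) = dist (u t') (v t') := by rw [hured, hvred]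
      _ ≤ dist (u t') (u gi) + dist (u gi) (v gi) + dist (v gi) (v t') := dist_triangle4 _ _ _ _
      _ ≤ ε / 4 + ε / 4 + ε / 4 := by
          refine add_le_add (add_le_add hd1 (le_of_lt hd2)) hd3
      _ = 3 * ε / 4 := by ring
  linarith


/-- If `M = g⁻¹(0)` is closed in `ℝᵏ×ℝˢ`, then every bounded subset of the set of
`T`-periodic pairs of the DAE is relatively compact in `ℝ × C_T(ℝᵏ×ℝˢ)`; in particular,
every closed bounded subset is compact. -/
theorem stmt12 {k s : ℕ}
    (U : Set ((Fin k → ℝ) × (Fin s → ℝ))) (hUopen : IsOpen U) (hUconn : IsConnected U)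
    (g : (Fin k → ℝ) × (Fin s → ℝ) → (Fin s → ℝ)) (hg : ContDiffOn ℝ (⊤ : ℕ∞) g U)
    (hinv : ∀ z ∈ U, IsUnit
      ((fderiv ℝ g z).comp (ContinuousLinearMap.inr ℝ (Fin k → ℝ) (Fin s → ℝ))))
    (hM : IsClosed {z | z ∈ U ∧ g z = 0})
    (f : (Fin k → ℝ) × (Fin s → ℝ) → (Fin k → ℝ)) (hf : ContDiffOn ℝ 1 f U)
    (T : ℝ) (hT : 0 < T)
    (a : ℝ → ℝ) (ha : Continuous a) (haT : Function.Periodic a T)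
    (havg : (1 / T) * ∫ t in (0:ℝ)..T, a t = 1)
    (h : ℝ × ((Fin k → ℝ) × (Fin s → ℝ)) → (Fin k → ℝ))
    (hh : ContinuousOn h (Set.univ ×ˢ U))
    (hhT : ∀ (t : ℝ), ∀ z ∈ U, h (t + T, z) = h (t, z))
    (hhlip : ∀ (t₀ : ℝ), ∀ z₀ ∈ U, ∃ ε > (0:ℝ), ∃ K : NNReal,
      ∀ t : ℝ, |t - t₀| < ε →
        LipschitzOnWith K (fun z => h (t, z)) (Metric.ball z₀ ε ∩ U)) :
    (∀ S ⊆ TPairs U g f a h T, Bornology.IsBounded S → IsCompact (closure S)) ∧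
    (∀ S ⊆ TPairs U g f a h T, IsClosed S → Bornology.IsBounded S → IsCompact S) := by
  have main : ∀ S ⊆ TPairs U g f a h T, Bornology.IsBounded S → IsCompact (closure S) := by
    intro S hS hSb
    obtain ⟨R, hR⟩ := isBounded_iff_forall_norm_le.mp hSb
    -- basic bounds for elements of S
    have hlam : ∀ p ∈ S, |p.1| ≤ R := by
      intro p hp
      have hthis := hR p hp
      rw [Prod.norm_def] at hthis
      have h1 : ‖p.1‖ ≤ R := le_trans (le_max_left _ _) hthis
      rwa [Real.norm_eq_abs] at h1
    have hunorm : ∀ p ∈ S, ‖p.2‖ ≤ R := by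
      intro p hp
      have := hR p hp
      rw [Prod.norm_def] at this
      exact le_trans (le_max_right _ _) this
    -- the compact set K where the solutions live
    set K : Set ((Fin k → ℝ) × (Fin s → ℝ)) :=
      {z | z ∈ U ∧ g z = 0} ∩ Metric.closedBall 0 R with hKdef
    have hKcl : IsClosed K := hM.inter Metric.isClosed_closedBall
    have hKcpt : IsCompact K := isCompact_of_isClosed_isBounded hKcl
      (Metric.isBounded_closedBall.subset Set.inter_subset_right)
    have hKU : K ⊆ U := fun z hz => hz.1.1
    have hmemK : ∀ p ∈ S, ∀ t : ℝ, p.2 t ∈ K := by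
      intro p hp t
      obtain ⟨hl0, hper, hmemU, u', hu'c, hu'd, hu'eq⟩ := hS hp
      refine ⟨⟨hmemU t, (hu'eq t).2⟩, ?_⟩
      rw [Metric.mem_closedBall, dist_zero_right]
      exact le_trans (BoundedContinuousFunction.norm_coe_le_norm p.2 t) (hunorm p hp)
    -- bounds for a, f, h
    obtain ⟨Ca, hCa⟩ := (isCompact_Icc (a := (0:ℝ)) (b := T)).exists_bound_of_continuousOn
      ha.continuousOn
    have hCa' : ∀ t : ℝ, |a t| ≤ max Ca 0 := by
      intro t
      obtain ⟨y, hy, hay⟩ := haT.exists_mem_Ico₀ hT t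
      rw [hay]
      exact le_trans (hCa y (Set.Ico_subset_Icc_self hy)) (le_max_left _ _)
    obtain ⟨Cf, hCf⟩ := hKcpt.exists_bound_of_continuousOn (hf.continuousOn.mono hKU)
    obtain ⟨Ch, hCh⟩ := ((isCompact_Icc (a := (0:ℝ)) (b := T)).prod hKcpt).exists_bound_of_continuousOn
      (hh.mono (Set.prod_mono (Set.subset_univ _) hKU))
    have hCh' : ∀ t : ℝ, ∀ z ∈ K, ‖h (t, z)‖ ≤ max Ch 0 := by
      intro t z hz
      have hzper : Function.Periodic (fun τ => h (τ, z)) T := fun τ => hhT τ z (hKU hz)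
      obtain ⟨y, hy, hay⟩ := hzper.exists_mem_Ico₀ hT t
      rw [hay]
      exact le_trans (hCh (y, z) ⟨Set.Ico_subset_Icc_self hy, hz⟩) (le_max_left _ _)
    -- bound for the inverse of the partial differential
    set B : ((Fin k → ℝ) × (Fin s → ℝ)) → ℝ := fun z =>
      ‖Ring.inverse ((fderiv ℝ g z).comp (ContinuousLinearMap.inr ℝ (Fin k → ℝ) (Fin s → ℝ)))‖ *
        ‖fderiv ℝ g z‖ with hBdef
    have hBcont : ContinuousOn B U := by
      have hfd : ContinuousOn (fderiv ℝ g) U := hg.continuousOn_fderiv_of_isOpen hUopen (by simp)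
      intro z hz
      have h1 : ContinuousAt (fderiv ℝ g) z := hfd.continuousAt (hUopen.mem_nhds hz)
      have h2 : ContinuousAt (fun w => (fderiv ℝ g w).comp
          (ContinuousLinearMap.inr ℝ (Fin k → ℝ) (Fin s → ℝ))) z := by
        exact (((ContinuousLinearMap.compL ℝ (Fin s → ℝ) ((Fin k → ℝ) × (Fin s → ℝ))
          (Fin s → ℝ)).flip (ContinuousLinearMap.inr ℝ (Fin k → ℝ) (Fin s → ℝ))).continuous.continuousAt).comp h1
      have h3 : ContinuousAt (fun w => Ring.inverse ((fderiv ℝ g w).comp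
          (ContinuousLinearMap.inr ℝ (Fin k → ℝ) (Fin s → ℝ)))) z := by
        have hx := NormedRing.inverse_continuousAt (hinv z hz).unit
        rw [IsUnit.unit_spec] at hx
        exact ContinuousAt.comp (x := z) hx h2
      exact ((h3.norm.mul h1.norm)).continuousWithinAt
    obtain ⟨CB, hCB⟩ := hKcpt.exists_bound_of_continuousOn (hBcont.mono hKU)
    have hCB' : ∀ z ∈ K, B z ≤ max CB 0 := by
      intro z hz
      exact le_trans (le_trans (le_abs_self _) (hCB z hz)) (le_max_left _ _)
    -- the Lipschitz constant
    set C₁ : ℝ := max Ca 0 * max Cf 0 + max R 0 * max Ch 0 with hC₁def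
    have hC₁ : 0 ≤ C₁ := by positivity
    set C : ℝ := max C₁ (max CB 0 * C₁) with hCdef
    have hC : 0 ≤ C := le_trans hC₁ (le_max_left _ _)
    -- derivative bound
    have hderiv : ∀ p ∈ S, ∀ t t' : ℝ, dist (p.2 t) (p.2 t') ≤ C * |t - t'| := by
      rintro ⟨lam, u⟩ hp t t'
      obtain ⟨hl0, hper, hmemU, u', hu'c, hu'd, hu'eq⟩ := hS hp
      have hbound : ∀ τ : ℝ, ‖u' τ‖ ≤ C := by
        intro τ
        have hzK : u τ ∈ K := hmemK _ hp τ
        have hzU : u τ ∈ U := hKU hzK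
        -- bound on the first component
        have hb1 : ‖(u' τ).1‖ ≤ C₁ := by
          rw [(hu'eq τ).1]
          have hlamR : |lam| ≤ max R 0 := by
            have hll := hlam _ hp
            exact le_trans hll (le_max_left _ _)
          calc ‖a τ • f (u τ) + lam • h (τ, u τ)‖
              ≤ ‖a τ • f (u τ)‖ + ‖lam • h (τ, u τ)‖ := norm_add_le _ _
            _ = |a τ| * ‖f (u τ)‖ + |lam| * ‖h (τ, u τ)‖ := by
                rw [norm_smul, norm_smul, Real.norm_eq_abs, Real.norm_eq_abs]
            _ ≤ max Ca 0 * max Cf 0 + max R 0 * max Ch 0 := by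
                have e1 := hCa' τ
                have e2 : ‖f (u τ)‖ ≤ max Cf 0 := le_trans (hCf _ hzK) (le_max_left _ _)
                have e3 := hCh' τ _ hzK
                exact add_le_add
                  (mul_le_mul e1 e2 (norm_nonneg _) (le_max_right _ _))
                  (mul_le_mul hlamR e3 (norm_nonneg _) (le_max_right _ _))
            _ = C₁ := rfl
        -- bound on the second component via the implicit relation
        have hdiffg : DifferentiableAt ℝ g (u τ) :=
          (hg.contDiffAt (hUopen.mem_nhds hzU)).differentiableAt (by simp)
        have hcomp : HasDerivAt (fun σ => g (u σ)) (fderiv ℝ g (u τ) (u' τ)) τ :=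
          hdiffg.hasFDerivAt.comp_hasDerivAt τ (hu'd τ)
        have hconst : (fun σ => g (u σ)) = fun _ => (0 : Fin s → ℝ) :=
          funext fun σ => (hu'eq σ).2
        rw [hconst] at hcomp
        have h0 : fderiv ℝ g (u τ) (u' τ) = 0 := hcomp.unique (hasDerivAt_const _ _)
        set A := (fderiv ℝ g (u τ)).comp (ContinuousLinearMap.inr ℝ (Fin k → ℝ) (Fin s → ℝ))
          with hAdef
        have hAunit : IsUnit A := hinv _ hzU
        have hsplit : u' τ = ((u' τ).1, (0 : Fin s → ℝ)) + ((0 : Fin k → ℝ), (u' τ).2) := by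
          simp
        have hA2 : A (u' τ).2 = - fderiv ℝ g (u τ) ((u' τ).1, (0 : Fin s → ℝ)) := by
          have := h0
          rw [hsplit, map_add] at this
          have hinr : A (u' τ).2 = fderiv ℝ g (u τ) ((0 : Fin k → ℝ), (u' τ).2) := by
            simp [hAdef]
          rw [hinr]
          exact eq_neg_of_add_eq_zero_right this
        have hb2 : ‖(u' τ).2‖ ≤ max CB 0 * C₁ := by
          have hv2 : (u' τ).2 = Ring.inverse A (A (u' τ).2) := by
            have hm := Ring.inverse_mul_cancel A hAunit
            have := congrArg (fun (L : (Fin s → ℝ) →L[ℝ] (Fin s → ℝ)) => L (u' τ).2) hm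
            simpa [ContinuousLinearMap.mul_apply] using this.symm
          have hnormv1 : ‖((u' τ).1, (0 : Fin s → ℝ))‖ = ‖(u' τ).1‖ := by
            rw [Prod.norm_def]
            simp [norm_nonneg]
          calc ‖(u' τ).2‖ = ‖Ring.inverse A (A (u' τ).2)‖ := by rw [← hv2]
            _ ≤ ‖Ring.inverse A‖ * ‖A (u' τ).2‖ := (Ring.inverse A).le_opNorm _
            _ = ‖Ring.inverse A‖ * ‖fderiv ℝ g (u τ) ((u' τ).1, (0 : Fin s → ℝ))‖ := by
                rw [hA2, norm_neg]
            _ ≤ ‖Ring.inverse A‖ * (‖fderiv ℝ g (u τ)‖ * ‖((u' τ).1, (0 : Fin s → ℝ))‖) := by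
                gcongr
                exact (fderiv ℝ g (u τ)).le_opNorm _
            _ = B (u τ) * ‖(u' τ).1‖ := by rw [hnormv1, hBdef]; ring
            _ ≤ max CB 0 * C₁ := mul_le_mul (hCB' _ hzK) hb1 (norm_nonneg _) (le_max_right _ _)
        rw [Prod.norm_def]
        exact max_le (le_trans hb1 (le_max_left _ _))
          (le_trans hb2 (le_max_right _ _))
      have := convex_univ.norm_image_sub_le_of_norm_hasDerivWithin_le
        (fun x _ => (hu'd x).hasDerivWithinAt) (fun x _ => hbound x)
        (Set.mem_univ t') (Set.mem_univ t)
      rw [dist_eq_norm]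
      simpa [Real.norm_eq_abs] using this
    -- totally bounded family of second components
    have hFtb : TotallyBounded (Prod.snd '' S) := by
      refine totallyBounded_of_periodic_lipschitz hKcpt hT hC ?_ ?_ ?_
      · rintro u ⟨p, hp, rfl⟩ t
        exact hmemK p hp t
      · rintro u ⟨p, hp, rfl⟩
        exact (hS hp).2.1
      · rintro u ⟨p, hp, rfl⟩ t t'
        exact hderiv p hp t t'
    have h2 : IsCompact (closure (Prod.snd '' S)) :=
      TotallyBounded.isCompact_of_isClosed hFtb.closure isClosed_closure
    have h1 : IsCompact (closure (Prod.fst '' S)) := by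
      apply isCompact_of_isClosed_isBounded isClosed_closure
      apply Bornology.IsBounded.closure
      rw [isBounded_iff_forall_norm_le]
      refine ⟨R, ?_⟩
      rintro x ⟨p, hp, rfl⟩
      simpa [Real.norm_eq_abs] using hlam p hp
    have hsub : closure S ⊆ closure (Prod.fst '' S) ×ˢ closure (Prod.snd '' S) := by
      rw [← closure_prod_eq]
      apply closure_mono
      intro p hp
      exact ⟨⟨p, hp, rfl⟩, ⟨p, hp, rfl⟩⟩
    exact (h1.prod h2).of_isClosed_subset isClosed_closure hsub
  exact ⟨main, fun S hS hcl hb => (main S hS hb).of_isClosed_subset hcl subset_closure⟩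
end

section
/- Assume M := g⁻¹(0) is closed in ℝᵏ×ℝˢ. Let Ω ⊆ [0,∞) × C_T(U) be open, and let Γ ⊆ [0,∞) × C_T(M) be a connected component of the set of T-periodic pairs of the DAE that meets the set {(0,(p̄,q̄)) ∈ Ω : F(p,q) = (0,0)} and is such that Γ ∩ Ω is not compact. Then Γ cannot be both bounded and contained in Ω. Moreover, if Ω is bounded, then Γ ∩ ∂Ω ≠ ∅, where ∂Ω denotes the boundary of Ω in [0,∞) × C_T(U). -/
/-- The space `[0,∞) × C_T(U)` (as a subset of `ℝ × C_T(ℝᵏ×ℝˢ)`). -/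
def Aset {k s : ℕ} (U : Set ((Fin k → ℝ) × (Fin s → ℝ))) (T : ℝ) :
    Set (ℝ × BoundedContinuousFunction ℝ ((Fin k → ℝ) × (Fin s → ℝ))) :=
  {P | 0 ≤ P.1 ∧ Function.Periodic (fun t => P.2 t) T ∧ ∀ t : ℝ, P.2 t ∈ U}



open BoundedContinuousFunction in
lemma exists_isCompact_superset_periodic_lipschitz
    {E : Type*} [NormedAddCommGroup E] (T : ℝ) (hT : 0 < T)
    (K : Set E) (hK : IsCompact K) (L : NNReal) :
    ∃ C : Set (ℝ →ᵇ E), IsCompact C ∧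
      {u : ℝ →ᵇ E | Function.Periodic (fun t => u t) T ∧ (∀ t, u t ∈ K) ∧
        LipschitzWith L (fun t => u t)} ⊆ C := by
  haveI : Fact (0 < T) := ⟨hT⟩
  set B : Set (AddCircle T →ᵇ E) :=
    {v | (∀ q, v q ∈ K) ∧ LipschitzWith L (fun x : ℝ => v x)} with hB
  have hEq : Equicontinuous ((↑) : B → AddCircle T → E) := by
    intro q
    rw [Metric.equicontinuousAt_iff]
    intro ε hε
    have hL1 : (0:ℝ) < (L:ℝ) + 1 := by positivity
    refine ⟨ε / ((L:ℝ) + 1), by positivity, fun y hy v => ?_⟩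
    obtain ⟨a, rfl⟩ := QuotientAddGroup.mk_surjective q
    have : ‖y - (a : AddCircle T)‖ < ε / ((L:ℝ) + 1) := by
      rw [← dist_eq_norm]; simpa [dist_comm] using hy
    obtain ⟨m, hm, hmlt⟩ := QuotientAddGroup.norm_lt_iff.1 this
    have hy' : y = ((a + m : ℝ) : AddCircle T) := by
      have h2 : ((a + m : ℝ) : AddCircle T) = (a : AddCircle T) + (m : ℝ) := by norm_cast
      rw [h2, hm]; abel
    have hv := v.2.2
    calc dist (v.1 (a : AddCircle T)) (v.1 y)
        = dist ((fun x : ℝ => v.1 x) a) ((fun x : ℝ => v.1 x) (a + m)) := by rw [hy']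
      _ ≤ L * dist a (a + m) := hv.dist_le_mul a (a + m)
      _ = L * ‖m‖ := by rw [dist_eq_norm]; congr 1; simp
      _ < ((L:ℝ) + 1) * (ε / ((L:ℝ) + 1)) :=
          mul_lt_mul' (by linarith [L.coe_nonneg]) hmlt (norm_nonneg _) hL1
      _ = ε := by field_simp
  have hBc : IsCompact (closure B) :=
    BoundedContinuousFunction.arzela_ascoli K hK B (fun v q hv => hv.1 q) hEq
  let mkc : C(ℝ, AddCircle T) := ⟨fun x : ℝ => (x : AddCircle T), AddCircle.continuous_mk' T⟩
  refine ⟨(fun v : AddCircle T →ᵇ E => v.compContinuous mkc) '' closure B,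
    hBc.image (continuous_compContinuous mkc), ?_⟩
  rintro u ⟨hper, hmem, hlip⟩
  have hcont : Continuous (hper.lift) := Continuous.quotient_liftOn' u.continuous _
  let v : AddCircle T →ᵇ E := mkOfCompact ⟨hper.lift, hcont⟩
  have hvB : v ∈ B := by
    constructor
    · intro q
      obtain ⟨x, rfl⟩ := QuotientAddGroup.mk_surjective q
      exact hmem x
    · exact hlip
  refine ⟨v, subset_closure hvB, ?_⟩
  ext x
  rfl

section Main

variable {k s : ℕ}

local notation "Ek" => (Fin k → ℝ)
local notation "Es" => (Fin s → ℝ)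

set_option maxHeartbeats 2000000 in
set_option synthInstance.maxHeartbeats 400000 in
theorem stmt13' {k s : ℕ}
    (U : Set ((Fin k → ℝ) × (Fin s → ℝ))) (hUopen : IsOpen U) (hUconn : IsConnected U)
    (g : (Fin k → ℝ) × (Fin s → ℝ) → (Fin s → ℝ)) (hg : ContDiffOn ℝ (⊤ : ℕ∞) g U)
    (hinv : ∀ z ∈ U, IsUnit
      ((fderiv ℝ g z).comp (ContinuousLinearMap.inr ℝ (Fin k → ℝ) (Fin s → ℝ))))
    (hM : IsClosed {z | z ∈ U ∧ g z = 0})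
    (f : (Fin k → ℝ) × (Fin s → ℝ) → (Fin k → ℝ)) (hf : ContDiffOn ℝ 1 f U)
    (T : ℝ) (hT : 0 < T)
    (a : ℝ → ℝ) (ha : Continuous a) (haT : Function.Periodic a T)
    (havg : (1 / T) * ∫ t in (0:ℝ)..T, a t = 1)
    (h : ℝ × ((Fin k → ℝ) × (Fin s → ℝ)) → (Fin k → ℝ))
    (hh : ContinuousOn h (Set.univ ×ˢ U))
    (hhT : ∀ (t : ℝ), ∀ z ∈ U, h (t + T, z) = h (t, z))
    (Ω : Set (ℝ × BoundedContinuousFunction ℝ ((Fin k → ℝ) × (Fin s → ℝ))))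
    (hΩsub : Ω ⊆ Aset U T)
    (hΩopen : ∃ V, IsOpen V ∧ Ω = V ∩ Aset U T)
    (Γ : Set (ℝ × BoundedContinuousFunction ℝ ((Fin k → ℝ) × (Fin s → ℝ))))
    (P₀ : ℝ × BoundedContinuousFunction ℝ ((Fin k → ℝ) × (Fin s → ℝ)))
    (hP₀ : P₀ ∈ TPairs U g f a h T)
    (hΓ : Γ = connectedComponentIn (TPairs U g f a h T) P₀)
    (hmeet : ∃ z ∈ U, f z = 0 ∧ g z = 0 ∧
      ((0:ℝ), BoundedContinuousFunction.const ℝ z) ∈ Γ ∩ Ω)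
    (hnc : ¬ IsCompact (Γ ∩ Ω)) :
    (¬ (Bornology.IsBounded Γ ∧ Γ ⊆ Ω)) ∧
    (Bornology.IsBounded Ω → (Γ ∩ ((closure Ω ∩ Aset U T) \ Ω)).Nonempty) := by
  have hTPA : TPairs U g f a h T ⊆ Aset U T := by
    rintro P ⟨h0, hper, hmemU, -⟩
    exact ⟨h0, hper, hmemU⟩
  have hΓTP : Γ ⊆ TPairs U g f a h T := hΓ ▸ connectedComponentIn_subset _ _
  have part1 : ¬ (Bornology.IsBounded Γ ∧ Γ ⊆ Ω) := by
    rintro ⟨hbdd, hsub⟩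
    apply hnc
    rw [Set.inter_eq_left.mpr hsub]
    obtain ⟨R, hRsub⟩ := (Metric.isBounded_iff_subset_closedBall 0).1 hbdd
    obtain ⟨z₀, hz₀U, -, -, hz₀m⟩ := hmeet
    have hR0 : 0 ≤ R := by
      have h1 := Metric.mem_closedBall.1 (hRsub hz₀m.1)
      exact le_trans dist_nonneg h1
    have hnorm : ∀ P ∈ Γ, ‖P.1‖ ≤ R ∧ ‖P.2‖ ≤ R := by
      intro P hP
      have h1 := Metric.mem_closedBall.1 (hRsub hP)
      rw [dist_zero_right] at h1
      exact ⟨(norm_fst_le P).trans h1, (norm_snd_le P).trans h1⟩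
    set K : Set ((Fin k → ℝ) × (Fin s → ℝ)) :=
      {z | z ∈ U ∧ g z = 0} ∩ Metric.closedBall 0 R with hKdef
    have hKc : IsCompact K := (isCompact_closedBall (0 : (Fin k → ℝ) × (Fin s → ℝ)) R).inter_left hM
    have hKU : K ⊆ U := fun z hz => hz.1.1
    have hKg : ∀ z ∈ K, g z = 0 := fun z hz => hz.1.2
    have hval : ∀ P ∈ Γ, ∀ t : ℝ, P.2 t ∈ K := by
      intro P hP t
      obtain ⟨-, -, hmemU, u', -, -, heq⟩ := hΓTP hP
      refine ⟨⟨hmemU t, (heq t).2⟩, ?_⟩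
      rw [Metric.mem_closedBall, dist_zero_right]
      exact (P.2.norm_coe_le_norm t).trans (hnorm P hP).2
    -- bounds
    obtain ⟨Ca0, hCa0⟩ :=
      (isCompact_Icc (a := (0:ℝ)) (b := T)).exists_bound_of_continuousOn ha.continuousOn
    set Ca := max Ca0 0 with hCadef
    have hCa : ∀ t : ℝ, ‖a t‖ ≤ Ca := by
      intro t
      obtain ⟨y, hy, hy2⟩ := haT.exists_mem_Ico₀ hT t
      rw [hy2]
      exact le_trans (hCa0 y (Set.Ico_subset_Icc_self hy)) (le_max_left _ _)
    have hCapos : 0 ≤ Ca := le_max_right _ _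
    obtain ⟨Cf0, hCf0⟩ := hKc.exists_bound_of_continuousOn (hf.continuousOn.mono hKU)
    set Cf := max Cf0 0 with hCfdef
    have hCf : ∀ z ∈ K, ‖f z‖ ≤ Cf := fun z hz => le_trans (hCf0 z hz) (le_max_left _ _)
    have hCfpos : 0 ≤ Cf := le_max_right _ _
    obtain ⟨Ch0, hCh0⟩ :=
      ((isCompact_Icc (a := (0:ℝ)) (b := T)).prod hKc).exists_bound_of_continuousOn
        (hh.mono (by rintro ⟨t, z⟩ ⟨ht, hz⟩; exact ⟨trivial, hKU hz⟩))
    set Ch := max Ch0 0 with hChdef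
    have hCh : ∀ (t : ℝ), ∀ z ∈ K, ‖h (t, z)‖ ≤ Ch := by
      intro t z hz
      have hper : Function.Periodic (fun t => h (t, z)) T := fun τ => hhT τ z (hKU hz)
      obtain ⟨y, hy, hy2⟩ := hper.exists_mem_Ico₀ hT t
      calc ‖h (t, z)‖ = ‖h (y, z)‖ := by rw [(by simpa using hy2 : h (t, z) = h (y, z))]
        _ ≤ Ch0 := hCh0 (y, z) ⟨Set.Ico_subset_Icc_self hy, hz⟩
        _ ≤ Ch := le_max_left _ _
    have hChpos : 0 ≤ Ch := le_max_right _ _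
    have hgD : ContinuousOn (fderiv ℝ g) U := hg.continuousOn_fderiv_of_isOpen hUopen (by simp)
    obtain ⟨CD0, hCD0⟩ := hKc.exists_bound_of_continuousOn (hgD.mono hKU)
    set CD := max CD0 0 with hCDdef
    have hCD : ∀ z ∈ K, ‖fderiv ℝ g z‖ ≤ CD := fun z hz => le_trans (hCD0 z hz) (le_max_left _ _)
    have hCDpos : 0 ≤ CD := le_max_right _ _
    set cmap : (((Fin k → ℝ) × (Fin s → ℝ)) →L[ℝ] (Fin s → ℝ)) →L[ℝ]
        ((Fin s → ℝ) →L[ℝ] (Fin s → ℝ)) :=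
      (ContinuousLinearMap.compL ℝ (Fin s → ℝ) ((Fin k → ℝ) × (Fin s → ℝ)) (Fin s → ℝ)).flip
        (ContinuousLinearMap.inr ℝ (Fin k → ℝ) (Fin s → ℝ)) with hcmapdef
    have hcmap_apply : ∀ A : ((Fin k → ℝ) × (Fin s → ℝ)) →L[ℝ] (Fin s → ℝ),
        cmap A = A.comp (ContinuousLinearMap.inr ℝ (Fin k → ℝ) (Fin s → ℝ)) := fun A => rfl
    have hinv' : ∀ z ∈ U, IsUnit (cmap (fderiv ℝ g z)) := by
      intro z hz; rw [hcmap_apply]; exact hinv z hz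
    set invg : ((Fin k → ℝ) × (Fin s → ℝ)) → ((Fin s → ℝ) →L[ℝ] (Fin s → ℝ)) :=
      fun z => Ring.inverse (cmap (fderiv ℝ g z)) with hinvgdef
    have hinvgU : ContinuousOn invg U := by
      intro z hz
      have h1 : ContinuousAt (fderiv ℝ g) z := hgD.continuousAt (hUopen.mem_nhds hz)
      have h2 : ContinuousAt (fun z => cmap (fderiv ℝ g z)) z :=
        cmap.continuous.continuousAt.comp h1
      have hu := hinv' z hz
      have h3 : ContinuousAt (Ring.inverse :
          ((Fin s → ℝ) →L[ℝ] (Fin s → ℝ)) → ((Fin s → ℝ) →L[ℝ] (Fin s → ℝ)))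
          (cmap (fderiv ℝ g z)) := by
        have := NormedRing.inverse_continuousAt hu.unit
        rwa [hu.unit_spec] at this
      have h4 : ContinuousAt (fun z => Ring.inverse (cmap (fderiv ℝ g z))) z :=
        ContinuousAt.comp (g := Ring.inverse) (f := fun z => cmap (fderiv ℝ g z)) h3 h2
      exact h4.continuousWithinAt
    obtain ⟨CI0, hCI0⟩ := hKc.exists_bound_of_continuousOn (hinvgU.mono hKU)
    set CI := max CI0 0 with hCIdef
    have hCI : ∀ z ∈ K, ‖invg z‖ ≤ CI := fun z hz => le_trans (hCI0 z hz) (le_max_left _ _)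
    have hCIpos : 0 ≤ CI := le_max_right _ _
    set C1 := Ca * Cf + R * Ch with hC1def
    have hC1pos : 0 ≤ C1 := by positivity
    set C2 := CI * (CD * C1) with hC2def
    have hC2pos : 0 ≤ C2 := by positivity
    set L := max C1 C2 with hLdef
    have hLpos : 0 ≤ L := le_trans hC1pos (le_max_left _ _)
    -- second-component derivative formula
    have hDg0 : ∀ (u : BoundedContinuousFunction ℝ ((Fin k → ℝ) × (Fin s → ℝ)))
        (t : ℝ) (d : (Fin k → ℝ) × (Fin s → ℝ)), (∀ τ, u τ ∈ U) → (∀ τ, g (u τ) = 0) →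
        HasDerivAt (fun τ => u τ) d t →
        d.2 = invg (u t) (-(fderiv ℝ g (u t)) (d.1, 0)) := by
      intro u t d hU0 hg0 hd
      have hzU : u t ∈ U := hU0 t
      have gdiff : DifferentiableAt ℝ g (u t) :=
        ((hg.differentiableOn (by simp)).differentiableAt (hUopen.mem_nhds hzU))
      have hchain : HasDerivAt (fun τ => g (u τ)) (fderiv ℝ g (u t) d) t :=
        gdiff.hasFDerivAt.comp_hasDerivAt t hd
      have hfun : (fun τ => g (u τ)) = fun _ => (0 : Fin s → ℝ) := funext fun τ => hg0 τ
      rw [hfun] at hchain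
      have hzero : fderiv ℝ g (u t) d = 0 := hchain.unique (hasDerivAt_const _ _)
      have hsplit : fderiv ℝ g (u t) d
          = fderiv ℝ g (u t) (d.1, 0) + (cmap (fderiv ℝ g (u t))) d.2 := by
        rw [hcmap_apply]
        rw [ContinuousLinearMap.comp_apply, ContinuousLinearMap.inr_apply, ← map_add]
        congr 1
        simp
      have hA : (cmap (fderiv ℝ g (u t))) d.2 = -(fderiv ℝ g (u t)) (d.1, 0) := by
        rw [hsplit] at hzero
        exact eq_neg_of_add_eq_zero_right hzero
      have hu := hinv' _ hzU
      calc d.2 = (Ring.inverse (cmap (fderiv ℝ g (u t))) * (cmap (fderiv ℝ g (u t)))) d.2 := by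
            rw [Ring.inverse_mul_cancel _ hu, ContinuousLinearMap.one_apply]
        _ = invg (u t) ((cmap (fderiv ℝ g (u t))) d.2) := by
            rw [ContinuousLinearMap.mul_apply]
        _ = invg (u t) (-(fderiv ℝ g (u t)) (d.1, 0)) := by rw [hA]
    -- bound on derivatives of solutions in Γ
    have hd1bound : ∀ (lam : ℝ), ‖lam‖ ≤ R → ∀ (t : ℝ), ∀ z ∈ K,
        ‖a t • f z + lam • h (t, z)‖ ≤ C1 := by
      intro lam hlam t z hz
      calc ‖a t • f z + lam • h (t, z)‖ ≤ ‖a t • f z‖ + ‖lam • h (t, z)‖ := norm_add_le _ _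
        _ = ‖a t‖ * ‖f z‖ + ‖lam‖ * ‖h (t, z)‖ := by rw [norm_smul, norm_smul]
        _ ≤ Ca * Cf + R * Ch :=
            add_le_add (mul_le_mul (hCa t) (hCf z hz) (norm_nonneg _) hCapos)
              (mul_le_mul hlam (hCh t z hz) (norm_nonneg _) hR0)
        _ = C1 := rfl
    have hd2bound : ∀ (z d1 : _), z ∈ K → ‖d1‖ ≤ C1 →
        ‖invg z (-(fderiv ℝ g z) ((d1 : Fin k → ℝ), (0 : Fin s → ℝ)))‖ ≤ C2 := by
      intro z d1 hz hd1
      calc ‖invg z (-(fderiv ℝ g z) (d1, 0))‖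
          ≤ ‖invg z‖ * ‖-(fderiv ℝ g z) (d1, 0)‖ := (invg z).le_opNorm _
        _ = ‖invg z‖ * ‖(fderiv ℝ g z) (d1, 0)‖ := by rw [norm_neg]
        _ ≤ ‖invg z‖ * (‖fderiv ℝ g z‖ * ‖((d1 : Fin k → ℝ), (0 : Fin s → ℝ))‖) := by
            gcongr
            exact (fderiv ℝ g z).le_opNorm _
        _ ≤ CI * (CD * C1) := by
            have hprod : ‖((d1 : Fin k → ℝ), (0 : Fin s → ℝ))‖ ≤ C1 := by
              rw [Prod.norm_def]
              simpa using max_le hd1 hC1pos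
            exact mul_le_mul (hCI z hz)
              (mul_le_mul (hCD z hz) hprod (norm_nonneg _) hCDpos)
              (mul_nonneg (norm_nonneg _) (norm_nonneg _)) hCIpos
        _ = C2 := rfl
    -- every member of Γ is Lipschitz with constant L.toNNReal
    have hLip : ∀ P ∈ Γ, LipschitzWith L.toNNReal (fun t : ℝ => P.2 t) := by
      intro P hP
      obtain ⟨h0, hper, hmemU, u', hu'c, hu'd, hu'e⟩ := hΓTP hP
      have hg0 : ∀ τ, g (P.2 τ) = 0 := fun τ => (hu'e τ).2
      have hbnd : ∀ t, ‖u' t‖ ≤ L := by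
        intro t
        have hz : P.2 t ∈ K := hval P hP t
        have h1 : ‖(u' t).1‖ ≤ C1 := by
          rw [(hu'e t).1]
          exact hd1bound P.1 (hnorm P hP).1 t _ hz
        have h2 : ‖(u' t).2‖ ≤ C2 := by
          rw [hDg0 P.2 t (u' t) hmemU hg0 (hu'd t)]
          apply hd2bound _ _ hz
          exact h1
        rw [Prod.norm_def]
        exact max_le (h1.trans (le_max_left _ _)) (h2.trans (le_max_right _ _))
      have := Convex.lipschitzOnWith_of_nnnorm_hasDerivWithin_le (f' := u') (C := L.toNNReal) convex_univ
        (fun t _ => (hu'd t).hasDerivWithinAt) (fun t _ => ?_)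
      · exact lipschitzOnWith_univ.1 this
      · rw [← norm_toNNReal]
        exact Real.toNNReal_mono (hbnd t)
    obtain ⟨Cc, hCc, hCsub⟩ :=
      exists_isCompact_superset_periodic_lipschitz T hT K hKc L.toNNReal
    have hΓsub : Γ ⊆ Set.Icc (0:ℝ) R ×ˢ Cc := by
      intro P hP
      obtain ⟨h0, hper, hmemU, -⟩ := hΓTP hP
      refine ⟨⟨h0, (le_abs_self _).trans (hnorm P hP).1⟩, hCsub ⟨hper, hval P hP, hLip P hP⟩⟩
    have hbig : IsCompact (Set.Icc (0:ℝ) R ×ˢ Cc) := isCompact_Icc.prod hCc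
    have hclΓsub : closure Γ ⊆ Set.Icc (0:ℝ) R ×ˢ Cc := closure_minimal hΓsub hbig.isClosed
    -- the right-hand-side field
    set Φ : ℝ × ℝ × ((Fin k → ℝ) × (Fin s → ℝ)) → ((Fin k → ℝ) × (Fin s → ℝ)) := fun p =>
      (a p.2.1 • f p.2.2 + p.1 • h (p.2.1, p.2.2),
       invg p.2.2 (-(fderiv ℝ g p.2.2) (a p.2.1 • f p.2.2 + p.1 • h (p.2.1, p.2.2), 0)))
      with hΦdef
    have hπ : Continuous (fun p : ℝ × ℝ × ((Fin k → ℝ) × (Fin s → ℝ)) => p.2.2) :=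
      continuous_snd.comp continuous_snd
    have hmaps : ∀ p ∈ (Set.univ ×ˢ Set.univ ×ˢ U :
        Set (ℝ × ℝ × ((Fin k → ℝ) × (Fin s → ℝ)))), p.2.2 ∈ U := fun p hp => hp.2.2
    have cv : ContinuousOn (fun p : ℝ × ℝ × ((Fin k → ℝ) × (Fin s → ℝ)) =>
        a p.2.1 • f p.2.2 + p.1 • h (p.2.1, p.2.2)) (Set.univ ×ˢ Set.univ ×ˢ U) := by
      refine ContinuousOn.add (ContinuousOn.fun_smul ?_ ?_) (ContinuousOn.fun_smul ?_ ?_)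
      · exact (ha.comp (continuous_fst.comp continuous_snd)).continuousOn
      · exact hf.continuousOn.comp hπ.continuousOn hmaps
      · exact continuous_fst.continuousOn
      · exact hh.comp ((continuous_fst.comp continuous_snd).prodMk hπ).continuousOn
          (fun p hp => ⟨trivial, hp.2.2⟩)
    have hΦcont : ContinuousOn Φ (Set.univ ×ˢ Set.univ ×ˢ U) := by
      rw [hΦdef]
      refine ContinuousOn.prodMk cv ?_
      have cD : ContinuousOn (fun p : ℝ × ℝ × ((Fin k → ℝ) × (Fin s → ℝ)) =>
          fderiv ℝ g p.2.2) (Set.univ ×ˢ Set.univ ×ˢ U) :=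
        hgD.comp hπ.continuousOn hmaps
      have cI : ContinuousOn (fun p : ℝ × ℝ × ((Fin k → ℝ) × (Fin s → ℝ)) =>
          invg p.2.2) (Set.univ ×ˢ Set.univ ×ˢ U) :=
        hinvgU.comp hπ.continuousOn hmaps
      have cw : ContinuousOn (fun p : ℝ × ℝ × ((Fin k → ℝ) × (Fin s → ℝ)) =>
          -(fderiv ℝ g p.2.2) (a p.2.1 • f p.2.2 + p.1 • h (p.2.1, p.2.2), 0))
          (Set.univ ×ˢ Set.univ ×ˢ U) := by
        refine ContinuousOn.neg ?_
        exact (isBoundedBilinearMap_apply (𝕜 := ℝ)).continuous.comp_continuousOn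
          (cD.prodMk (cv.prodMk continuousOn_const))
      exact (isBoundedBilinearMap_apply (𝕜 := ℝ)).continuous.comp_continuousOn (cI.prodMk cw)
    have hΦat : ∀ (lam t : ℝ) (z : (Fin k → ℝ) × (Fin s → ℝ)), z ∈ U →
        ContinuousAt Φ (lam, t, z) := fun lam t z hz =>
      hΦcont.continuousAt ((((isOpen_univ.prod (isOpen_univ.prod hUopen))).mem_nhds
        ⟨trivial, trivial, hz⟩))
    -- limits of T-periodic pairs in Γ are T-periodic pairs
    have hcl : closure Γ ⊆ TPairs U g f a h T := by
      intro P hPcl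
      obtain ⟨Pn, hPn, hPlim⟩ := mem_closure_iff_seq_limit.1 hPcl
      have hlam : Filter.Tendsto (fun n => (Pn n).1) Filter.atTop (nhds P.1) :=
        ((continuous_fst.tendsto P).comp hPlim)
      have hu : ∀ t : ℝ, Filter.Tendsto (fun n => (Pn n).2 t) Filter.atTop (nhds (P.2 t)) :=
        fun t => ((continuous_eval_const
          (x := t)).tendsto P.2).comp ((continuous_snd.tendsto P).comp hPlim)
      have hPK : ∀ t : ℝ, P.2 t ∈ K := fun t =>
        hKc.isClosed.mem_of_tendsto (hu t)
          (Filter.Eventually.of_forall fun n => hval _ (hPn n) t)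
      have hPU : ∀ t : ℝ, P.2 t ∈ U := fun t => hKU (hPK t)
      -- data for each n
      have hdata := fun n => (hΓTP (hPn n)).2.2.2
      choose w hwc hwd hwe using hdata
      have hw_eq : ∀ n t, w n t = Φ ((Pn n).1, t, (Pn n).2 t) := by
        intro n t
        have h2 := hDg0 (Pn n).2 t (w n t) (hΓTP (hPn n)).2.2.1
          (fun τ => (hwe n τ).2) (hwd n t)
        have h1 := (hwe n t).1
        rw [hΦdef]
        exact Prod.ext h1 (by rw [h2, h1])
      have hwcont : ∀ n, Continuous (fun t => Φ ((Pn n).1, t, (Pn n).2 t)) := by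
        intro n
        have := hwc n
        rwa [funext (hw_eq n)] at this
      have hFTC : ∀ n t, (Pn n).2 t - (Pn n).2 0
          = ∫ τ in (0:ℝ)..t, Φ ((Pn n).1, τ, (Pn n).2 τ) := by
        intro n t
        rw [← intervalIntegral.integral_eq_sub_of_hasDerivAt
          (f := fun τ => (Pn n).2 τ) (fun τ _ => (hw_eq n τ) ▸ hwd n τ)
          ((hwcont n).intervalIntegrable 0 t)]
      set ψ : ℝ → ((Fin k → ℝ) × (Fin s → ℝ)) := fun τ => Φ (P.1, τ, P.2 τ) with hψdef
      have hψcont : Continuous ψ := by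
        rw [continuous_iff_continuousAt]
        intro t
        have hin : ContinuousAt (fun τ : ℝ => (P.1, τ, P.2 τ)) t :=
          (continuous_const.prodMk (continuous_id.prodMk P.2.continuous)).continuousAt
        show ContinuousAt (Φ ∘ fun τ : ℝ => (P.1, τ, P.2 τ)) t
        exact ContinuousAt.comp (hΦat P.1 t (P.2 t) (hPU t)) hin
      have hlim_int : ∀ t : ℝ, Filter.Tendsto
          (fun n => ∫ τ in (0:ℝ)..t, Φ ((Pn n).1, τ, (Pn n).2 τ)) Filter.atTop
          (nhds (∫ τ in (0:ℝ)..t, ψ τ)) := by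
        intro t
        obtain ⟨MB, hMB⟩ := ((isCompact_Icc (a := (0:ℝ)) (b := R)).prod
          ((isCompact_uIcc (a := (0:ℝ)) (b := t)).prod hKc)).exists_bound_of_continuousOn
          (hΦcont.mono (fun p hp => ⟨trivial, trivial, hKU hp.2.2⟩))
        apply intervalIntegral.tendsto_integral_filter_of_dominated_convergence (fun _ => MB)
        · exact Filter.Eventually.of_forall fun n => (hwcont n).aestronglyMeasurable
        · refine Filter.Eventually.of_forall fun n => (MeasureTheory.ae_of_all _ fun τ hτ => ?_)
          refine hMB _ ⟨⟨(hΓTP (hPn n)).1, (le_abs_self _).trans ((hnorm _ (hPn n)).1)⟩,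
            Set.uIoc_subset_uIcc hτ, hval _ (hPn n) τ⟩
        · exact intervalIntegrable_const
        · refine MeasureTheory.ae_of_all _ fun τ hτ => ?_
          have hten : Filter.Tendsto (fun n => ((Pn n).1, τ, (Pn n).2 τ)) Filter.atTop
              (nhds (P.1, τ, P.2 τ)) := by
            rw [nhds_prod_eq, nhds_prod_eq]
            exact hlam.prodMk (Filter.Tendsto.prodMk tendsto_const_nhds (hu τ))
          exact ((hΦat P.1 τ (P.2 τ) (hPU τ)).tendsto).comp hten
      have hid : ∀ t : ℝ, P.2 t - P.2 0 = ∫ τ in (0:ℝ)..t, ψ τ := by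
        intro t
        refine tendsto_nhds_unique ((hu t).sub (hu 0)) ?_
        refine (hlim_int t).congr fun n => ?_
        exact (hFTC n t).symm
      have hud : ∀ t : ℝ, HasDerivAt (fun τ => P.2 τ) (ψ t) t := by
        intro t
        have hint : HasDerivAt (fun τ => ∫ σ in (0:ℝ)..τ, ψ σ) (ψ t) t :=
          intervalIntegral.integral_hasDerivAt_right (hψcont.intervalIntegrable _ _)
            hψcont.stronglyMeasurable.stronglyMeasurableAtFilter hψcont.continuousAt
        have hfn : (fun τ : ℝ => P.2 τ) = fun τ => P.2 0 + ∫ σ in (0:ℝ)..τ, ψ σ :=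
          funext fun τ => by rw [← hid τ]; abel
        rw [hfn]
        simpa using hint.const_add (P.2 0)
      refine ⟨ge_of_tendsto hlam (Filter.Eventually.of_forall fun n => (hΓTP (hPn n)).1),
        ?_, hPU, ψ, hψcont, hud, ?_⟩
      · intro τ
        have hn : ∀ n, (Pn n).2 (τ + T) = (Pn n).2 τ := fun n => (hΓTP (hPn n)).2.1 τ
        refine tendsto_nhds_unique (hu (τ + T)) ?_
        refine (hu τ).congr fun n => (hn n).symm
      · intro t
        constructor
        · rw [hψdef, hΦdef]
        · exact (hPK t).1.2
    -- Γ is closed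
    have hΓcl : closure Γ ⊆ Γ := by
      intro Q hQ
      have hQTP := hcl hQ
      have h1 : Γ = Subtype.val '' (connectedComponent
          (⟨P₀, hP₀⟩ : TPairs U g f a h T)) := by
        rw [hΓ, connectedComponentIn_eq_image hP₀]
      have hq : (⟨Q, hQTP⟩ : TPairs U g f a h T)
          ∈ closure (connectedComponent (⟨P₀, hP₀⟩ : TPairs U g f a h T)) := by
        rw [Topology.IsEmbedding.subtypeVal.closure_eq_preimage_closure_image]
        exact Set.mem_preimage.2 (by rw [← h1]; exact hQ)
      have h2 := isClosed_connectedComponent.closure_subset hq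
      rw [h1]
      exact ⟨_, h2, rfl⟩
    have hΓeq : closure Γ = Γ := Set.Subset.antisymm hΓcl subset_closure
    have : IsCompact (closure Γ) := hbig.of_isClosed_subset isClosed_closure hclΓsub
    rwa [hΓeq] at this
  refine ⟨part1, ?_⟩
  intro hΩbdd
  by_contra hempty
  rw [Set.not_nonempty_iff_eq_empty] at hempty
  have hΓA : Γ ⊆ Aset U T := fun P hP => hTPA (hΓTP hP)
  obtain ⟨V, hVopen, hVeq⟩ := hΩopen
  have hΓcls : Γ ⊆ closure Ω := by
    by_contra hnotsub
    have hne2 : (Γ ∩ (closure Ω)ᶜ).Nonempty := by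
      rw [Set.not_subset] at hnotsub
      obtain ⟨P, hP1, hP2⟩ := hnotsub
      exact ⟨P, hP1, hP2⟩
    obtain ⟨z, hzU, -, -, hz⟩ := hmeet
    have hne1 : (Γ ∩ V).Nonempty := ⟨_, hz.1, (hVeq ▸ hz.2).1⟩
    have hpre : IsPreconnected Γ := hΓ ▸ isPreconnected_connectedComponentIn
    have hcover : Γ ⊆ V ∪ (closure Ω)ᶜ := by
      intro P hP
      by_cases hPc : P ∈ closure Ω
      · by_cases hPΩ : P ∈ Ω
        · exact Or.inl (hVeq ▸ hPΩ).1
        · exfalso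
          have : P ∈ Γ ∩ ((closure Ω ∩ Aset U T) \ Ω) := ⟨hP, ⟨hPc, hΓA hP⟩, hPΩ⟩
          rw [hempty] at this
          exact this
      · exact Or.inr hPc
    obtain ⟨Q, hQΓ, hQV, hQc⟩ :=
      hpre V (closure Ω)ᶜ hVopen isClosed_closure.isOpen_compl hcover hne1 hne2
    exact hQc (subset_closure (hVeq ▸ ⟨hQV, hΓA hQΓ⟩))
  have hΓΩ : Γ ⊆ Ω := by
    intro P hP
    by_contra hPΩ
    have : P ∈ Γ ∩ ((closure Ω ∩ Aset U T) \ Ω) := ⟨hP, ⟨hΓcls hP, hΓA hP⟩, hPΩ⟩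
    rw [hempty] at this
    exact this
  exact part1 ⟨hΩbdd.subset hΓΩ, hΓΩ⟩

end Main

/-- A connected component `Γ` of the set of `T`-periodic pairs that meets the trivial pairs
in `Ω` and has noncompact intersection with `Ω` cannot be both bounded and contained in `Ω`;
if `Ω` is bounded it must meet the boundary of `Ω` in `[0,∞) × C_T(U)`. -/
theorem stmt13 {k s : ℕ}
    (U : Set ((Fin k → ℝ) × (Fin s → ℝ))) (hUopen : IsOpen U) (hUconn : IsConnected U)
    (g : (Fin k → ℝ) × (Fin s → ℝ) → (Fin s → ℝ)) (hg : ContDiffOn ℝ (⊤ : ℕ∞) g U)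
    (hinv : ∀ z ∈ U, IsUnit
      ((fderiv ℝ g z).comp (ContinuousLinearMap.inr ℝ (Fin k → ℝ) (Fin s → ℝ))))
    (hM : IsClosed {z | z ∈ U ∧ g z = 0})
    (f : (Fin k → ℝ) × (Fin s → ℝ) → (Fin k → ℝ)) (hf : ContDiffOn ℝ 1 f U)
    (T : ℝ) (hT : 0 < T)
    (a : ℝ → ℝ) (ha : Continuous a) (haT : Function.Periodic a T)
    (havg : (1 / T) * ∫ t in (0:ℝ)..T, a t = 1)
    (h : ℝ × ((Fin k → ℝ) × (Fin s → ℝ)) → (Fin k → ℝ))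
    (hh : ContinuousOn h (Set.univ ×ˢ U))
    (hhT : ∀ (t : ℝ), ∀ z ∈ U, h (t + T, z) = h (t, z))
    (hhlip : ∀ (t₀ : ℝ), ∀ z₀ ∈ U, ∃ ε > (0:ℝ), ∃ K : NNReal,
      ∀ t : ℝ, |t - t₀| < ε →
        LipschitzOnWith K (fun z => h (t, z)) (Metric.ball z₀ ε ∩ U))
    (Ω : Set (ℝ × BoundedContinuousFunction ℝ ((Fin k → ℝ) × (Fin s → ℝ))))
    (hΩsub : Ω ⊆ Aset U T)
    (hΩopen : ∃ V, IsOpen V ∧ Ω = V ∩ Aset U T)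
    (Γ : Set (ℝ × BoundedContinuousFunction ℝ ((Fin k → ℝ) × (Fin s → ℝ))))
    (P₀ : ℝ × BoundedContinuousFunction ℝ ((Fin k → ℝ) × (Fin s → ℝ)))
    (hP₀ : P₀ ∈ TPairs U g f a h T)
    (hΓ : Γ = connectedComponentIn (TPairs U g f a h T) P₀)
    (hmeet : ∃ z ∈ U, f z = 0 ∧ g z = 0 ∧
      ((0:ℝ), BoundedContinuousFunction.const ℝ z) ∈ Γ ∩ Ω)
    (hnc : ¬ IsCompact (Γ ∩ Ω)) :
    (¬ (Bornology.IsBounded Γ ∧ Γ ⊆ Ω)) ∧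
    (Bornology.IsBounded Ω → (Γ ∩ ((closure Ω ∩ Aset U T) \ Ω)).Nonempty) :=
  stmt13' U hUopen hUconn g hg hinv hM f hf T hT a ha haT havg h hh hhT
    Ω hΩsub hΩopen Γ P₀ hP₀ hΓ hmeet hnc
end

section
/- Let (p₀,q₀) ∈ U be a non-T-resonant zero of F. Then the trivial T-periodic pair (0,(p̄₀,q̄₀)) is isolated in the set of T-periodic pairs corresponding to λ = 0: there exists ε > 0 such that every T-periodic solution (x,y) of the DAE with λ = 0 satisfying sup_{t∈ℝ} |(x(t),y(t)) − (p₀,q₀)| < ε is the constant function (p̄₀,q̄₀). -/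
open NormedSpace intervalIntegral

lemma aux_inj_isUnit {k : ℕ} (Ψ : (Fin k → ℝ) →L[ℝ] (Fin k → ℝ))
    (h : ∀ x, Ψ x = 0 → x = 0) : IsUnit Ψ := by
  have hinj : Function.Injective Ψ.toLinearMap := by
    rw [← LinearMap.ker_eq_bot, LinearMap.ker_eq_bot']
    intro x hx
    exact h x hx
  have hbij : Function.Bijective Ψ.toLinearMap :=
    ⟨hinj, (LinearMap.injective_iff_surjective).mp hinj⟩
  let e := (LinearEquiv.ofBijective Ψ.toLinearMap hbij).toContinuousLinearEquiv
  have he : ∀ x, e x = Ψ x := fun x => rfl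
  refine ⟨⟨Ψ, e.symm.toContinuousLinearMap, ?_, ?_⟩, rfl⟩
  · ext x
    simp only [ContinuousLinearMap.mul_apply, ContinuousLinearMap.one_apply,
      ContinuousLinearEquiv.coe_coe]
    rw [← he]
    exact congrFun (e.apply_symm_apply x) _
  · ext x
    simp only [ContinuousLinearMap.mul_apply, ContinuousLinearMap.one_apply,
      ContinuousLinearEquiv.coe_coe]
    rw [← he]
    exact congrFun (e.symm_apply_apply x) _

set_option maxHeartbeats 4000000 in
/-- At a non-`T`-resonant zero of `F`, the trivial `T`-periodic pair is isolated among the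
`T`-periodic pairs corresponding to `λ = 0`. -/
theorem stmt14 {k s : ℕ}
    (U : Set ((Fin k → ℝ) × (Fin s → ℝ))) (hUopen : IsOpen U) (hUconn : IsConnected U)
    (g : (Fin k → ℝ) × (Fin s → ℝ) → (Fin s → ℝ)) (hg : ContDiffOn ℝ (⊤ : ℕ∞) g U)
    (hinv : ∀ z ∈ U, IsUnit (pd2 g z))
    (f : (Fin k → ℝ) × (Fin s → ℝ) → (Fin k → ℝ)) (hf : ContDiffOn ℝ 1 f U)
    (T : ℝ) (hT : 0 < T)
    (a : ℝ → ℝ) (ha : Continuous a) (haT : Function.Periodic a T)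
    (havg : (1 / T) * ∫ t in (0:ℝ)..T, a t = 1)
    (h : ℝ × ((Fin k → ℝ) × (Fin s → ℝ)) → (Fin k → ℝ))
    (hh : ContinuousOn h (Set.univ ×ˢ U))
    (hhT : ∀ (t : ℝ), ∀ z ∈ U, h (t + T, z) = h (t, z))
    (hhlip : ∀ (t₀ : ℝ), ∀ z₀ ∈ U, ∃ ε > (0:ℝ), ∃ K : NNReal,
      ∀ t : ℝ, |t - t₀| < ε →
        LipschitzOnWith K (fun z => h (t, z)) (Metric.ball z₀ ε ∩ U))
    (z₀ : (Fin k → ℝ) × (Fin s → ℝ)) (hz₀ : z₀ ∈ U)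
    (hF0 : f z₀ = 0 ∧ g z₀ = 0)
    (hres : ¬ ∃ ξ : ℝ → (Fin k → ℝ),
        (∀ t : ℝ, HasDerivAt ξ (a t • PhiMap f g z₀ (ξ t)) t) ∧
        Function.Periodic ξ T ∧ ξ ≠ 0) :
    ∃ ε > (0:ℝ), ∀ u : ℝ → (Fin k → ℝ) × (Fin s → ℝ),
      Function.Periodic u T →
      (∀ t : ℝ, u t ∈ U) →
      (∃ u' : ℝ → (Fin k → ℝ) × (Fin s → ℝ), Continuous u' ∧
        (∀ t : ℝ, HasDerivAt u (u' t) t) ∧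
        ∀ t : ℝ, (u' t).1 = a t • f (u t) ∧ g (u t) = 0) →
      (∀ t : ℝ, ‖u t - z₀‖ < ε) →
      ∀ t : ℝ, u t = z₀ := by
  classical
  set Φ : (Fin k → ℝ) →L[ℝ] (Fin k → ℝ) := PhiMap f g z₀ with hΦdef
  have hgz : IsUnit (pd2 g z₀) := hinv z₀ hz₀
  set J : (Fin s → ℝ) →L[ℝ] (Fin s → ℝ) := Ring.inverse (pd2 g z₀) with hJdef
  set L : (Fin k → ℝ) →L[ℝ] (Fin s → ℝ) := J.comp (pd1 g z₀) with hLdef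
  have hJp : ∀ y, J (pd2 g z₀ y) = y := by
    intro y
    have h1 : J * pd2 g z₀ = 1 := Ring.inverse_mul_cancel _ hgz
    calc J (pd2 g z₀ y) = (J * pd2 g z₀) y := rfl
      _ = y := by rw [h1]; rfl
  have hfd : HasFDerivAt f (fderiv ℝ f z₀) z₀ :=
    ((hf.contDiffAt (hUopen.mem_nhds hz₀)).differentiableAt one_ne_zero).hasFDerivAt
  have hgd : HasFDerivAt g (fderiv ℝ g z₀) z₀ :=
    ((hg.contDiffAt (hUopen.mem_nhds hz₀)).differentiableAt (by simp)).hasFDerivAt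
  set Cf : ℝ := ‖pd2 f z₀‖ * ‖J‖ + 1 with hCfdef
  set C₀ : ℝ := 2 * ‖L‖ + 2 with hC₀def
  have hCf : 0 < Cf := by positivity
  have hC₀ : 0 < C₀ := by positivity
  -- Step B : quantitative linearization estimate on the constraint set
  have key : ∀ η : ℝ, 0 < η → ∃ ε > (0:ℝ),
      ∀ z : (Fin k → ℝ) × (Fin s → ℝ), ‖z - z₀‖ < ε → g z = 0 →
      ‖f z - Φ (z.1 - z₀.1)‖ ≤ η * ‖z.1 - z₀.1‖ ∧
      ‖z.2 - z₀.2‖ ≤ C₀ * ‖z.1 - z₀.1‖ := by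
    intro η hη
    set δ : ℝ := min (1 / (2 * (‖J‖ + 1))) (η / (Cf * C₀)) with hδdef
    have hδpos : 0 < δ := by
      apply lt_min <;> positivity
    have hδ1 : δ * ‖J‖ ≤ 1 / 2 := by
      have h1 : δ ≤ 1 / (2 * (‖J‖ + 1)) := min_le_left _ _
      have h2 : 0 < 2 * (‖J‖ + 1) := by positivity
      have h3 : δ * (2 * (‖J‖ + 1)) ≤ 1 := by
        calc δ * (2 * (‖J‖ + 1)) ≤ (1 / (2 * (‖J‖ + 1))) * (2 * (‖J‖ + 1)) := by
              apply mul_le_mul_of_nonneg_right h1 h2.le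
          _ = 1 := by field_simp
      nlinarith [norm_nonneg J, hδpos]
    have hδ2 : Cf * δ * (2 * ‖L‖ + 1) ≤ η := by
      have h1 : δ ≤ η / (Cf * C₀) := min_le_right _ _
      have h2 : δ * (Cf * C₀) ≤ η := by
        rw [← div_mul_cancel₀ η (by positivity : (Cf * C₀) ≠ 0)]
        apply mul_le_mul_of_nonneg_right h1 (by positivity)
      nlinarith [hδpos, hCf, norm_nonneg L]
    have hof : ∀ᶠ z in nhds z₀,
        ‖f z - f z₀ - (fderiv ℝ f z₀) (z - z₀)‖ ≤ δ * ‖z - z₀‖ :=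
      hfd.isLittleO.def hδpos
    have hog : ∀ᶠ z in nhds z₀,
        ‖g z - g z₀ - (fderiv ℝ g z₀) (z - z₀)‖ ≤ δ * ‖z - z₀‖ :=
      hgd.isLittleO.def hδpos
    obtain ⟨ε, hε, hball⟩ := Metric.eventually_nhds_iff.mp (hof.and hog)
    refine ⟨ε, hε, ?_⟩
    intro z hz hgz0
    obtain ⟨h1, h2⟩ := hball (show dist z z₀ < ε by rwa [dist_eq_norm])
    rw [hF0.1] at h1
    rw [hgz0, hF0.2] at h2
    simp only [sub_zero, zero_sub, norm_neg] at h1 h2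
    set Δ := z - z₀ with hΔdef
    have hΔ1 : Δ.1 = z.1 - z₀.1 := rfl
    have hΔ2 : Δ.2 = z.2 - z₀.2 := rfl
    have hsplit : ∀ (F : ((Fin k → ℝ) × (Fin s → ℝ)) →L[ℝ] (Fin s → ℝ)),
        F Δ = F.comp (ContinuousLinearMap.inl ℝ _ _) Δ.1
          + F.comp (ContinuousLinearMap.inr ℝ _ _) Δ.2 := by
      intro F
      simp only [ContinuousLinearMap.comp_apply, ContinuousLinearMap.inl_apply,
        ContinuousLinearMap.inr_apply, ← map_add]
      congr 1
      exact Prod.ext (by simp) (by simp)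
    have hsplitf : ∀ (F : ((Fin k → ℝ) × (Fin s → ℝ)) →L[ℝ] (Fin k → ℝ)),
        F Δ = F.comp (ContinuousLinearMap.inl ℝ _ _) Δ.1
          + F.comp (ContinuousLinearMap.inr ℝ _ _) Δ.2 := by
      intro F
      simp only [ContinuousLinearMap.comp_apply, ContinuousLinearMap.inl_apply,
        ContinuousLinearMap.inr_apply, ← map_add]
      congr 1
      exact Prod.ext (by simp) (by simp)
    have hDg : (fderiv ℝ g z₀) Δ = pd1 g z₀ Δ.1 + pd2 g z₀ Δ.2 := hsplit _
    have hDf : (fderiv ℝ f z₀) Δ = pd1 f z₀ Δ.1 + pd2 f z₀ Δ.2 := hsplitf _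
    have hkey2 : Δ.2 + L Δ.1 = J ((fderiv ℝ g z₀) Δ) := by
      rw [hDg, map_add, hJp]
      simp only [hLdef, ContinuousLinearMap.comp_apply]
      abel
    have hn2 : ‖Δ.2 + L Δ.1‖ ≤ ‖J‖ * (δ * ‖Δ‖) := by
      rw [hkey2]
      calc ‖J ((fderiv ℝ g z₀) Δ)‖ ≤ ‖J‖ * ‖(fderiv ℝ g z₀) Δ‖ := J.le_opNorm _
        _ ≤ ‖J‖ * (δ * ‖Δ‖) := by
            apply mul_le_mul_of_nonneg_left h2 (norm_nonneg J)
    have hmax : ‖Δ‖ ≤ ‖Δ.1‖ + ‖Δ.2‖ := by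
      rw [Prod.norm_def]
      exact max_le (by nlinarith [norm_nonneg Δ.2]) (by nlinarith [norm_nonneg Δ.1])
    have hL1 : ‖L Δ.1‖ ≤ ‖L‖ * ‖Δ.1‖ := L.le_opNorm _
    have htri : ‖Δ.2‖ ≤ ‖Δ.2 + L Δ.1‖ + ‖L Δ.1‖ := by
      calc ‖Δ.2‖ = ‖(Δ.2 + L Δ.1) - L Δ.1‖ := by rw [add_sub_cancel_right]
        _ ≤ ‖Δ.2 + L Δ.1‖ + ‖L Δ.1‖ := norm_sub_le _ _
    have h21 : ‖Δ.2‖ ≤ (2 * ‖L‖ + 1) * ‖Δ.1‖ := by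
      have e1 : ‖J‖ * (δ * ‖Δ‖) ≤ (1/2) * (‖Δ.1‖ + ‖Δ.2‖) := by
        have : ‖J‖ * δ * ‖Δ‖ ≤ (1/2) * ‖Δ‖ := by
          apply mul_le_mul_of_nonneg_right _ (norm_nonneg Δ)
          linarith [hδ1, mul_comm δ ‖J‖]
        nlinarith [norm_nonneg Δ, hmax, norm_nonneg J, hδpos.le]
      nlinarith [htri, hn2, hL1, norm_nonneg Δ.1, norm_nonneg Δ.2]
    have hΔb : ‖Δ‖ ≤ (2 * ‖L‖ + 1) * ‖Δ.1‖ := by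
      rw [Prod.norm_def]
      exact max_le (by nlinarith [norm_nonneg L, norm_nonneg Δ.1]) h21
    constructor
    · have hΦ1 : Φ Δ.1 = pd1 f z₀ Δ.1 - pd2 f z₀ (L Δ.1) := by
        simp only [hΦdef, PhiMap, ← hJdef, ← hLdef, ContinuousLinearMap.sub_apply,
          ContinuousLinearMap.comp_apply]
      have heq : f z - Φ Δ.1
          = (f z - (fderiv ℝ f z₀) Δ) + pd2 f z₀ (Δ.2 + L Δ.1) := by
        rw [hΦ1, hDf, map_add]
        abel
      rw [← hΔ1, heq]
      have hb1 : ‖f z - (fderiv ℝ f z₀) Δ‖ ≤ δ * ‖Δ‖ := h1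
      have hb2 : ‖pd2 f z₀ (Δ.2 + L Δ.1)‖ ≤ ‖pd2 f z₀‖ * (‖J‖ * (δ * ‖Δ‖)) := by
        calc ‖pd2 f z₀ (Δ.2 + L Δ.1)‖ ≤ ‖pd2 f z₀‖ * ‖Δ.2 + L Δ.1‖ :=
              (pd2 f z₀).le_opNorm _
          _ ≤ ‖pd2 f z₀‖ * (‖J‖ * (δ * ‖Δ‖)) :=
              mul_le_mul_of_nonneg_left hn2 (norm_nonneg _)
      calc ‖(f z - (fderiv ℝ f z₀) Δ) + pd2 f z₀ (Δ.2 + L Δ.1)‖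
          ≤ ‖f z - (fderiv ℝ f z₀) Δ‖ + ‖pd2 f z₀ (Δ.2 + L Δ.1)‖ := norm_add_le _ _
        _ ≤ δ * ‖Δ‖ + ‖pd2 f z₀‖ * (‖J‖ * (δ * ‖Δ‖)) := add_le_add hb1 hb2
        _ = Cf * (δ * ‖Δ‖) := by rw [hCfdef]; ring
        _ ≤ Cf * (δ * ((2 * ‖L‖ + 1) * ‖Δ.1‖)) := by
            apply mul_le_mul_of_nonneg_left _ hCf.le
            exact mul_le_mul_of_nonneg_left hΔb hδpos.le
        _ = (Cf * δ * (2 * ‖L‖ + 1)) * ‖Δ.1‖ := by ring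
        _ ≤ η * ‖Δ.1‖ := mul_le_mul_of_nonneg_right hδ2 (norm_nonneg _)
    · rw [← hΔ1, ← hΔ2]
      calc ‖Δ.2‖ ≤ (2 * ‖L‖ + 1) * ‖Δ.1‖ := h21
        _ ≤ C₀ * ‖Δ.1‖ := by
            apply mul_le_mul_of_nonneg_right _ (norm_nonneg _)
            rw [hC₀def]; linarith
  -- the primitive of a
  set τ : ℝ → ℝ := fun t => ∫ x in (0:ℝ)..t, a x with hτdef
  have hτ : ∀ t, HasDerivAt τ (a t) t := fun t =>
    (ha.integral_hasStrictDerivAt 0 t).hasDerivAt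
  have hτcont : Continuous τ := by
    rw [continuous_iff_continuousAt]; exact fun t => (hτ t).continuousAt
  have hτ0 : τ 0 = 0 := integral_same
  have hIT : ∫ x in (0:ℝ)..T, a x = T := by
    have := havg
    field_simp at this
    linarith
  have hτper : ∀ t, τ (t + T) = τ t + T := by
    intro t
    have hadj : τ t + ∫ x in t..(t + T), a x = τ (t + T) :=
      integral_add_adjacent_intervals (ha.intervalIntegrable 0 t)
        (ha.intervalIntegrable t (t + T))
    have hper : ∫ x in t..(t + T), a x = ∫ x in (0:ℝ)..(0 + T), a x :=
      haT.intervalIntegral_add_eq t 0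
    rw [zero_add, hIT] at hper
    rw [← hadj, hper]
  -- the exponential flow
  letI : NormedAlgebra ℚ ((Fin k → ℝ) →L[ℝ] (Fin k → ℝ)) := .restrictScalars ℚ ℝ _
  set Ex : ℝ → ((Fin k → ℝ) →L[ℝ] (Fin k → ℝ)) := fun c => exp (c • Φ) with hExdef
  have hEx0 : Ex 0 = 1 := by rw [hExdef]; simp [exp_zero]
  have hExadd : ∀ c d, Ex (c + d) = Ex c * Ex d := by
    intro c d
    rw [hExdef]
    simp only
    rw [add_smul]
    exact exp_add_of_commute (((Commute.refl Φ).smul_left c).smul_right d)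
  have hExD : ∀ c, HasDerivAt Ex (Φ * Ex c) c := fun c => hasDerivAt_exp_smul_const' Φ c
  have hExcomm : ∀ c x, Ex c (Φ x) = Φ (Ex c x) := by
    intro c x
    have hcm : Ex c * Φ = Φ * Ex c := ((Commute.refl Φ).smul_left c).exp_left
    calc Ex c (Φ x) = (Ex c * Φ) x := rfl
      _ = (Φ * Ex c) x := by rw [hcm]
      _ = Φ (Ex c x) := rfl
  have hExcont : Continuous Ex :=
    exp_continuous.comp (continuous_id.smul continuous_const)
  -- Step A : invertibility of Ex (-T) - 1
  have hΨ : IsUnit (Ex (-T) - 1) := by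
    apply aux_inj_isUnit
    intro ξ₀ hξ₀
    by_contra hne
    have hfix : Ex (-T) ξ₀ = ξ₀ := by
      have h' : Ex (-T) ξ₀ - ξ₀ = 0 := by
        simpa [ContinuousLinearMap.sub_apply, ContinuousLinearMap.one_apply] using hξ₀
      exact sub_eq_zero.mp h'
    have hfixT : Ex T ξ₀ = ξ₀ := by
      conv_lhs => rw [← hfix]
      calc Ex T (Ex (-T) ξ₀) = (Ex T * Ex (-T)) ξ₀ := rfl
        _ = Ex 0 ξ₀ := by rw [← hExadd]; norm_num
        _ = ξ₀ := by rw [hEx0]; rfl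
    apply hres
    refine ⟨fun t => Ex (τ t) ξ₀, ?_, ?_, ?_⟩
    · intro t
      have hD : HasDerivAt (fun t => Ex (τ t)) (a t • (Φ * Ex (τ t))) t :=
        (hExD (τ t)).scomp t (hτ t)
      have := hD.clm_apply (hasDerivAt_const t ξ₀)
      simpa only [smul_zero, map_zero, add_zero, ContinuousLinearMap.smul_apply,
        ContinuousLinearMap.mul_apply, ← hΦdef] using this
    · intro t
      simp only
      rw [hτper t, hExadd]
      calc (Ex (τ t) * Ex T) ξ₀ = Ex (τ t) (Ex T ξ₀) := rfl
        _ = Ex (τ t) ξ₀ := by rw [hfixT]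
    · intro hzero
      apply hne
      have := congrFun hzero 0
      simpa [hτ0, hEx0] using this
  obtain ⟨Ψu, hΨu⟩ := hΨ
  -- bound for a
  obtain ⟨tA, htA, hAmax⟩ := isCompact_Icc.exists_isMaxOn (α := ℝ)
    (Set.nonempty_Icc.mpr hT.le) (ha.abs.continuousOn (s := Set.Icc 0 T))
  set A : ℝ := |a tA| with hAdef
  have hA0 : 0 ≤ A := abs_nonneg _
  have hA : ∀ t, |a t| ≤ A := by
    intro t
    obtain ⟨t', ht', he⟩ := haT.exists_mem_Ico₀ hT t
    rw [he]
    exact hAmax (Set.mem_Icc.mpr ⟨ht'.1, ht'.2.le⟩)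
  -- bound for the exponentials
  obtain ⟨cE, hcE, hEmax⟩ := isCompact_Icc.exists_isMaxOn (α := ℝ)
    (Set.nonempty_Icc.mpr (by nlinarith : -(A * T) ≤ A * T))
    ((hExcont.norm).continuousOn (s := Set.Icc (-(A * T)) (A * T)))
  set EB : ℝ := ‖Ex cE‖ with hEBdef
  have hEB0 : 0 ≤ EB := norm_nonneg _
  have hEB : ∀ c, |c| ≤ A * T → ‖Ex c‖ ≤ EB := by
    intro c hc
    exact hEmax (Set.mem_Icc.mpr (abs_le.mp hc))
  -- choice of the smallness parameter
  set θ : ℝ := ‖(↑Ψu⁻¹ : (Fin k → ℝ) →L[ℝ] (Fin k → ℝ))‖ * (T * (EB * A)) with hθdef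
  have hθ0 : 0 ≤ θ := by positivity
  set η : ℝ := 1 / (θ + 1) with hηdef
  have hη : 0 < η := by positivity
  obtain ⟨ε, hε, hkey⟩ := key η hη
  refine ⟨ε, hε, ?_⟩
  rintro u huper huU ⟨u', hu'c, hu'd, hu'eq⟩ hnear
  -- the first component of the displacement
  set v : ℝ → (Fin k → ℝ) := fun t => (u t).1 - z₀.1 with hvdef
  have hvd : ∀ t, HasDerivAt v ((u' t).1) t := by
    intro t
    have h1 : HasDerivAt (fun t => (u t).1) ((u' t).1) t := (hu'd t).fst
    exact h1.sub_const z₀.1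
  have hvcont : Continuous v := by
    rw [continuous_iff_continuousAt]; exact fun t => (hvd t).continuousAt
  have hvper : ∀ t, v (t + T) = v t := fun t => by simp only [hvdef, huper t]
  have hucont : Continuous u := by
    rw [continuous_iff_continuousAt]; exact fun t => (hu'd t).continuousAt
  -- the error term
  set ρ : ℝ → (Fin k → ℝ) := fun t => (u' t).1 - a t • Φ (v t) with hρdef
  have hρcont : Continuous ρ :=
    (continuous_fst.comp hu'c).sub (ha.smul (Φ.continuous.comp hvcont))
  have hρeq : ∀ t, ρ t = a t • (f (u t) - Φ (v t)) := by
    intro t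
    rw [hρdef]
    simp only [(hu'eq t).1, smul_sub]
  have hkey' : ∀ t, ‖f (u t) - Φ (v t)‖ ≤ η * ‖v t‖ ∧ ‖(u t).2 - z₀.2‖ ≤ C₀ * ‖v t‖ := by
    intro t
    have := hkey (u t) (hnear t) (hu'eq t).2
    simpa only [Prod.fst_sub, Prod.snd_sub, ← hvdef] using this
  have hρb : ∀ t, ‖ρ t‖ ≤ A * (η * ‖v t‖) := by
    intro t
    rw [hρeq t, norm_smul, Real.norm_eq_abs]
    exact mul_le_mul (hA t) (hkey' t).1 (norm_nonneg _) hA0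
  have hvΦ : ∀ t, HasDerivAt v (a t • Φ (v t) + ρ t) t := by
    intro t
    have := hvd t
    rwa [show (u' t).1 = a t • Φ (v t) + ρ t by simp only [hρdef]; module] at this
  -- the maximum of ‖v‖
  obtain ⟨t₀, ht₀, hmax⟩ := isCompact_Icc.exists_isMaxOn (α := ℝ)
    (Set.nonempty_Icc.mpr hT.le) ((hvcont.norm).continuousOn (s := Set.Icc 0 T))
  set S : ℝ := ‖v t₀‖ with hSdef
  have hS0 : 0 ≤ S := norm_nonneg _
  have hS : ∀ t, ‖v t‖ ≤ S := by
    intro t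
    have hper : Function.Periodic (fun t => ‖v t‖) T := fun t => by
      simp only [hvper t]
    obtain ⟨t', ht', he⟩ := hper.exists_mem_Ico₀ hT t
    rw [he]
    exact hmax (Set.mem_Icc.mpr ⟨ht'.1, ht'.2.le⟩)
  -- key computation: variation of constants at t₀
  set w : ℝ → (Fin k → ℝ) := fun t => Ex (-(τ t)) (v t) with hwdef
  have hwd : ∀ t, HasDerivAt w (Ex (-(τ t)) (ρ t)) t := by
    intro t
    have hMd : HasDerivAt (fun t => Ex (-(τ t))) ((-(a t)) • (Φ * Ex (-(τ t)))) t :=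
      by have := (hExD (-(τ t))).scomp t ((hτ t).neg); exact this
    have := hMd.clm_apply (hvΦ t)
    have heq : ((-(a t)) • (Φ * Ex (-(τ t)))) (v t)
        + Ex (-(τ t)) (a t • Φ (v t) + ρ t) = Ex (-(τ t)) (ρ t) := by
      simp only [ContinuousLinearMap.smul_apply, ContinuousLinearMap.mul_apply,
        map_add, map_smul, hExcomm]
      module
    rwa [heq] at this
  have hwcont : Continuous fun t => Ex (-(τ t)) (ρ t) :=
    (hExcont.comp hτcont.neg).clm_apply hρcont
  have hFTC : ∫ t in t₀..(t₀ + T), Ex (-(τ t)) (ρ t)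
      = w (t₀ + T) - w t₀ :=
    integral_eq_sub_of_hasDerivAt (fun t _ => hwd t)
      (hwcont.intervalIntegrable _ _)
  have hw : w (t₀ + T) - w t₀ = Ex (-(τ t₀)) ((Ex (-T) - 1) (v t₀)) := by
    have h1 : w (t₀ + T) = Ex (-(τ t₀)) (Ex (-T) (v t₀)) := by
      rw [hwdef]
      simp only
      rw [hvper t₀, hτper t₀, neg_add, hExadd]
      rfl
    rw [h1, hwdef]
    simp only [ContinuousLinearMap.sub_apply, ContinuousLinearMap.one_apply, map_sub]
  have hΨv : (Ex (-T) - 1) (v t₀) = Ex (τ t₀) (w (t₀ + T) - w t₀) := by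
    rw [hw]
    calc (Ex (-T) - 1) (v t₀)
        = Ex 0 ((Ex (-T) - 1) (v t₀)) := by rw [hEx0]; rfl
      _ = (Ex (τ t₀) * Ex (-(τ t₀))) ((Ex (-T) - 1) (v t₀)) := by
          rw [← hExadd]; norm_num
      _ = Ex (τ t₀) (Ex (-(τ t₀)) ((Ex (-T) - 1) (v t₀))) := rfl
  -- norm estimates
  have hτdiff : ∀ x ∈ Set.uIoc t₀ (t₀ + T), |τ t₀ - τ x| ≤ A * T := by
    intro x hx
    rw [Set.uIoc_of_le (by linarith)] at hx
    have hsub : τ x - τ t₀ = ∫ s in t₀..x, a s := by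
      have := integral_add_adjacent_intervals (μ := MeasureTheory.volume) (ha.intervalIntegrable 0 t₀)
        (ha.intervalIntegrable t₀ x)
      rw [hτdef]
      simp only
      linarith [this]
    have hbnd : |∫ s in t₀..x, a s| ≤ A * |x - t₀| := by
      have := intervalIntegral.norm_integral_le_of_norm_le_const
        (C := A) (f := a) (a := t₀) (b := x) (fun y _ => by
          rw [Real.norm_eq_abs]; exact hA y)
      rwa [Real.norm_eq_abs] at this
    have hxd : |x - t₀| ≤ T := by
      rw [abs_of_pos (by linarith [hx.1] : (0:ℝ) < x - t₀)]
      linarith [hx.2]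
    rw [abs_sub_comm, hsub]
    calc |∫ s in t₀..x, a s| ≤ A * |x - t₀| := hbnd
      _ ≤ A * T := mul_le_mul_of_nonneg_left hxd hA0
  have hintb : ‖∫ t in t₀..(t₀ + T), Ex (τ t₀) (Ex (-(τ t)) (ρ t))‖
      ≤ (EB * (A * (η * S))) * T := by
    have := intervalIntegral.norm_integral_le_of_norm_le_const
      (C := EB * (A * (η * S))) (a := t₀) (b := t₀ + T)
      (f := fun t => Ex (τ t₀) (Ex (-(τ t)) (ρ t))) ?_
    · rwa [show t₀ + T - t₀ = T by ring, abs_of_pos hT] at this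
    · intro x hx
      have hcomb : Ex (τ t₀) (Ex (-(τ x)) (ρ x)) = Ex (τ t₀ - τ x) (ρ x) := by
        rw [sub_eq_add_neg, hExadd]; rfl
      show ‖Ex (τ t₀) (Ex (-(τ x)) (ρ x))‖ ≤ EB * (A * (η * S))
      rw [hcomb]
      calc ‖Ex (τ t₀ - τ x) (ρ x)‖ ≤ ‖Ex (τ t₀ - τ x)‖ * ‖ρ x‖ :=
            (Ex _).le_opNorm _
        _ ≤ EB * (A * (η * S)) := by
            apply mul_le_mul (hEB _ (hτdiff x hx)) _ (norm_nonneg _) hEB0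
            calc ‖ρ x‖ ≤ A * (η * ‖v x‖) := hρb x
              _ ≤ A * (η * S) := by
                  apply mul_le_mul_of_nonneg_left _ hA0
                  exact mul_le_mul_of_nonneg_left (hS x) hη.le
  have hSbound : S ≤ θ * (η * S) := by
    have hinv' : v t₀ = (↑Ψu⁻¹ : (Fin k → ℝ) →L[ℝ] (Fin k → ℝ)) ((Ex (-T) - 1) (v t₀)) := by
      rw [← hΨu]
      calc v t₀ = ((↑Ψu⁻¹ * ↑Ψu : (Fin k → ℝ) →L[ℝ] (Fin k → ℝ))) (v t₀) := by
            rw [Units.inv_mul]; rfl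
        _ = (↑Ψu⁻¹ : (Fin k → ℝ) →L[ℝ] (Fin k → ℝ)) ((↑Ψu : (Fin k → ℝ) →L[ℝ] (Fin k → ℝ)) (v t₀)) := rfl
    have hpull : Ex (τ t₀) (∫ t in t₀..(t₀ + T), Ex (-(τ t)) (ρ t))
        = ∫ t in t₀..(t₀ + T), Ex (τ t₀) (Ex (-(τ t)) (ρ t)) :=
      ((Ex (τ t₀)).intervalIntegral_comp_comm (hwcont.intervalIntegrable _ _)).symm
    calc S = ‖v t₀‖ := rfl
      _ ≤ ‖(↑Ψu⁻¹ : (Fin k → ℝ) →L[ℝ] (Fin k → ℝ))‖ * ‖(Ex (-T) - 1) (v t₀)‖ := by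
          conv_lhs => rw [hinv']
          exact (↑Ψu⁻¹ : (Fin k → ℝ) →L[ℝ] (Fin k → ℝ)).le_opNorm _
      _ ≤ ‖(↑Ψu⁻¹ : (Fin k → ℝ) →L[ℝ] (Fin k → ℝ))‖ * ((EB * (A * (η * S))) * T) := by
          apply mul_le_mul_of_nonneg_left _ (norm_nonneg _)
          rw [hΨv, ← hFTC, hpull]
          exact hintb
      _ = θ * (η * S) := by rw [hθdef]; ring
  have hSzero : S = 0 := by
    have hηθ : η * (θ + 1) = 1 := by
      rw [hηdef]
      field_simp
    nlinarith [hSbound, hθ0, hS0, hη.le]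
  -- conclusion
  intro t
  have hvz : v t = 0 := by
    have := (hS t).trans hSzero.le
    exact norm_le_zero_iff.mp this
  have h1 : (u t).1 = z₀.1 := by
    have := hvz
    rw [hvdef] at this
    exact sub_eq_zero.mp this
  have h2 : (u t).2 = z₀.2 := by
    have := (hkey' t).2
    rw [hvz] at this
    simp only [norm_zero, mul_zero] at this
    exact sub_eq_zero.mp (norm_le_zero_iff.mp this)
  exact Prod.ext h1 h2
end

section
/- Let λ ≥ 0, let I be an interval, let t₀ ∈ I, and let (x₁,y₁) and (x₂,y₂) be solutions of the DAE ẋ = a(t)f(x,y) + λh(t,x,y), g(x,y) = 0 on I with (x₁(t₀),y₁(t₀)) = (x₂(t₀),y₂(t₀)). Then (x₁(t),y₁(t)) = (x₂(t),y₂(t)) for all t ∈ I. -/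
/-- `(x,y)` is a solution of the DAE `ẋ = a(t)f(x,y) + λh(t,x,y)`, `g(x,y) = 0` on the
interval `I`. -/
def IsDAESolOn {k s : ℕ} (U : Set ((Fin k → ℝ) × (Fin s → ℝ)))
    (g : (Fin k → ℝ) × (Fin s → ℝ) → (Fin s → ℝ))
    (f : (Fin k → ℝ) × (Fin s → ℝ) → (Fin k → ℝ))
    (a : ℝ → ℝ) (h : ℝ × ((Fin k → ℝ) × (Fin s → ℝ)) → (Fin k → ℝ))
    (lam : ℝ) (I : Set ℝ)
    (x : ℝ → (Fin k → ℝ)) (y : ℝ → (Fin s → ℝ)) : Prop :=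
  (∀ t ∈ I, (x t, y t) ∈ U) ∧ (∀ t ∈ I, g (x t, y t) = 0) ∧
  (∀ t ∈ I, HasDerivWithinAt x (a t • f (x t, y t) + lam • h (t, (x t, y t))) I t) ∧
  ∃ y' : ℝ → (Fin s → ℝ), ContinuousOn y' I ∧ ∀ t ∈ I, HasDerivWithinAt y (y' t) I t

open Set Metric

variable {k s : ℕ}

noncomputable def daeB (g : (Fin k → ℝ) × (Fin s → ℝ) → (Fin s → ℝ))
    (z : (Fin k → ℝ) × (Fin s → ℝ)) : (Fin k → ℝ) →L[ℝ] (Fin s → ℝ) :=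
  -((Ring.inverse ((fderiv ℝ g z).comp (ContinuousLinearMap.inr ℝ (Fin k → ℝ) (Fin s → ℝ)))).comp
     ((fderiv ℝ g z).comp (ContinuousLinearMap.inl ℝ (Fin k → ℝ) (Fin s → ℝ))))

noncomputable def daeF (f : (Fin k → ℝ) × (Fin s → ℝ) → (Fin k → ℝ))
    (a : ℝ → ℝ) (h : ℝ × ((Fin k → ℝ) × (Fin s → ℝ)) → (Fin k → ℝ)) (lam : ℝ)
    (t : ℝ) (z : (Fin k → ℝ) × (Fin s → ℝ)) : Fin k → ℝ :=
  a t • f z + lam • h (t, z)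

noncomputable def daePhi (g : (Fin k → ℝ) × (Fin s → ℝ) → (Fin s → ℝ))
    (f : (Fin k → ℝ) × (Fin s → ℝ) → (Fin k → ℝ))
    (a : ℝ → ℝ) (h : ℝ × ((Fin k → ℝ) × (Fin s → ℝ)) → (Fin k → ℝ)) (lam : ℝ)
    (t : ℝ) (z : (Fin k → ℝ) × (Fin s → ℝ)) : (Fin k → ℝ) × (Fin s → ℝ) :=
  (daeF f a h lam t z, daeB g z (daeF f a h lam t z))

theorem dae_deriv {U : Set ((Fin k → ℝ) × (Fin s → ℝ))} (hUopen : IsOpen U)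
    {g : (Fin k → ℝ) × (Fin s → ℝ) → (Fin s → ℝ)} (hg : ContDiffOn ℝ (⊤ : ℕ∞) g U)
    (hinv : ∀ z ∈ U, IsUnit
      ((fderiv ℝ g z).comp (ContinuousLinearMap.inr ℝ (Fin k → ℝ) (Fin s → ℝ))))
    {f : (Fin k → ℝ) × (Fin s → ℝ) → (Fin k → ℝ)}
    {a : ℝ → ℝ} {h : ℝ × ((Fin k → ℝ) × (Fin s → ℝ)) → (Fin k → ℝ)}
    {lam : ℝ} {I : Set ℝ} {x : ℝ → (Fin k → ℝ)} {y : ℝ → (Fin s → ℝ)}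
    (hsol : IsDAESolOn U g f a h lam I x y) {t : ℝ} (ht : t ∈ I)
    (hud : UniqueDiffWithinAt ℝ I t) :
    HasDerivWithinAt (fun τ => (x τ, y τ)) (daePhi g f a h lam t (x t, y t)) I t := by
  obtain ⟨hmem, hzero, hx, y', hy'c, hy'⟩ := hsol
  set A := fderiv ℝ g (x t, y t) with hA
  set A₂ := A.comp (ContinuousLinearMap.inr ℝ (Fin k → ℝ) (Fin s → ℝ)) with hA₂
  have hzU : (x t, y t) ∈ U := hmem t ht
  have hgd : HasFDerivAt g A (x t, y t) :=
    ((hg.contDiffAt (hUopen.mem_nhds hzU)).differentiableAt (by simp)).hasFDerivAt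
  have hxd := hx t ht
  have hz' : HasDerivWithinAt (fun τ => (x τ, y τ))
      (a t • f (x t, y t) + lam • h (t, (x t, y t)), y' t) I t := hxd.prodMk (hy' t ht)
  have hcomp : HasDerivWithinAt (fun τ => g (x τ, y τ))
      (A (a t • f (x t, y t) + lam • h (t, (x t, y t)), y' t)) I t :=
    hgd.comp_hasDerivWithinAt t hz'
  have hconst : HasDerivWithinAt (fun τ => g (x τ, y τ)) 0 I t :=
    (hasDerivWithinAt_const t I (0 : Fin s → ℝ)).congr (fun τ hτ => hzero τ hτ) (hzero t ht)
  have h0 : A (a t • f (x t, y t) + lam • h (t, (x t, y t)), y' t) = 0 := by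
    rw [← hcomp.derivWithin hud, hconst.derivWithin hud]
  set v := a t • f (x t, y t) + lam • h (t, (x t, y t)) with hv
  have hsplit : (v, y' t) = ((v, 0) : (Fin k → ℝ) × (Fin s → ℝ)) + (0, y' t) := by
    simp
  have hA2app : A₂ (y' t) = A (0, y' t) := rfl
  have h1 : A (v, 0) + A₂ (y' t) = 0 := by
    rw [hA2app, ← map_add]
    convert h0 using 2 <;> simp
  have h2 : A₂ (y' t) = -(A (v, 0)) := by
    rw [eq_neg_iff_add_eq_zero, add_comm]; exact h1
  have hunit := hinv _ hzU
  have h3 : (Ring.inverse A₂) ((A₂ : (Fin s → ℝ) →L[ℝ] (Fin s → ℝ)) (y' t)) = y' t := by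
    have := Ring.inverse_mul_cancel A₂ hunit
    calc (Ring.inverse A₂) (A₂ (y' t)) = ((Ring.inverse A₂) * A₂) (y' t) := rfl
    _ = y' t := by rw [this]; rfl
  have h4 : y' t = daeB g (x t, y t) v := by
    rw [← h3, h2]
    simp only [daeB, ← hA, ← hA₂, map_neg, ContinuousLinearMap.neg_apply,
      ContinuousLinearMap.comp_apply, ContinuousLinearMap.inl_apply]
  have : HasDerivWithinAt (fun τ => (x τ, y τ)) (v, daeB g (x t, y t) v) I t := by
    rw [← h4]; exact hz'
  exact this

theorem daeB_contDiffAt {U : Set ((Fin k → ℝ) × (Fin s → ℝ))} (hUopen : IsOpen U)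
    {g : (Fin k → ℝ) × (Fin s → ℝ) → (Fin s → ℝ)} (hg : ContDiffOn ℝ (⊤ : ℕ∞) g U)
    (hinv : ∀ z ∈ U, IsUnit
      ((fderiv ℝ g z).comp (ContinuousLinearMap.inr ℝ (Fin k → ℝ) (Fin s → ℝ))))
    {z₀ : (Fin k → ℝ) × (Fin s → ℝ)} (hz₀ : z₀ ∈ U) :
    ContDiffAt ℝ 1 (daeB g) z₀ := by
  have hA : ContDiffAt ℝ 1 (fderiv ℝ g) z₀ :=
    (hg.contDiffAt (hUopen.mem_nhds hz₀)).fderiv_right (by exact WithTop.coe_le_coe.mpr le_top)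
  have hA₂ : ContDiffAt ℝ 1
      (fun z => (fderiv ℝ g z).comp (ContinuousLinearMap.inr ℝ (Fin k → ℝ) (Fin s → ℝ))) z₀ :=
    hA.clm_comp contDiffAt_const
  have hu := hinv z₀ hz₀
  have hinvfun : ContDiffAt ℝ 1
      (fun z => Ring.inverse ((fderiv ℝ g z).comp
        (ContinuousLinearMap.inr ℝ (Fin k → ℝ) (Fin s → ℝ)))) z₀ := by
    have h1 : ContDiffAt ℝ 1 (Ring.inverse :
        ((Fin s → ℝ) →L[ℝ] (Fin s → ℝ)) → ((Fin s → ℝ) →L[ℝ] (Fin s → ℝ)))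
        ((fderiv ℝ g z₀).comp (ContinuousLinearMap.inr ℝ (Fin k → ℝ) (Fin s → ℝ))) := by
      have := contDiffAt_ringInverse ℝ (n := 1) hu.unit
      rwa [hu.unit_spec] at this
    exact h1.comp z₀ hA₂
  exact (hinvfun.clm_comp (hA.clm_comp contDiffAt_const)).neg

theorem dae_lip {U : Set ((Fin k → ℝ) × (Fin s → ℝ))} (hUopen : IsOpen U)
    {g : (Fin k → ℝ) × (Fin s → ℝ) → (Fin s → ℝ)} (hg : ContDiffOn ℝ (⊤ : ℕ∞) g U)
    (hinv : ∀ z ∈ U, IsUnit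
      ((fderiv ℝ g z).comp (ContinuousLinearMap.inr ℝ (Fin k → ℝ) (Fin s → ℝ))))
    {f : (Fin k → ℝ) × (Fin s → ℝ) → (Fin k → ℝ)} (hf : ContDiffOn ℝ 1 f U)
    {a : ℝ → ℝ} (ha : Continuous a)
    {h : ℝ × ((Fin k → ℝ) × (Fin s → ℝ)) → (Fin k → ℝ)}
    (hh : ContinuousOn h (Set.univ ×ˢ U))
    (hhlip : ∀ (t₀ : ℝ), ∀ z₀ ∈ U, ∃ ε > (0:ℝ), ∃ K : NNReal,
      ∀ t : ℝ, |t - t₀| < ε →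
        LipschitzOnWith K (fun z => h (t, z)) (Metric.ball z₀ ε ∩ U))
    {lam : ℝ} (hlam : 0 ≤ lam) (τ : ℝ) (z₀ : (Fin k → ℝ) × (Fin s → ℝ)) (hz₀ : z₀ ∈ U) :
    ∃ ε > (0:ℝ), ∃ K : NNReal, ball z₀ ε ⊆ U ∧
      ∀ t : ℝ, |t - τ| < ε → LipschitzOnWith K (daePhi g f a h lam t) (ball z₀ ε) := by
  obtain ⟨ε₁, hε₁, Kh, hKh⟩ := hhlip τ z₀ hz₀
  obtain ⟨Kf, sf, hsf, hlipf⟩ :=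
    (hf.contDiffAt (hUopen.mem_nhds hz₀)).exists_lipschitzOnWith
  obtain ⟨ε₂, hε₂, hballsf⟩ := Metric.mem_nhds_iff.mp hsf
  obtain ⟨KB, sB, hsB, hlipB⟩ :=
    (daeB_contDiffAt hUopen hg hinv hz₀).exists_lipschitzOnWith
  obtain ⟨ε₃, hε₃, hballsB⟩ := Metric.mem_nhds_iff.mp hsB
  obtain ⟨r₀, hr₀, hballU⟩ := Metric.isOpen_iff.mp hUopen z₀ hz₀
  set r : ℝ := r₀ / 2 with hr
  have hrpos : 0 < r := by positivity
  have hcbU : closedBall z₀ r ⊆ U := fun z hz =>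
    hballU (lt_of_le_of_lt (mem_closedBall.mp hz) (by simp [hr]; linarith))
  -- bounds
  obtain ⟨Ma₀, hMa₀⟩ := (isCompact_Icc (a := τ - 1) (b := τ + 1)).exists_bound_of_continuousOn
    ha.continuousOn
  obtain ⟨Mf₀, hMf₀⟩ := (isCompact_closedBall z₀ r).exists_bound_of_continuousOn
    ((hf.continuousOn).mono hcbU)
  have hBcont : ContinuousOn (daeB g) (closedBall z₀ r) := fun z hz =>
    ((daeB_contDiffAt hUopen hg hinv (hcbU hz)).continuousAt).continuousWithinAt
  obtain ⟨MB₀, hMB₀⟩ := (isCompact_closedBall z₀ r).exists_bound_of_continuousOn hBcont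
  obtain ⟨Mh₀, hMh₀⟩ :=
    ((isCompact_Icc (a := τ - 1) (b := τ + 1)).prod (isCompact_closedBall z₀ r)
      ).exists_bound_of_continuousOn
      (hh.mono (Set.prod_mono (Set.subset_univ _) hcbU))
  set Ma := max Ma₀ 0 with hMa
  set Mf := max Mf₀ 0 with hMf
  set MB := max MB₀ 0 with hMB
  set Mh := max Mh₀ 0 with hMh
  have hMa' : 0 ≤ Ma := le_max_right _ _
  have hMf' : 0 ≤ Mf := le_max_right _ _
  have hMB' : 0 ≤ MB := le_max_right _ _
  have hMh' : 0 ≤ Mh := le_max_right _ _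
  set LF : ℝ := Ma * Kf + lam * Kh with hLF
  set MF : ℝ := Ma * Mf + lam * Mh with hMFdef
  have hLF' : 0 ≤ LF := by positivity
  have hMF' : 0 ≤ MF := by positivity
  set C : ℝ := max LF (KB * MF + MB * LF) with hC
  have hC' : 0 ≤ C := le_trans hLF' (le_max_left _ _)
  set ε : ℝ := min (min ε₁ ε₂) (min ε₃ (min r 1)) with hε
  have hεpos : 0 < ε := by
    simp only [hε, lt_min_iff]
    exact ⟨⟨hε₁, hε₂⟩, hε₃, hrpos, one_pos⟩
  have hε_r : ε ≤ r := le_trans (min_le_right _ _) (le_trans (min_le_right _ _) (min_le_left _ _))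
  have hε_1 : ε ≤ 1 := le_trans (min_le_right _ _) (le_trans (min_le_right _ _) (min_le_right _ _))
  have hε_ε₁ : ε ≤ ε₁ := le_trans (min_le_left _ _) (min_le_left _ _)
  have hε_ε₂ : ε ≤ ε₂ := le_trans (min_le_left _ _) (min_le_right _ _)
  have hε_ε₃ : ε ≤ ε₃ := le_trans (min_le_right _ _) (min_le_left _ _)
  have hballcb : ball z₀ ε ⊆ closedBall z₀ r := fun z hz =>
    mem_closedBall.mpr (le_of_lt (lt_of_lt_of_le (mem_ball.mp hz) hε_r))
  have hballU' : ball z₀ ε ⊆ U := fun z hz => hcbU (hballcb hz)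
  refine ⟨ε, hεpos, C.toNNReal, hballU', fun t ht => ?_⟩
  have htI : t ∈ Icc (τ - 1) (τ + 1) := by
    have := abs_lt.mp (lt_of_lt_of_le ht hε_1)
    constructor <;> linarith [this.1, this.2]
  have hat : |a t| ≤ Ma := le_trans (hMa₀ t htI) (le_max_left _ _)
  -- bound for F
  have hFbound : ∀ z ∈ ball z₀ ε, ‖daeF f a h lam t z‖ ≤ MF := by
    intro z hz
    have hzcb := hballcb hz
    have h1 : ‖f z‖ ≤ Mf := le_trans (hMf₀ z hzcb) (le_max_left _ _)
    have h2 : ‖h (t, z)‖ ≤ Mh :=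
      le_trans (hMh₀ (t, z) (Set.mk_mem_prod htI hzcb)) (le_max_left _ _)
    calc ‖daeF f a h lam t z‖ ≤ ‖a t • f z‖ + ‖lam • h (t, z)‖ := norm_add_le _ _
    _ = |a t| * ‖f z‖ + lam * ‖h (t, z)‖ := by
        rw [norm_smul, norm_smul, Real.norm_eq_abs, Real.norm_eq_abs, abs_of_nonneg hlam]
    _ ≤ Ma * Mf + lam * Mh :=
        add_le_add (mul_le_mul hat h1 (norm_nonneg _) hMa')
          (mul_le_mul_of_nonneg_left h2 hlam)
  -- Lipschitz for F
  have hFlip : ∀ z ∈ ball z₀ ε, ∀ w ∈ ball z₀ ε,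
      ‖daeF f a h lam t z - daeF f a h lam t w‖ ≤ LF * ‖z - w‖ := by
    intro z hz w hw
    have hfzw : ‖f z - f w‖ ≤ Kf * ‖z - w‖ := by
      have := hlipf.dist_le_mul z (hballsf (ball_subset_ball hε_ε₂ hz))
        w (hballsf (ball_subset_ball hε_ε₂ hw))
      simpa [dist_eq_norm] using this
    have hhzw : ‖h (t, z) - h (t, w)‖ ≤ Kh * ‖z - w‖ := by
      have hm : ∀ u ∈ ball z₀ ε, u ∈ ball z₀ ε₁ ∩ U := fun u hu =>
        ⟨ball_subset_ball hε_ε₁ hu, hballU' hu⟩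
      have := (hKh t (lt_of_lt_of_le ht hε_ε₁)).dist_le_mul z (hm z hz) w (hm w hw)
      simpa [dist_eq_norm] using this
    have hsplit : daeF f a h lam t z - daeF f a h lam t w
        = a t • (f z - f w) + lam • (h (t, z) - h (t, w)) := by
      simp only [daeF, smul_sub]; abel
    calc ‖daeF f a h lam t z - daeF f a h lam t w‖
        ≤ ‖a t • (f z - f w)‖ + ‖lam • (h (t, z) - h (t, w))‖ := by
          rw [hsplit]; exact norm_add_le _ _
    _ = |a t| * ‖f z - f w‖ + lam * ‖h (t, z) - h (t, w)‖ := by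
        rw [norm_smul, norm_smul, Real.norm_eq_abs, Real.norm_eq_abs, abs_of_nonneg hlam]
    _ ≤ Ma * (Kf * ‖z - w‖) + lam * (Kh * ‖z - w‖) :=
        add_le_add (mul_le_mul hat hfzw (norm_nonneg _) hMa')
          (mul_le_mul_of_nonneg_left hhzw hlam)
    _ = LF * ‖z - w‖ := by rw [hLF]; ring
  -- Lipschitz for daePhi
  rw [lipschitzOnWith_iff_dist_le_mul]
  intro z hz w hw
  rw [Real.coe_toNNReal _ hC']
  have hBzw : ‖daeB g z - daeB g w‖ ≤ KB * ‖z - w‖ := by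
    have := hlipB.dist_le_mul z (hballsB (ball_subset_ball hε_ε₃ hz))
      w (hballsB (ball_subset_ball hε_ε₃ hw))
    · simpa [dist_eq_norm] using this
  have hBw : ‖daeB g w‖ ≤ MB := le_trans (hMB₀ w (hballcb hw)) (le_max_left _ _)
  have hsecond : ‖daeB g z (daeF f a h lam t z) - daeB g w (daeF f a h lam t w)‖
      ≤ (KB * MF + MB * LF) * ‖z - w‖ := by
    calc ‖daeB g z (daeF f a h lam t z) - daeB g w (daeF f a h lam t w)‖
        ≤ ‖(daeB g z - daeB g w) (daeF f a h lam t z)‖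
          + ‖daeB g w (daeF f a h lam t z - daeF f a h lam t w)‖ := by
          have hdecomp : daeB g z (daeF f a h lam t z) - daeB g w (daeF f a h lam t w)
              = (daeB g z - daeB g w) (daeF f a h lam t z)
                + daeB g w (daeF f a h lam t z - daeF f a h lam t w) := by
            simp only [ContinuousLinearMap.sub_apply, map_sub]; abel
          rw [hdecomp]; exact norm_add_le _ _
    _ ≤ ‖daeB g z - daeB g w‖ * ‖daeF f a h lam t z‖
          + ‖daeB g w‖ * ‖daeF f a h lam t z - daeF f a h lam t w‖ := by
          gcongr <;> exact ContinuousLinearMap.le_opNorm _ _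
    _ ≤ (KB * ‖z - w‖) * MF + MB * (LF * ‖z - w‖) :=
          add_le_add (mul_le_mul hBzw (hFbound z hz) (norm_nonneg _) (by positivity))
            (mul_le_mul hBw (hFlip z hz w hw) (norm_nonneg _) hMB')
    _ = (KB * MF + MB * LF) * ‖z - w‖ := by ring
  rw [Prod.dist_eq, dist_eq_norm, dist_eq_norm, dist_eq_norm]
  apply max_le
  · exact le_trans (hFlip z hz w hw) (by
      have : LF ≤ C := le_max_left _ _
      exact mul_le_mul_of_nonneg_right this (norm_nonneg _))
  · exact le_trans hsecond (mul_le_mul_of_nonneg_right (le_max_right _ _) (norm_nonneg _))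

theorem dae_local {U : Set ((Fin k → ℝ) × (Fin s → ℝ))} (hUopen : IsOpen U)
    {g : (Fin k → ℝ) × (Fin s → ℝ) → (Fin s → ℝ)} (hg : ContDiffOn ℝ (⊤ : ℕ∞) g U)
    (hinv : ∀ z ∈ U, IsUnit
      ((fderiv ℝ g z).comp (ContinuousLinearMap.inr ℝ (Fin k → ℝ) (Fin s → ℝ))))
    {f : (Fin k → ℝ) × (Fin s → ℝ) → (Fin k → ℝ)} (hf : ContDiffOn ℝ 1 f U)
    {a : ℝ → ℝ} (ha : Continuous a)
    {h : ℝ × ((Fin k → ℝ) × (Fin s → ℝ)) → (Fin k → ℝ)}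
    (hh : ContinuousOn h (Set.univ ×ˢ U))
    (hhlip : ∀ (t₀ : ℝ), ∀ z₀ ∈ U, ∃ ε > (0:ℝ), ∃ K : NNReal,
      ∀ t : ℝ, |t - t₀| < ε →
        LipschitzOnWith K (fun z => h (t, z)) (Metric.ball z₀ ε ∩ U))
    {lam : ℝ} (hlam : 0 ≤ lam)
    {I : Set ℝ} (hI : I.OrdConnected)
    {x₁ : ℝ → (Fin k → ℝ)} {y₁ : ℝ → (Fin s → ℝ)}
    {x₂ : ℝ → (Fin k → ℝ)} {y₂ : ℝ → (Fin s → ℝ)}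
    (hsol₁ : IsDAESolOn U g f a h lam I x₁ y₁)
    (hsol₂ : IsDAESolOn U g f a h lam I x₂ y₂)
    {τ : ℝ} (hτ : τ ∈ I) (hagree : (x₁ τ, y₁ τ) = (x₂ τ, y₂ τ)) :
    ∃ δ > (0:ℝ), ∀ t ∈ I, |t - τ| < δ → (x₁ t, y₁ t) = (x₂ t, y₂ t) := by
  set z₁ : ℝ → (Fin k → ℝ) × (Fin s → ℝ) := fun t => (x₁ t, y₁ t) with hz₁
  set z₂ : ℝ → (Fin k → ℝ) × (Fin s → ℝ) := fun t => (x₂ t, y₂ t) with hz₂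
  have hmemU : z₁ τ ∈ U := hsol₁.1 τ hτ
  obtain ⟨ε, hε, K, hballU, hlip⟩ :=
    dae_lip hUopen hg hinv hf ha hh hhlip hlam τ (z₁ τ) hmemU
  -- continuity of the solution curves within I
  have hcont₁ : ∀ t ∈ I, ContinuousWithinAt z₁ I t := by
    intro t ht
    obtain ⟨_, _, hx, y', _, hy'⟩ := hsol₁
    exact ((hx t ht).continuousWithinAt.prodMk (hy' t ht).continuousWithinAt)
  have hcont₂ : ∀ t ∈ I, ContinuousWithinAt z₂ I t := by
    intro t ht
    obtain ⟨_, _, hx, y', _, hy'⟩ := hsol₂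
    exact ((hx t ht).continuousWithinAt.prodMk (hy' t ht).continuousWithinAt)
  -- choose δ so that both curves stay in the ball
  have hmem₁ : z₁ ⁻¹' ball (z₁ τ) ε ∈ nhdsWithin τ I :=
    (hcont₁ τ hτ) (ball_mem_nhds _ hε)
  have hmem₂ : z₂ ⁻¹' ball (z₁ τ) ε ∈ nhdsWithin τ I :=
    (hcont₂ τ hτ) (by
      rw [← show z₁ τ = z₂ τ from hagree]
      exact ball_mem_nhds _ hε)
  obtain ⟨δ₀, hδ₀, hδ₀sub⟩ := Metric.mem_nhdsWithin_iff.mp (Filter.inter_mem hmem₁ hmem₂)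
  set δ : ℝ := min δ₀ ε with hδdef
  have hδ : 0 < δ := lt_min hδ₀ hε
  have hδε : δ ≤ ε := min_le_right _ _
  have hin : ∀ t ∈ I, |t - τ| < δ → z₁ t ∈ ball (z₁ τ) ε ∧ z₂ t ∈ ball (z₁ τ) ε := by
    intro t ht hlt
    have : t ∈ ball τ δ₀ ∩ I :=
      ⟨mem_ball_iff_norm.mpr (lt_of_lt_of_le hlt (min_le_left _ _)), ht⟩
    exact hδ₀sub this
  refine ⟨δ, hδ, fun t ht hlt => ?_⟩
  -- the Gronwall set
  set sset : ℝ → Set ((Fin k → ℝ) × (Fin s → ℝ)) :=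
    fun u => if |u - τ| < ε then ball (z₁ τ) ε else ∅ with hsset
  have hv : ∀ u, LipschitzOnWith K (daePhi g f a h lam u) (sset u) := by
    intro u
    rw [hsset]
    dsimp only
    split_ifs with hc
    · exact hlip u hc
    · exact lipschitzOnWith_empty _ _
  have hIcc : ∀ {p q : ℝ}, p ∈ I → q ∈ I → Icc p q ⊆ I := fun hp hq => hI.out hp hq
  rcases eq_or_ne t τ with rfl | hne
  · exact hagree
  rcases lt_or_gt_of_ne hne with hlt' | hlt'
  · -- t < τ : use Icc_left on [t, τ]
    have hIccI : Icc t τ ⊆ I := hIcc ht hτ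
    have hud : UniqueDiffOn ℝ I := by
      apply uniqueDiffOn_convex (convex_iff_ordConnected.mpr hI)
      exact ⟨(t + τ) / 2, interior_mono hIccI (by
        rw [interior_Icc]; exact ⟨by linarith, by linarith⟩)⟩
    have hderiv : ∀ (z : ℝ → (Fin k → ℝ) × (Fin s → ℝ)),
        (∀ u ∈ I, HasDerivWithinAt z (daePhi g f a h lam u (z u)) I u) →
        ∀ u ∈ Ioc t τ, HasDerivWithinAt z (daePhi g f a h lam u (z u)) (Iic u) u := by
      intro z hz u hu
      refine (hz u (hIccI ⟨le_of_lt hu.1, hu.2⟩)).mono_of_mem_nhdsWithin ?_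
      refine mem_nhdsWithin.mpr ⟨Ioi t, isOpen_Ioi, hu.1, fun v hv => ?_⟩
      exact hIccI ⟨le_of_lt hv.1, le_trans hv.2 hu.2⟩
    have hd₁ : ∀ u ∈ I, HasDerivWithinAt z₁ (daePhi g f a h lam u (z₁ u)) I u :=
      fun u hu => dae_deriv hUopen hg hinv hsol₁ hu (hud u hu)
    have hd₂ : ∀ u ∈ I, HasDerivWithinAt z₂ (daePhi g f a h lam u (z₂ u)) I u :=
      fun u hu => dae_deriv hUopen hg hinv hsol₂ hu (hud u hu)
    have hmems : ∀ (z : ℝ → (Fin k → ℝ) × (Fin s → ℝ)),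
        (∀ u ∈ I, |u - τ| < δ → z u ∈ ball (z₁ τ) ε) →
        ∀ u ∈ Ioc t τ, z u ∈ sset u := by
      intro z hz u hu
      have huτ : |u - τ| < δ := by
        rw [abs_sub_lt_iff] at hlt ⊢
        constructor <;> linarith [hu.1, hu.2, hlt.1, hlt.2]
      have : sset u = ball (z₁ τ) ε := if_pos (lt_of_lt_of_le huτ hδε)
      rw [this]
      exact hz u (hIccI ⟨le_of_lt hu.1, hu.2⟩) huτ
    have := ODE_solution_unique_of_mem_Icc_left (fun u _ => hv u)
      (fun u hu => (hcont₁ u (hIccI hu)).mono hIccI)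
      (hderiv z₁ hd₁) (hmems z₁ (fun u hu h' => (hin u hu h').1))
      (fun u hu => (hcont₂ u (hIccI hu)).mono hIccI)
      (hderiv z₂ hd₂) (hmems z₂ (fun u hu h' => (hin u hu h').2))
      hagree
    exact this ⟨le_refl t, le_of_lt hlt'⟩
  · -- τ < t : use Icc_right on [τ, t]
    have hIccI : Icc τ t ⊆ I := hIcc hτ ht
    have hud : UniqueDiffOn ℝ I := by
      apply uniqueDiffOn_convex (convex_iff_ordConnected.mpr hI)
      exact ⟨(τ + t) / 2, interior_mono hIccI (by
        rw [interior_Icc]; exact ⟨by linarith, by linarith⟩)⟩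
    have hderiv : ∀ (z : ℝ → (Fin k → ℝ) × (Fin s → ℝ)),
        (∀ u ∈ I, HasDerivWithinAt z (daePhi g f a h lam u (z u)) I u) →
        ∀ u ∈ Ico τ t, HasDerivWithinAt z (daePhi g f a h lam u (z u)) (Ici u) u := by
      intro z hz u hu
      refine (hz u (hIccI ⟨hu.1, le_of_lt hu.2⟩)).mono_of_mem_nhdsWithin ?_
      refine mem_nhdsWithin.mpr ⟨Iio t, isOpen_Iio, hu.2, fun v hv => ?_⟩
      exact hIccI ⟨le_trans hu.1 hv.2, le_of_lt hv.1⟩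
    have hd₁ : ∀ u ∈ I, HasDerivWithinAt z₁ (daePhi g f a h lam u (z₁ u)) I u :=
      fun u hu => dae_deriv hUopen hg hinv hsol₁ hu (hud u hu)
    have hd₂ : ∀ u ∈ I, HasDerivWithinAt z₂ (daePhi g f a h lam u (z₂ u)) I u :=
      fun u hu => dae_deriv hUopen hg hinv hsol₂ hu (hud u hu)
    have hmems : ∀ (z : ℝ → (Fin k → ℝ) × (Fin s → ℝ)),
        (∀ u ∈ I, |u - τ| < δ → z u ∈ ball (z₁ τ) ε) →
        ∀ u ∈ Ico τ t, z u ∈ sset u := by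
      intro z hz u hu
      have huτ : |u - τ| < δ := by
        rw [abs_sub_lt_iff] at hlt ⊢
        constructor <;> linarith [hu.1, hu.2, hlt.1, hlt.2]
      have : sset u = ball (z₁ τ) ε := if_pos (lt_of_lt_of_le huτ hδε)
      rw [this]
      exact hz u (hIccI ⟨hu.1, le_of_lt hu.2⟩) huτ
    have := ODE_solution_unique_of_mem_Icc_right (fun u _ => hv u)
      (fun u hu => (hcont₁ u (hIccI hu)).mono hIccI)
      (hderiv z₁ hd₁) (hmems z₁ (fun u hu h' => (hin u hu h').1))
      (fun u hu => (hcont₂ u (hIccI hu)).mono hIccI)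
      (hderiv z₂ hd₂) (hmems z₂ (fun u hu h' => (hin u hu h').2))
      hagree
    exact this ⟨le_of_lt hlt', le_refl t⟩


/-- Uniqueness: two solutions of the DAE on an interval `I` which agree at some `t₀ ∈ I`
coincide on `I`. -/
theorem stmt18 {k s : ℕ}
    (U : Set ((Fin k → ℝ) × (Fin s → ℝ))) (hUopen : IsOpen U) (hUconn : IsConnected U)
    (g : (Fin k → ℝ) × (Fin s → ℝ) → (Fin s → ℝ)) (hg : ContDiffOn ℝ (⊤ : ℕ∞) g U)
    (hinv : ∀ z ∈ U, IsUnit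
      ((fderiv ℝ g z).comp (ContinuousLinearMap.inr ℝ (Fin k → ℝ) (Fin s → ℝ))))
    (f : (Fin k → ℝ) × (Fin s → ℝ) → (Fin k → ℝ)) (hf : ContDiffOn ℝ 1 f U)
    (a : ℝ → ℝ) (ha : Continuous a)
    (h : ℝ × ((Fin k → ℝ) × (Fin s → ℝ)) → (Fin k → ℝ))
    (hh : ContinuousOn h (Set.univ ×ˢ U))
    (hhlip : ∀ (t₀ : ℝ), ∀ z₀ ∈ U, ∃ ε > (0:ℝ), ∃ K : NNReal,
      ∀ t : ℝ, |t - t₀| < ε →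
        LipschitzOnWith K (fun z => h (t, z)) (Metric.ball z₀ ε ∩ U))
    (lam : ℝ) (hlam : 0 ≤ lam)
    (I : Set ℝ) (hI : I.OrdConnected) (t₀ : ℝ) (ht₀ : t₀ ∈ I)
    (x₁ : ℝ → (Fin k → ℝ)) (y₁ : ℝ → (Fin s → ℝ))
    (x₂ : ℝ → (Fin k → ℝ)) (y₂ : ℝ → (Fin s → ℝ))
    (hsol₁ : IsDAESolOn U g f a h lam I x₁ y₁)
    (hsol₂ : IsDAESolOn U g f a h lam I x₂ y₂)
    (heq : (x₁ t₀, y₁ t₀) = (x₂ t₀, y₂ t₀)) :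
    ∀ t ∈ I, (x₁ t, y₁ t) = (x₂ t, y₂ t) := by
  set z₁ : ℝ → (Fin k → ℝ) × (Fin s → ℝ) := fun t => (x₁ t, y₁ t) with hz₁
  set z₂ : ℝ → (Fin k → ℝ) × (Fin s → ℝ) := fun t => (x₂ t, y₂ t) with hz₂
  have hcont₁ : ∀ t ∈ I, ContinuousWithinAt z₁ I t := by
    intro t ht
    obtain ⟨_, _, hx, y', _, hy'⟩ := hsol₁
    exact ((hx t ht).continuousWithinAt.prodMk (hy' t ht).continuousWithinAt)
  have hcont₂ : ∀ t ∈ I, ContinuousWithinAt z₂ I t := by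
    intro t ht
    obtain ⟨_, _, hx, y', _, hy'⟩ := hsol₂
    exact ((hx t ht).continuousWithinAt.prodMk (hy' t ht).continuousWithinAt)
  set S : Set ℝ := {t | t ∈ I ∧ z₁ t = z₂ t} with hS
  have hclosS : ∀ t ∈ I, t ∈ closure S → z₁ t = z₂ t := by
    intro t ht hc
    have hne : (nhdsWithin t S).NeBot := mem_closure_iff_nhdsWithin_neBot.mp hc
    have hm : nhdsWithin t S ≤ nhdsWithin t I := nhdsWithin_mono t (fun u hu => hu.1)
    have h₁ : Filter.Tendsto z₁ (nhdsWithin t S) (nhds (z₁ t)) := (hcont₁ t ht).mono_left hm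
    have h₂ : Filter.Tendsto z₂ (nhdsWithin t S) (nhds (z₂ t)) := (hcont₂ t ht).mono_left hm
    have heqev : z₁ =ᶠ[nhdsWithin t S] z₂ :=
      Filter.eventually_of_mem self_mem_nhdsWithin (fun u hu => hu.2)
    exact tendsto_nhds_unique (h₁.congr' heqev) h₂
  set u : Set ℝ := {t : ℝ | ∃ δ > (0:ℝ), ∀ t' ∈ I, |t' - t| < δ → z₁ t' = z₂ t'} with hu
  have hu_open : IsOpen u := by
    rw [Metric.isOpen_iff]
    rintro t ⟨δ, hδ, hprop⟩
    refine ⟨δ / 2, by linarith, fun t'' ht'' => ?_⟩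
    refine ⟨δ / 2, by linarith, fun t' ht' hlt => ?_⟩
    apply hprop t' ht'
    have h1 : |t'' - t| < δ / 2 := by rw [mem_ball, Real.dist_eq] at ht''; exact ht''
    have h2 := abs_sub_le t' t'' t
    linarith
  have hSu : ∀ t ∈ I, z₁ t = z₂ t → t ∈ u := by
    intro t ht hagree
    obtain ⟨δ, hδ, hprop⟩ :=
      dae_local hUopen hg hinv hf ha hh hhlip hlam hI hsol₁ hsol₂ ht hagree
    exact ⟨δ, hδ, hprop⟩
  set v : Set ℝ := (closure S)ᶜ with hv
  have hpre : IsPreconnected I := isPreconnected_iff_ordConnected.mpr hI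
  have hsub : I ⊆ u ∪ v := by
    intro t ht
    by_cases hc : t ∈ closure S
    · exact Or.inl (hSu t ht (hclosS t ht hc))
    · exact Or.inr hc
  have hIu : (I ∩ u).Nonempty := ⟨t₀, ht₀, hSu t₀ ht₀ heq⟩
  have hdisj : (I ∩ (u ∩ v)) = ∅ := by
    ext t
    simp only [Set.mem_inter_iff, Set.mem_empty_iff_false, iff_false, not_and]
    intro ht htu htv
    obtain ⟨δ, hδ, hprop⟩ := htu
    have : z₁ t = z₂ t := hprop t ht (by simpa using hδ)
    exact htv (subset_closure ⟨ht, this⟩)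
  have hIv : (I ∩ v) = ∅ := by
    by_contra hne
    have hne' : (I ∩ v).Nonempty := Set.nonempty_iff_ne_empty.mpr hne
    have := hpre u v hu_open (isClosed_closure.isOpen_compl) hsub hIu hne'
    rw [hdisj] at this
    exact Set.not_nonempty_empty this
  intro t ht
  have : t ∉ v := fun hvt => (Set.eq_empty_iff_forall_notMem.mp hIv t) ⟨ht, hvt⟩
  exact hclosS t ht (not_not.mp this)
end

section
/- Let λ ≥ 0, t₀ ∈ ℝ and (p₀,q₀) ∈ M := g⁻¹(0). Then there exist δ > 0 and a solution (x,y) of the DAE ẋ = a(t)f(x,y) + λh(t,x,y), g(x,y) = 0 on the interval (t₀−δ, t₀+δ) with (x(t₀),y(t₀)) = (p₀,q₀). -/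
open Set Metric Filter Topology
open scoped NNReal

lemma mkEquiv {E F : Type*} [NormedAddCommGroup E] [NormedSpace ℝ E]
    [NormedAddCommGroup F] [NormedSpace ℝ F]
    (T : (E × F) →L[ℝ] F) (hT : IsUnit (T.comp (ContinuousLinearMap.inr ℝ E F))) :
    ∃ e : (E × F) ≃L[ℝ] (E × F),
      (e : (E × F) →L[ℝ] (E × F)) = (ContinuousLinearMap.fst ℝ E F).prod T := by
  obtain ⟨u, hu⟩ := hT
  have hBiB : ∀ v, (↑u⁻¹ : F →L[ℝ] F) ((↑u : F →L[ℝ] F) v) = v := fun v => by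
    simpa only [ContinuousLinearMap.mul_apply, ContinuousLinearMap.one_apply] using
      DFunLike.congr_fun u.inv_mul v
  have hBBi : ∀ v, (↑u : F →L[ℝ] F) ((↑u⁻¹ : F →L[ℝ] F) v) = v := fun v => by
    simpa only [ContinuousLinearMap.mul_apply, ContinuousLinearMap.one_apply] using
      DFunLike.congr_fun u.mul_inv v
  have hBval : ∀ v, (↑u : F →L[ℝ] F) v = T (0, v) := fun v => by rw [hu]; rfl
  have hTsplit : ∀ z : E × F, T z = T (z.1, 0) + (↑u : F →L[ℝ] F) z.2 := fun z => by
    rw [hBval, ← map_add]; congr 1; ext <;> simp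
  refine ⟨ContinuousLinearEquiv.equivOfInverse
    ((ContinuousLinearMap.fst ℝ E F).prod T)
    ((ContinuousLinearMap.fst ℝ E F).prod
      ((↑u⁻¹ : F →L[ℝ] F).comp ((ContinuousLinearMap.snd ℝ E F) -
        T.comp ((ContinuousLinearMap.inl ℝ E F).comp (ContinuousLinearMap.fst ℝ E F)))))
    (fun z => ?_) (fun w => ?_), rfl⟩
  · ext
    · rfl
    · simp only [ContinuousLinearMap.prod_apply, ContinuousLinearMap.coe_comp',
        Function.comp_apply, ContinuousLinearMap.coe_sub', Pi.sub_apply,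
        ContinuousLinearMap.coe_fst', ContinuousLinearMap.coe_snd',
        ContinuousLinearMap.inl_apply]
      rw [hTsplit z]
      simp [hBiB]
  · ext
    · rfl
    · simp only [ContinuousLinearMap.prod_apply, ContinuousLinearMap.coe_comp',
        Function.comp_apply, ContinuousLinearMap.coe_sub', Pi.sub_apply,
        ContinuousLinearMap.coe_fst', ContinuousLinearMap.coe_snd',
        ContinuousLinearMap.inl_apply]
      rw [hTsplit]
      simp [hBBi]

lemma exists_implicit {k s : ℕ} (U : Set ((Fin k → ℝ) × (Fin s → ℝ))) (hUopen : IsOpen U)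
    (g : (Fin k → ℝ) × (Fin s → ℝ) → (Fin s → ℝ)) (hg : ContDiffOn ℝ (⊤ : ℕ∞) g U)
    (p₀ : Fin k → ℝ) (q₀ : Fin s → ℝ) (hz₀ : (p₀, q₀) ∈ U) (hgz₀ : g (p₀, q₀) = 0)
    (hinv : IsUnit ((fderiv ℝ g (p₀, q₀)).comp
      (ContinuousLinearMap.inr ℝ (Fin k → ℝ) (Fin s → ℝ)))) :
    ∃ φ : (Fin k → ℝ) → (Fin s → ℝ), ContDiffAt ℝ 1 φ p₀ ∧ φ p₀ = q₀ ∧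
      ∀ᶠ p in 𝓝 p₀, (p, φ p) ∈ U ∧ g (p, φ p) = 0 := by
  obtain ⟨e, he⟩ := mkEquiv (fderiv ℝ g (p₀, q₀)) hinv
  have hgat : ContDiffAt ℝ 1 g (p₀, q₀) :=
    (hg.contDiffAt (hUopen.mem_nhds hz₀)).of_le (by simp)
  have hgd : HasFDerivAt g (fderiv ℝ g (p₀, q₀)) (p₀, q₀) :=
    (hgat.differentiableAt one_ne_zero).hasFDerivAt
  set ψ : (Fin k → ℝ) × (Fin s → ℝ) → (Fin k → ℝ) × (Fin s → ℝ) :=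
    fun z => (z.1, g z) with hψdef
  have hψ : ContDiffAt ℝ 1 ψ (p₀, q₀) := contDiffAt_fst.prodMk hgat
  have hψd : HasFDerivAt ψ (e : ((Fin k → ℝ) × (Fin s → ℝ)) →L[ℝ]
      ((Fin k → ℝ) × (Fin s → ℝ))) (p₀, q₀) := by
    rw [he]
    exact (hasFDerivAt_fst).prodMk hgd
  have hS : HasStrictFDerivAt ψ (e : ((Fin k → ℝ) × (Fin s → ℝ)) →L[ℝ]
      ((Fin k → ℝ) × (Fin s → ℝ))) (p₀, q₀) := hψ.hasStrictFDerivAt' hψd one_ne_zero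
  set χ := hS.localInverse ψ e (p₀, q₀) with hχdef
  have hψz₀ : ψ (p₀, q₀) = (p₀, 0) := by simp [hψdef, hgz₀]
  have hχcd : ContDiffAt ℝ 1 χ (p₀, 0) := by
    have := hψ.to_localInverse (f' := e) hψd one_ne_zero
    rwa [hψz₀] at this
  have hχz : χ (p₀, 0) = (p₀, q₀) := by
    have := hS.localInverse_apply_image
    rwa [hψz₀] at this
  have hri : ∀ᶠ w in 𝓝 ((p₀ : Fin k → ℝ), (0 : Fin s → ℝ)), ψ (χ w) = w := by
    have := hS.eventually_right_inverse
    rwa [hψz₀] at this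
  have hU' : ∀ᶠ w in 𝓝 ((p₀ : Fin k → ℝ), (0 : Fin s → ℝ)), χ w ∈ U := by
    have hc : ContinuousAt χ (p₀, 0) := hχcd.continuousAt
    have : U ∈ 𝓝 (χ (p₀, 0)) := by rw [hχz]; exact hUopen.mem_nhds hz₀
    exact hc.eventually_mem this
  refine ⟨fun p => (χ (p, 0)).2, ?_, ?_, ?_⟩
  · have h1 : ContDiffAt ℝ 1 (fun p : Fin k → ℝ => ((p : Fin k → ℝ), (0 : Fin s → ℝ))) p₀ :=
      (contDiff_id.prodMk contDiff_const).contDiffAt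
    exact (contDiffAt_snd.comp _ (hχcd.comp p₀ h1))
  · show (χ (p₀, 0)).2 = q₀
    rw [hχz]
  · have hmap : ContinuousAt (fun p : Fin k → ℝ => ((p : Fin k → ℝ), (0 : Fin s → ℝ))) p₀ :=
      (continuous_id.prodMk continuous_const).continuousAt
    have hev := hmap.eventually (hri.and hU')
    filter_upwards [hev] with p hp
    obtain ⟨hri', hU''⟩ := hp
    have h1 : (χ (p, 0)).1 = p := congrArg Prod.fst hri'
    have hx : (p, (χ (p, 0)).2) = χ (p, 0) := Prod.ext h1.symm rfl
    rw [hx]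
    refine ⟨hU'', ?_⟩
    have h2 := congrArg Prod.snd hri'
    simpa [hψdef] using h2

/-- Local existence: through every point `(p₀,q₀) ∈ M = g⁻¹(0)` and every initial time `t₀`
there is a local solution of the DAE `ẋ = a(t)f(x,y) + λh(t,x,y)`, `g(x,y) = 0`. -/
theorem stmt19 {k s : ℕ}
    (U : Set ((Fin k → ℝ) × (Fin s → ℝ))) (hUopen : IsOpen U) (hUconn : IsConnected U)
    (g : (Fin k → ℝ) × (Fin s → ℝ) → (Fin s → ℝ)) (hg : ContDiffOn ℝ (⊤ : ℕ∞) g U)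
    (hinv : ∀ z ∈ U, IsUnit
      ((fderiv ℝ g z).comp (ContinuousLinearMap.inr ℝ (Fin k → ℝ) (Fin s → ℝ))))
    (f : (Fin k → ℝ) × (Fin s → ℝ) → (Fin k → ℝ)) (hf : ContDiffOn ℝ 1 f U)
    (a : ℝ → ℝ) (ha : Continuous a)
    (h : ℝ × ((Fin k → ℝ) × (Fin s → ℝ)) → (Fin k → ℝ))
    (hh : ContinuousOn h (Set.univ ×ˢ U))
    (hhlip : ∀ (t₁ : ℝ), ∀ z₁ ∈ U, ∃ ε > (0:ℝ), ∃ K : NNReal,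
      ∀ t : ℝ, |t - t₁| < ε →
        LipschitzOnWith K (fun z => h (t, z)) (Metric.ball z₁ ε ∩ U))
    (lam : ℝ) (hlam : 0 ≤ lam)
    (t₀ : ℝ) (p₀ : Fin k → ℝ) (q₀ : Fin s → ℝ)
    (hz₀ : (p₀, q₀) ∈ U) (hgz₀ : g (p₀, q₀) = 0) :
    ∃ δ > (0:ℝ), ∃ x : ℝ → (Fin k → ℝ), ∃ y : ℝ → (Fin s → ℝ),
      (∀ t ∈ Set.Ioo (t₀ - δ) (t₀ + δ), (x t, y t) ∈ U) ∧
      (∀ t ∈ Set.Ioo (t₀ - δ) (t₀ + δ), g (x t, y t) = 0) ∧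
      (∀ t ∈ Set.Ioo (t₀ - δ) (t₀ + δ),
        HasDerivAt x (a t • f (x t, y t) + lam • h (t, (x t, y t))) t) ∧
      (∃ y' : ℝ → (Fin s → ℝ), ContinuousOn y' (Set.Ioo (t₀ - δ) (t₀ + δ)) ∧
        ∀ t ∈ Set.Ioo (t₀ - δ) (t₀ + δ), HasDerivAt y (y' t) t) ∧
      x t₀ = p₀ ∧ y t₀ = q₀ := by
  classical
  obtain ⟨φ, hφcd, hφ0, hφev⟩ := exists_implicit U hUopen g hg p₀ q₀ hz₀ hgz₀ (hinv _ hz₀)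
  obtain ⟨r, hr, hrball⟩ := Metric.eventually_nhds_iff_ball.mp hφev
  obtain ⟨ε₁, hε₁, K₁, hK₁⟩ := hhlip t₀ (p₀, q₀) hz₀
  obtain ⟨K₂, s₂, hs₂, hlip₂⟩ := (hf.contDiffAt (hUopen.mem_nhds hz₀)).exists_lipschitzOnWith
  obtain ⟨ε₂, hε₂, hball₂⟩ := Metric.mem_nhds_iff.mp (Filter.inter_mem hs₂ (hUopen.mem_nhds hz₀))
  obtain ⟨K₃, s₃, hs₃, hlip₃⟩ := hφcd.exists_lipschitzOnWith
  obtain ⟨ε₃, hε₃, hball₃⟩ := Metric.mem_nhds_iff.mp hs₃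
  obtain ⟨u, hu, hφu⟩ := hφcd.contDiffOn le_rfl (by simp)
  have hvopen : IsOpen (interior u) := isOpen_interior
  have hpv : p₀ ∈ interior u := mem_interior_iff_mem_nhds.mpr hu
  have hφv : ContDiffOn ℝ 1 φ (interior u) := hφu.mono interior_subset
  obtain ⟨ε₄, hε₄, hball₄⟩ := Metric.mem_nhds_iff.mp (hvopen.mem_nhds hpv)
  set Φ : (Fin k → ℝ) → (Fin k → ℝ) × (Fin s → ℝ) := fun p => (p, φ p) with hΦdef
  have hΦ0 : Φ p₀ = (p₀, q₀) := by simp [hΦdef, hφ0]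
  set Kφ : ℝ≥0 := max 1 K₃ with hKφdef
  have hΦlip : LipschitzOnWith Kφ Φ (ball p₀ ε₃) :=
    (LipschitzWith.id.lipschitzOnWith).prodMk (hlip₃.mono hball₃)
  have hKφ1 : (1:ℝ) ≤ (Kφ:ℝ) := by exact_mod_cast le_max_left 1 K₃
  have hKφpos : (0:ℝ) < (Kφ:ℝ) := lt_of_lt_of_le one_pos hKφ1
  set ρ := min ε₃ (min r (min ε₁ ε₂)) with hρdef
  have hρ : 0 < ρ := lt_min hε₃ (lt_min hr (lt_min hε₁ hε₂))
  set R := ρ / (2 * (Kφ:ℝ)) with hRdef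
  have hR : 0 < R := div_pos hρ (by positivity)
  have hKφR : (Kφ:ℝ) * R = ρ / 2 := by
    rw [hRdef]; field_simp
  have hRhalf : R ≤ ρ / 2 := by
    calc R = ((Kφ:ℝ) * R) / (Kφ:ℝ) := by field_simp
    _ ≤ ((Kφ:ℝ) * R) / 1 := by
        apply div_le_div_of_nonneg_left _ one_pos hKφ1
        rw [hKφR]; positivity
    _ = (Kφ:ℝ) * R := div_one _
    _ = ρ / 2 := hKφR
  have hRρ : R < ρ := lt_of_le_of_lt hRhalf (half_lt_self hρ)
  have hsubball : closedBall p₀ R ⊆ ball p₀ ε₃ :=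
    closedBall_subset_ball (lt_of_lt_of_le hRρ (min_le_left _ _))
  have hΦnear : ∀ p ∈ closedBall p₀ R, dist (Φ p) (p₀, q₀) < min ε₁ ε₂ := by
    intro p hp
    have h1 : dist (Φ p) (Φ p₀) ≤ (Kφ:ℝ) * dist p p₀ :=
      hΦlip.dist_le_mul p (hsubball hp) p₀ (mem_ball_self hε₃)
    have h2 : dist p p₀ ≤ R := mem_closedBall.mp hp
    have h3 : (Kφ:ℝ) * dist p p₀ ≤ (Kφ:ℝ) * R := by
      apply mul_le_mul_of_nonneg_left h2 hKφpos.le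
    have h4 : ρ ≤ min ε₁ ε₂ := le_trans (min_le_right _ _) (min_le_right _ _)
    rw [hΦ0] at h1
    calc dist (Φ p) (p₀, q₀) ≤ (Kφ:ℝ) * R := le_trans h1 h3
      _ = ρ / 2 := hKφR
      _ < ρ := half_lt_self hρ
      _ ≤ min ε₁ ε₂ := h4
  have hmemU : ∀ p ∈ closedBall p₀ R, Φ p ∈ U ∧ g (Φ p) = 0 := by
    intro p hp
    have : p ∈ ball p₀ r := by
      have h2 : dist p p₀ ≤ R := mem_closedBall.mp hp
      have : R < r := lt_of_lt_of_le hRρ (le_trans (min_le_right _ _) (min_le_left _ _))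
      exact mem_ball.mpr (lt_of_le_of_lt h2 this)
    exact hrball p this
  have hmem₁ : ∀ p ∈ closedBall p₀ R, Φ p ∈ ball ((p₀, q₀)) ε₁ ∩ U := fun p hp =>
    ⟨mem_ball.mpr (lt_of_lt_of_le (hΦnear p hp) (min_le_left _ _)), (hmemU p hp).1⟩
  have hmem₂ : ∀ p ∈ closedBall p₀ R, Φ p ∈ s₂ := fun p hp =>
    (hball₂ (mem_ball.mpr (lt_of_lt_of_le (hΦnear p hp) (min_le_right _ _)))).1
  obtain ⟨A, hA⟩ := (isCompact_Icc (a := t₀ - ε₁/2)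
    (b := t₀ + ε₁/2)).exists_bound_of_continuousOn ha.continuousOn
  have hA0 : 0 ≤ A := le_trans (norm_nonneg _) (hA t₀ ⟨by linarith, by linarith⟩)
  have hLr0 : 0 ≤ (A * (K₂:ℝ) + lam * (K₁:ℝ)) * (Kφ:ℝ) :=
    mul_nonneg (add_nonneg (mul_nonneg hA0 K₂.2) (mul_nonneg hlam K₁.2)) Kφ.2
  set L : ℝ≥0 := ⟨(A * (K₂:ℝ) + lam * (K₁:ℝ)) * (Kφ:ℝ), hLr0⟩ with hLdef
  set F : ℝ → (Fin k → ℝ) → (Fin k → ℝ) :=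
    fun t p => a t • f (Φ p) + lam • h (t, Φ p) with hFdef
  have hFlip : ∀ t ∈ Icc (t₀ - ε₁/2) (t₀ + ε₁/2),
      LipschitzOnWith L (F t) (closedBall p₀ R) := by
    intro t ht
    have hta : |t - t₀| < ε₁ := by
      rw [abs_sub_lt_iff]; exact ⟨by linarith [ht.2], by linarith [ht.1]⟩
    apply LipschitzOnWith.of_dist_le_mul
    intro p hp p' hp'
    have hΦd : dist (Φ p) (Φ p') ≤ (Kφ:ℝ) * dist p p' :=
      hΦlip.dist_le_mul p (hsubball hp) p' (hsubball hp')
    have hfd : dist (f (Φ p)) (f (Φ p')) ≤ (K₂:ℝ) * dist (Φ p) (Φ p') :=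
      hlip₂.dist_le_mul _ (hmem₂ p hp) _ (hmem₂ p' hp')
    have hhd : dist (h (t, Φ p)) (h (t, Φ p')) ≤ (K₁:ℝ) * dist (Φ p) (Φ p') :=
      (hK₁ t hta).dist_le_mul _ (hmem₁ p hp) _ (hmem₁ p' hp')
    have habs : |a t| ≤ A := by
      have := hA t ht
      rwa [Real.norm_eq_abs] at this
    have hsplit : dist (F t p) (F t p') ≤
        |a t| * dist (f (Φ p)) (f (Φ p')) + lam * dist (h (t, Φ p)) (h (t, Φ p')) := by
      rw [dist_eq_norm, hFdef]
      have heq : (a t • f (Φ p) + lam • h (t, Φ p)) - (a t • f (Φ p') + lam • h (t, Φ p'))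
          = a t • (f (Φ p) - f (Φ p')) + lam • (h (t, Φ p) - h (t, Φ p')) := by
        simp [smul_sub]; abel
      rw [heq]
      calc ‖a t • (f (Φ p) - f (Φ p')) + lam • (h (t, Φ p) - h (t, Φ p'))‖
          ≤ ‖a t • (f (Φ p) - f (Φ p'))‖ + ‖lam • (h (t, Φ p) - h (t, Φ p'))‖ :=
            norm_add_le _ _
        _ = |a t| * ‖f (Φ p) - f (Φ p')‖ + lam * ‖h (t, Φ p) - h (t, Φ p')‖ := by
            rw [norm_smul, norm_smul, Real.norm_eq_abs, Real.norm_eq_abs, abs_of_nonneg hlam]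
        _ = |a t| * dist (f (Φ p)) (f (Φ p')) + lam * dist (h (t, Φ p)) (h (t, Φ p')) := by
            rw [dist_eq_norm, dist_eq_norm]
    have h1 : |a t| * dist (f (Φ p)) (f (Φ p')) ≤ A * ((K₂:ℝ) * ((Kφ:ℝ) * dist p p')) := by
      apply mul_le_mul habs _ dist_nonneg hA0
      exact le_trans hfd (mul_le_mul_of_nonneg_left hΦd K₂.2)
    have h2 : lam * dist (h (t, Φ p)) (h (t, Φ p')) ≤
        lam * ((K₁:ℝ) * ((Kφ:ℝ) * dist p p')) := by
      apply mul_le_mul_of_nonneg_left _ hlam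
      exact le_trans hhd (mul_le_mul_of_nonneg_left hΦd K₁.2)
    have : (L : ℝ) = (A * (K₂:ℝ) + lam * (K₁:ℝ)) * (Kφ:ℝ) := rfl
    rw [this]
    calc dist (F t p) (F t p') ≤
        A * ((K₂:ℝ) * ((Kφ:ℝ) * dist p p')) + lam * ((K₁:ℝ) * ((Kφ:ℝ) * dist p p')) :=
          le_trans hsplit (add_le_add h1 h2)
      _ = (A * (K₂:ℝ) + lam * (K₁:ℝ)) * (Kφ:ℝ) * dist p p' := by ring
  have hopenUU : IsOpen ((univ : Set ℝ) ×ˢ U) := isOpen_univ.prod hUopen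
  have hFcont : ∀ p ∈ closedBall p₀ R, Continuous (fun t => F t p) := by
    intro p hp
    have hU' : Φ p ∈ U := (hmemU p hp).1
    have hhc : Continuous (fun t => h (t, Φ p)) := by
      refine continuous_iff_continuousAt.mpr fun t => ?_
      have hca : ContinuousAt h (t, Φ p) :=
        hh.continuousAt (hopenUU.mem_nhds ⟨trivial, hU'⟩)
      have hin : Continuous (fun t : ℝ => ((t, Φ p) : ℝ × ((Fin k → ℝ) × (Fin s → ℝ)))) :=
        continuous_id.prodMk continuous_const
      show ContinuousAt (h ∘ fun t : ℝ => ((t, Φ p) : ℝ × ((Fin k → ℝ) × (Fin s → ℝ)))) t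
      exact ContinuousAt.comp
        (f := fun t : ℝ => ((t, Φ p) : ℝ × ((Fin k → ℝ) × (Fin s → ℝ)))) hca hin.continuousAt
    exact (ha.smul continuous_const).add (hhc.const_smul lam)
  have hΦcont : ContinuousOn Φ (closedBall p₀ R) := (hΦlip.mono hsubball).continuousOn
  have hKtc : IsCompact ((Icc (t₀ - ε₁/2) (t₀ + ε₁/2)) ×ˢ closedBall p₀ R) :=
    isCompact_Icc.prod (isCompact_closedBall _ _)
  have hFcontOn : ContinuousOn (fun q : ℝ × (Fin k → ℝ) => F q.1 q.2)
      ((Icc (t₀ - ε₁/2) (t₀ + ε₁/2)) ×ˢ closedBall p₀ R) := by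
    have hw : ContinuousOn (fun q : ℝ × (Fin k → ℝ) => Φ q.2)
        ((Icc (t₀ - ε₁/2) (t₀ + ε₁/2)) ×ˢ closedBall p₀ R) :=
      hΦcont.comp continuous_snd.continuousOn (fun q hq => hq.2)
    have hwU : ∀ q ∈ (Icc (t₀ - ε₁/2) (t₀ + ε₁/2)) ×ˢ closedBall p₀ R, Φ q.2 ∈ U :=
      fun q hq => (hmemU _ hq.2).1
    have h1 : ContinuousOn (fun q : ℝ × (Fin k → ℝ) => a q.1 • f (Φ q.2))
        ((Icc (t₀ - ε₁/2) (t₀ + ε₁/2)) ×ˢ closedBall p₀ R) :=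
      ((ha.comp continuous_fst).continuousOn).smul (hf.continuousOn.comp hw hwU)
    have h2 : ContinuousOn (fun q : ℝ × (Fin k → ℝ) => lam • h (q.1, Φ q.2))
        ((Icc (t₀ - ε₁/2) (t₀ + ε₁/2)) ×ˢ closedBall p₀ R) :=
      (hh.comp (continuous_fst.continuousOn.prodMk hw)
        (fun q hq => ⟨trivial, hwU q hq⟩)).const_smul lam
    exact h1.add h2
  obtain ⟨C₀, hC₀⟩ := hKtc.exists_bound_of_continuousOn hFcontOn
  have hCpos : (0:ℝ) < max C₀ 1 := lt_of_lt_of_le one_pos (le_max_right _ _)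
  have hCb : ∀ t ∈ Icc (t₀ - ε₁/2) (t₀ + ε₁/2), ∀ p ∈ closedBall p₀ R,
      ‖F t p‖ ≤ max C₀ 1 := fun t ht p hp =>
    le_trans (hC₀ (t, p) ⟨ht, hp⟩) (le_max_left _ _)
  set δ := min (ε₁/2) (R / max C₀ 1) with hδdef
  have hδ : 0 < δ := lt_min (half_pos hε₁) (div_pos hR hCpos)
  have hIccsub : Icc (t₀ - δ) (t₀ + δ) ⊆ Icc (t₀ - ε₁/2) (t₀ + ε₁/2) := by
    apply Icc_subset_Icc
    · have := min_le_left (ε₁/2) (R / max C₀ 1); linarith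
    · have := min_le_left (ε₁/2) (R / max C₀ 1); linarith
  have hpl : IsPicardLindelof F (tmin := t₀ - δ) (tmax := t₀ + δ)
      ⟨t₀, ⟨by linarith, by linarith⟩⟩ p₀ ⟨R, hR.le⟩ 0 ⟨max C₀ 1, hCpos.le⟩ L :=
    { lipschitzOnWith := fun t ht => hFlip t (hIccsub ht)
      continuousOn := fun p hp => (hFcont p hp).continuousOn
      norm_le := fun t ht p hp => hCb t (hIccsub ht) p hp
      mul_max_le := by
        show (max C₀ 1) * max (t₀ + δ - t₀) (t₀ - (t₀ - δ)) ≤ R - ((0:ℝ≥0):ℝ)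
        rw [NNReal.coe_zero, sub_zero]
        have hmax : max (t₀ + δ - t₀) (t₀ - (t₀ - δ)) = δ := by
          have h1 : t₀ + δ - t₀ = δ := by ring
          have h2 : t₀ - (t₀ - δ) = δ := by ring
          rw [h1, h2, max_self]
        rw [hmax]
        have hδR : δ ≤ R / max C₀ 1 := min_le_right _ _
        calc (max C₀ 1) * δ ≤ (max C₀ 1) * (R / max C₀ 1) :=
              mul_le_mul_of_nonneg_left hδR hCpos.le
          _ = R := by field_simp }
  obtain ⟨x, hx0, hxd⟩ := hpl.exists_eq_forall_mem_Icc_hasDerivWithinAt₀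
  replace hx0 : x t₀ = p₀ := hx0
  have hxdAt : ∀ t ∈ Ioo (t₀ - δ) (t₀ + δ), HasDerivAt x (F t (x t)) t := fun t ht =>
    (hxd t (Ioo_subset_Icc_self ht)).hasDerivAt (Icc_mem_nhds ht.1 ht.2)
  have hm0 : 0 < min R ε₄ := lt_min hR hε₄
  have hxc : ContinuousAt x t₀ := (hxdAt t₀ ⟨by linarith, by linarith⟩).continuousAt
  have hev : ∀ᶠ t in 𝓝 t₀, x t ∈ ball p₀ (min R ε₄) := by
    apply hxc.eventually_mem
    rw [hx0]
    exact ball_mem_nhds _ hm0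
  obtain ⟨δ₂, hδ₂, hδ₂p⟩ := Metric.eventually_nhds_iff.mp hev
  set δ' := min δ δ₂ with hδ'def
  have hδ' : 0 < δ' := lt_min hδ hδ₂
  have hsubIoo : Ioo (t₀ - δ') (t₀ + δ') ⊆ Ioo (t₀ - δ) (t₀ + δ) := by
    apply Ioo_subset_Ioo
    · have := min_le_left δ δ₂; linarith
    · have := min_le_left δ δ₂; linarith
  have hxball : ∀ t ∈ Ioo (t₀ - δ') (t₀ + δ'), x t ∈ ball p₀ (min R ε₄) := by
    intro t ht
    apply hδ₂p
    rw [Real.dist_eq, abs_sub_lt_iff]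
    have := min_le_right δ δ₂
    exact ⟨by linarith [ht.2], by linarith [ht.1]⟩
  have hxcb : ∀ t ∈ Ioo (t₀ - δ') (t₀ + δ'), x t ∈ closedBall p₀ R := fun t ht =>
    ball_subset_closedBall (ball_subset_ball (min_le_left _ _) (hxball t ht))
  have hxv : ∀ t ∈ Ioo (t₀ - δ') (t₀ + δ'), x t ∈ interior u := fun t ht =>
    hball₄ (ball_subset_ball (min_le_right _ _) (hxball t ht))
  have hxU : ∀ t ∈ Ioo (t₀ - δ') (t₀ + δ'), Φ (x t) ∈ U ∧ g (Φ (x t)) = 0 := fun t ht =>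
    hmemU (x t) (hxcb t ht)
  have hxcont : ContinuousOn x (Ioo (t₀ - δ') (t₀ + δ')) := fun t ht =>
    (hxdAt t (hsubIoo ht)).continuousAt.continuousWithinAt
  refine ⟨δ', hδ', x, fun t => φ (x t), fun t ht => (hxU t ht).1, fun t ht => (hxU t ht).2,
    fun t ht => hxdAt t (hsubIoo ht), ?_, hx0, by show φ (x t₀) = q₀; rw [hx0, hφ0]⟩
  refine ⟨fun t => fderiv ℝ φ (x t) (F t (x t)), ?_, ?_⟩
  · have hfderivcont : ContinuousOn (fderiv ℝ φ) (interior u) :=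
      hφv.continuousOn_fderiv_of_isOpen hvopen le_rfl
    have h1 : ContinuousOn (fun t => fderiv ℝ φ (x t)) (Ioo (t₀ - δ') (t₀ + δ')) :=
      hfderivcont.comp hxcont hxv
    have hwcont : ContinuousOn (fun t => Φ (x t)) (Ioo (t₀ - δ') (t₀ + δ')) :=
      hxcont.prodMk ((hφv.continuousOn).comp hxcont hxv)
    have hFtx : ContinuousOn (fun t => F t (x t)) (Ioo (t₀ - δ') (t₀ + δ')) := by
      have hfc : ContinuousOn (fun t => a t • f (Φ (x t))) (Ioo (t₀ - δ') (t₀ + δ')) :=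
        ha.continuousOn.smul (hf.continuousOn.comp hwcont (fun t ht => (hxU t ht).1))
      have hhc : ContinuousOn (fun t => lam • h (t, Φ (x t))) (Ioo (t₀ - δ') (t₀ + δ')) :=
        (hh.comp (continuousOn_id.prodMk hwcont)
          (fun t ht => ⟨trivial, (hxU t ht).1⟩)).const_smul lam
      exact hfc.add hhc
    exact h1.clm_apply hFtx
  · intro t ht
    have hdiff : DifferentiableAt ℝ φ (x t) :=
      (hφv.differentiableOn one_ne_zero).differentiableAt (hvopen.mem_nhds (hxv t ht))
    exact hdiff.hasFDerivAt.comp_hasDerivAt t (hxdAt t (hsubIoo ht))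
end
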